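/- arXiv:2112.04935 — 10 statements merged into one kernel-verified Lean document; each statement's English description precedes it below -/
import Mathlib

section
/- For each fixed integer s ≥ 2, there are only finitely many positive integers n ≥ 2 for which the s-Cullen number C_{n,s} = n·s^n + 1 is a repunit; that is, the set of integers n ≥ 2 such that there exist integers b ≥ 2 and q ≥ 3 with n·s^n + 1 = (b^q − 1)/(b − 1) is finite. -/
open Finset Filter

private lemma ev_lt_pow' (C : ℝ) (k : ℕ) {r : ℝ} (hr : 1 < r) :
    ∀ᶠ n : ℕ in atTop, C * ((n : ℝ) + 1) ^ k < r ^ n := by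
  have h := isLittleO_pow_const_const_pow_of_one_lt (R := ℝ) k hr
  have hε : (0:ℝ) < 1 / ((|C| + 1) * 2 ^ k * 2) := by positivity
  filter_upwards [h.bound hε, eventually_ge_atTop 1] with n hn hn1
  have hn1' : (1:ℝ) ≤ (n:ℝ) := by exact_mod_cast hn1
  have hrpos : (0:ℝ) < r ^ n := pow_pos (by linarith) n
  rw [Real.norm_eq_abs, Real.norm_eq_abs, abs_pow, abs_pow,
      abs_of_nonneg (by positivity : (0:ℝ) ≤ (n:ℝ)), abs_of_nonneg (by linarith : (0:ℝ) ≤ r)]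
  at hn
  have h1 : ((n:ℝ) + 1) ^ k ≤ 2 ^ k * (n:ℝ) ^ k := by
    rw [← mul_pow]
    exact pow_le_pow_left₀ (by positivity) (by linarith) k
  have h2 : C * ((n:ℝ) + 1) ^ k ≤ (|C| + 1) * (2 ^ k * (n:ℝ) ^ k) := by
    calc C * ((n:ℝ) + 1) ^ k ≤ |C| * ((n:ℝ) + 1) ^ k := by
          apply mul_le_mul_of_nonneg_right (le_abs_self C) (by positivity)
      _ ≤ (|C| + 1) * (2 ^ k * (n:ℝ) ^ k) := by
          apply mul_le_mul (by linarith [abs_nonneg C]) h1 (by positivity) (by positivity)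
  have hpos : (0:ℝ) < (|C| + 1) * 2 ^ k := by positivity
  calc C * ((n:ℝ) + 1) ^ k ≤ (|C| + 1) * 2 ^ k * (n:ℝ) ^ k := by linarith [h2]
    _ ≤ (|C| + 1) * 2 ^ k * (1 / ((|C| + 1) * 2 ^ k * 2) * r ^ n) :=
        mul_le_mul_of_nonneg_left hn (le_of_lt hpos)
    _ = r ^ n / 2 := by field_simp
    _ < r ^ n := by linarith

private lemma cullen_caseII (s n b q M : ℕ) (hs : 2 ≤ s) (hn : 2 ≤ n) (hb : 2 ≤ b) (hq : 3 ≤ q)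
    (hbn : b ≤ n) (hMsum : M = ∑ j ∈ Finset.range (q - 1), b ^ j)
    (hgeo : M * (b - 1) + 1 = b ^ (q - 1)) (hq1n : q - 1 ≤ (s + 1) * n)
    (p : ℕ) (hpp : p.Prime) (hps : p ∣ s) (hpb : ¬ p ∣ b) (hpM : p ^ n ∣ M) :
    2 ^ n ≤ 4 * s * (n + 1) ^ (s + 3) := by
  haveI : Fact p.Prime := ⟨hpp⟩
  have hp2 : 2 ≤ p := hpp.two_le
  have hps' : p ≤ s := Nat.le_of_dvd (by omega) hps
  have hbq1 : 1 ≤ b ^ (q - 1) := Nat.one_le_pow _ _ (by omega)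
  have hbq4 : 4 ≤ b ^ (q - 1) := by
    calc 4 = 2 ^ 2 := by norm_num
    _ ≤ b ^ 2 := Nat.pow_le_pow_left hb 2
    _ ≤ b ^ (q - 1) := Nat.pow_le_pow_right (by omega) (by omega)
  have hsub : b ^ (q - 1) - 1 = M * (b - 1) := by omega
  have hdvd : p ^ n ∣ b ^ (q - 1) - 1 := by rw [hsub]; exact Dvd.dvd.mul_right hpM _
  have hnv : n ≤ padicValNat p (b ^ (q - 1) - 1) :=
    ((padicValNat_dvd_iff n _).mp hdvd).resolve_left (by omega)
  have hval : ∀ x : ℕ, x ≠ 0 → 2 ^ padicValNat p x ≤ x := fun x hx =>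
    le_trans (Nat.pow_le_pow_left hp2 _) (Nat.le_of_dvd (Nat.pos_of_ne_zero hx) pow_padicValNat_dvd)
  by_cases hp2' : p = 2
  · subst hp2'
    rcases Nat.even_or_odd (q - 1) with hev | hodd
    · have hlte := padicValNat.pow_two_sub_pow (x := b) (y := 1) (by omega) (by omega)
        hpb (by omega) hev
      simp only [one_pow, mul_one] at hlte
      set v1 := padicValNat 2 (b + 1)
      set v2 := padicValNat 2 (b - 1)
      set v3 := padicValNat 2 (q - 1)
      have hb1 : 2 ^ v1 ≤ b + 1 := hval _ (by omega)
      have hb2 : 2 ^ v2 ≤ b - 1 := hval _ (by omega)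
      have hb3 : 2 ^ v3 ≤ q - 1 := hval _ (by omega)
      have hnle : n ≤ v1 + v2 + v3 := by omega
      calc 2 ^ n ≤ 2 ^ (v1 + v2 + v3) := Nat.pow_le_pow_right (by omega) hnle
        _ = 2 ^ v1 * 2 ^ v2 * 2 ^ v3 := by rw [pow_add, pow_add]
        _ ≤ (n + 1) * (n + 1) * ((s + 1) * n) := by
            apply Nat.mul_le_mul (Nat.mul_le_mul (by omega) (by omega)) (by omega)
        _ ≤ (n + 1) * (n + 1) * ((s + 1) * (n + 1)) := by
            apply Nat.mul_le_mul_left; apply Nat.mul_le_mul_left; omega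
        _ ≤ 4 * s * (n + 1) ^ (s + 3) := by
            have h3 : (n + 1) ^ 3 ≤ (n + 1) ^ (s + 3) := Nat.pow_le_pow_right (by omega) (by omega)
            have hss : s + 1 ≤ 2 * s := by omega
            calc (n + 1) * (n + 1) * ((s + 1) * (n + 1)) = (s+1) * (n+1)^3 := by ring
              _ ≤ (2 * s) * (n + 1) ^ (s + 3) := Nat.mul_le_mul hss h3
              _ ≤ 4 * s * (n + 1) ^ (s + 3) := by
                  apply Nat.mul_le_mul_right; omega
    · exfalso
      have h2M : 2 ∣ M := dvd_trans (dvd_pow_self 2 (by omega)) hpM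
      have hModd : M % 2 = (q - 1) % 2 := by
        rw [hMsum, Finset.sum_nat_mod]
        simp [Nat.pow_mod, (by omega : b % 2 = 1)]
      rw [Nat.odd_iff] at hodd
      omega
  · have hoddp : Odd p := hpp.odd_of_ne_two hp2'
    set d := orderOf (b : ZMod p) with hd
    have hbz : (b : ZMod p) ≠ 0 := by
      rw [Ne, ZMod.natCast_eq_zero_iff]; exact hpb
    have hpdvd1 : p ∣ b ^ (q - 1) - 1 := dvd_trans (dvd_pow_self p (by omega)) hdvd
    have hpow1 : (b : ZMod p) ^ (q - 1) = 1 := by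
      have h1 : ((b ^ (q - 1) - 1 : ℕ) : ZMod p) = 0 :=
        (ZMod.natCast_eq_zero_iff _ _).mpr hpdvd1
      have h2 : ((b ^ (q - 1) - 1 : ℕ) : ZMod p) = (b : ZMod p) ^ (q - 1) - 1 := by
        push_cast [hbq1]; ring
      rw [h2] at h1
      exact sub_eq_zero.mp h1
    have hddM : d ∣ q - 1 := orderOf_dvd_of_pow_eq_one hpow1
    have hddp : d ∣ p - 1 := orderOf_dvd_of_pow_eq_one (ZMod.pow_card_sub_one_eq_one hbz)
    have hdpos : 0 < d := Nat.pos_of_ne_zero (fun h => by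
      rw [h] at hddp
      have := Nat.eq_zero_of_zero_dvd hddp
      omega)
    have hdle : d ≤ s := le_trans (Nat.le_of_dvd (by omega) hddp) (by omega)
    obtain ⟨t, ht⟩ := hddM
    have htpos : 0 < t := by
      rcases Nat.eq_zero_or_pos t with h | h
      · rw [h, mul_zero] at ht; omega
      · exact h
    have hb1d : 1 ≤ b ^ d := Nat.one_le_pow _ _ (by omega)
    have hpd1 : p ∣ b ^ d - 1 := by
      have h1 : (b : ZMod p) ^ d = 1 := pow_orderOf_eq_one _
      have h2 : ((b ^ d - 1 : ℕ) : ZMod p) = (b : ZMod p) ^ d - 1 := by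
        push_cast [hb1d]; ring
      rw [← ZMod.natCast_eq_zero_iff, h2, h1, sub_self]
    have hpbd : ¬ p ∣ b ^ d := fun h => hpb (hpp.dvd_of_dvd_pow h)
    have h1bd : 1 < b ^ d := Nat.one_lt_pow hdpos.ne' (by omega)
    have hlte := padicValNat.pow_sub_pow (p := p) (x := b ^ d) (y := 1) hoddp h1bd
      (by simpa using hpd1) hpbd htpos.ne'
    simp only [one_pow] at hlte
    rw [← pow_mul, ← ht] at hlte
    set v1 := padicValNat p (b ^ d - 1)
    set v2 := padicValNat p t
    have hv1 : 2 ^ v1 ≤ b ^ d - 1 := hval _ (by omega)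
    have hv1' : 2 ^ v1 ≤ n ^ s := by
      calc 2 ^ v1 ≤ b ^ d - 1 := hv1
        _ ≤ n ^ d := by
            have := Nat.pow_le_pow_left hbn d
            omega
        _ ≤ n ^ s := Nat.pow_le_pow_right (by omega) hdle
    have hv2 : 2 ^ v2 ≤ (s + 1) * n := by
      calc 2 ^ v2 ≤ t := hval _ (by omega)
        _ ≤ q - 1 := by
            have h7 : 1 * t ≤ d * t := Nat.mul_le_mul_right t hdpos
            omega
        _ ≤ (s + 1) * n := hq1n
    have hnle : n ≤ v1 + v2 := by omega
    calc 2 ^ n ≤ 2 ^ (v1 + v2) := Nat.pow_le_pow_right (by omega) hnle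
      _ = 2 ^ v1 * 2 ^ v2 := by rw [pow_add]
      _ ≤ n ^ s * ((s + 1) * n) := Nat.mul_le_mul hv1' hv2
      _ ≤ (n + 1) ^ s * ((2 * s) * (n + 1)) := by
          apply Nat.mul_le_mul (Nat.pow_le_pow_left (by omega) s)
          apply Nat.mul_le_mul <;> omega
      _ = 2 * s * (n + 1) ^ (s + 1) := by ring
      _ ≤ 4 * s * (n + 1) ^ (s + 3) := by
          apply Nat.mul_le_mul (by omega) (Nat.pow_le_pow_right (by omega) (by omega))

private lemma cullen_no_big_solution (s n b q : ℕ) (hs : 2 ≤ s) (hn : 2 ≤ n) (hb : 2 ≤ b)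
    (hq : 3 ≤ q) (heq : n * s ^ n + 1 = ∑ j ∈ Finset.range q, b ^ j)
    (E1 : (4 * (s:ℝ)) * ((n:ℝ) + 1) ^ (s + 3) < 2 ^ n)
    (E2 : (n:ℝ) < (1 + 1/(s:ℝ)) ^ n)
    (E3 : (s:ℝ) * ((n:ℝ) + 1) ^ s < (1 + 1/(s:ℝ)^s) ^ n)
    (E4 : ((n:ℝ) + 1) ^ s < 2 ^ n) : False := by
  classical
  have hs0 : s ≠ 0 := by omega
  -- basic structure
  set M := ∑ j ∈ Finset.range (q - 1), b ^ j with hM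
  have hsum : ∑ j ∈ Finset.range q, b ^ j = b * M + 1 := by
    conv_lhs => rw [show q = (q-1) + 1 by omega, geom_sum_succ]
  have hbM : b * M = n * s ^ n := by omega
  set K := ∑ j ∈ Finset.range (q - 2), b ^ j with hK
  have hMK : M = b * K + 1 := by
    conv_lhs => rw [hM, show q - 1 = (q-2) + 1 by omega, geom_sum_succ]
  have hcop : Nat.Coprime b M := by
    rw [Nat.Coprime, hMK, Nat.gcd_mul_left_add_right, Nat.gcd_one_right]
  have hK1 : 1 ≤ K := by
    calc 1 = b ^ 0 := rfl
    _ ≤ K := Finset.single_le_sum (f := fun j => b ^ j) (fun i _ => Nat.zero_le _)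
        (Finset.mem_range.mpr (by omega))
  have hMb : b + 1 ≤ M := by
    have h1 : b * 1 ≤ b * K := Nat.mul_le_mul_left b hK1
    omega
  have hMlow : b ^ (q - 2) ≤ M := Finset.single_le_sum (f := fun j => b ^ j)
    (fun i _ => Nat.zero_le _) (Finset.mem_range.mpr (by omega))
  have hMhigh : M ≤ (q - 1) * b ^ (q - 2) := by
    have := Finset.sum_le_card_nsmul (Finset.range (q-1)) (fun j => b ^ j) (b ^ (q-2))
      (fun x hx => Nat.pow_le_pow_right (by omega) (by simp at hx; omega))
    simpa [smul_eq_mul] using this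
  have hgeo : M * (b - 1) + 1 = b ^ (q - 1) := by
    have h1 : (M : ℤ) * ((b : ℤ) - 1) = (b : ℤ) ^ (q - 1) - 1 := by
      rw [hM]; push_cast; exact geom_sum_mul _ _
    have h2 : 1 ≤ b ^ (q-1) := Nat.one_le_pow _ _ (by omega)
    zify [show 1 ≤ b by omega]
    omega
  -- q bounds
  have hnsn : n * s ^ n < 2 ^ ((s + 1) * n) := by
    calc n * s ^ n < 2 ^ n * s ^ n := by
          have := Nat.lt_two_pow_self (n := n)
          have hsp : 0 < s ^ n := Nat.pow_pos (by omega)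
          exact Nat.mul_lt_mul_of_lt_of_le this (le_refl _) hsp
      _ ≤ 2 ^ n * (2 ^ s) ^ n := by
          apply Nat.mul_le_mul_left
          exact Nat.pow_le_pow_left (le_of_lt (Nat.lt_two_pow_self (n := s))) n
      _ = 2 ^ ((s + 1) * n) := by rw [← pow_mul, ← pow_add]; ring_nf
  have hbq1M : b ^ (q - 1) ≤ n * s ^ n := by
    calc b ^ (q - 1) = b * b ^ (q - 2) := by
          rw [← pow_succ']
          congr 1
          omega
      _ ≤ b * M := Nat.mul_le_mul_left b hMlow
      _ = n * s ^ n := hbM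
  have hq1n : q - 1 ≤ (s + 1) * n := by
    by_contra hcon
    push_neg at hcon
    have h1 : 2 ^ ((s+1)*n) ≤ 2 ^ (q - 2) := Nat.pow_le_pow_right (by omega) (by omega)
    have h2 : 2 ^ (q - 2) ≤ b ^ (q - 2) := Nat.pow_le_pow_left hb _
    have h3 : b ^ (q-2) ≤ b ^ (q-1) := Nat.pow_le_pow_right (by omega) (by omega)
    omega
  -- decomposition
  set s1 := ∏ p ∈ s.primeFactors.filter (fun p => p ∣ b), p ^ s.factorization p with hs1
  set s2 := ∏ p ∈ s.primeFactors.filter (fun p => ¬ p ∣ b), p ^ s.factorization p with hs2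
  have hs1s2 : s1 * s2 = s := by
    rw [hs1, hs2, Finset.prod_filter_mul_prod_filter_not]
    conv_rhs => rw [← Nat.factorization_prod_pow_eq_self hs0]
    rw [Finsupp.prod, Nat.support_factorization]
  have key : ∀ p ∈ s.primeFactors, ∀ x y : ℕ, x * y = n * s ^ n → Nat.Coprime p y →
      (p ^ s.factorization p) ^ n ∣ x := by
    intro p hp x y hxy hpy
    have h1 : (p ^ s.factorization p) ^ n ∣ x * y := by
      rw [hxy]
      exact Dvd.dvd.mul_left (pow_dvd_pow_of_dvd (Nat.ordProj_dvd s p) n) n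
    exact Nat.Coprime.dvd_of_dvd_mul_right
      (Nat.Coprime.pow_left _ (Nat.Coprime.pow_left _ hpy)) h1
  have prodd : ∀ (pr : ℕ → Prop) (_ : DecidablePred pr) (x y : ℕ), x * y = n * s ^ n →
      (∀ p ∈ s.primeFactors.filter pr, Nat.Coprime p y) →
      (∏ p ∈ s.primeFactors.filter pr, p ^ s.factorization p) ^ n ∣ x := by
    intro pr _ x y hxy hall
    rw [← Finset.prod_pow]
    apply Finset.prod_dvd_of_isRelPrime
    · intro p hp r hr hpr
      simp only [Finset.mem_coe, Finset.mem_filter] at hp hr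
      exact Nat.coprime_iff_isRelPrime.mp (Nat.Coprime.pow _ _ (Nat.Coprime.pow _ _
        ((Nat.coprime_primes (Nat.prime_of_mem_primeFactors hp.1)
          (Nat.prime_of_mem_primeFactors hr.1)).mpr hpr)))
    · intro p hp
      exact key p (Finset.mem_filter.mp hp).1 x y hxy (hall p hp)
  have hs1n : s1 ^ n ∣ b := by
    apply prodd _ _ b M hbM
    intro p hp
    simp only [Finset.mem_filter] at hp
    exact Nat.Coprime.coprime_dvd_left hp.2 hcop
  have hs2n : s2 ^ n ∣ M := by
    apply prodd _ _ M b (by rw [mul_comm]; exact hbM)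
    intro p hp
    simp only [Finset.mem_filter] at hp
    exact (Nat.Prime.coprime_iff_not_dvd (Nat.prime_of_mem_primeFactors hp.1)).mpr hp.2
  set n1 := b / s1 ^ n with hn1
  set n2 := M / s2 ^ n with hn2
  have hb1 : b = s1 ^ n * n1 := (Nat.mul_div_cancel' hs1n).symm
  have hM2 : M = s2 ^ n * n2 := (Nat.mul_div_cancel' hs2n).symm
  have hnn : n1 * n2 = n := by
    have hspos : 0 < s ^ n := Nat.pow_pos (by omega)
    have h5 : s ^ n * (n1 * n2) = s ^ n * n := by
      calc s ^ n * (n1 * n2) = (s1 ^ n * n1) * (s2 ^ n * n2) := by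
            rw [← hs1s2]; ring
        _ = b * M := by rw [← hb1, ← hM2]
        _ = s ^ n * n := by rw [hbM]; ring
    exact Nat.eq_of_mul_eq_mul_left hspos h5
  have hn1pos : 1 ≤ n1 := by
    rcases Nat.eq_zero_or_pos n1 with h | h
    · rw [h, mul_zero] at hb1; omega
    · exact h
  have hn2pos : 1 ≤ n2 := by
    rcases Nat.eq_zero_or_pos n2 with h | h
    · rw [h, mul_zero] at hM2; omega
    · exact h
  have hn1n : n1 ≤ n := Nat.le_of_dvd (by omega) ⟨n2, hnn.symm⟩
  have hn2n : n2 ≤ n := Nat.le_of_dvd (by omega) ⟨n1, by rw [← hnn, Nat.mul_comm]⟩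
  have hs1pos : 1 ≤ s1 := by
    rcases Nat.eq_zero_or_pos s1 with h | h
    · rw [h] at hs1s2; omega
    · exact h
  have hs2pos : 1 ≤ s2 := by
    rcases Nat.eq_zero_or_pos s2 with h | h
    · rw [h, mul_zero] at hs1s2; omega
    · exact h
  have hs1les : s1 ≤ s := Nat.le_of_dvd (by omega) ⟨s2, hs1s2.symm⟩
  have hs2les : s2 ≤ s := Nat.le_of_dvd (by omega) ⟨s1, by rw [← hs1s2, Nat.mul_comm]⟩
  -- case split
  by_cases hcase2 : s2 = 1
  · -- Case I : all of s^n inside b ; contradiction by size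
    have hss1 : s1 = s := by rw [hcase2, mul_one] at hs1s2; exact hs1s2
    have hMn : M = n2 := by rw [hM2, hcase2, one_pow, one_mul]
    have h2n : 2 ^ n ≤ s1 ^ n := Nat.pow_le_pow_left (by omega) n
    have hsb : s1 ^ n ≤ b := by
      calc s1 ^ n = s1 ^ n * 1 := by ring
        _ ≤ s1 ^ n * n1 := Nat.mul_le_mul_left _ hn1pos
        _ = b := hb1.symm
    have hfinal : b + 1 < b := by
      calc b + 1 ≤ M := hMb
        _ = n2 := hMn
        _ ≤ n := hn2n
        _ < 2 ^ n := Nat.lt_two_pow_self (n := n)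
        _ ≤ s1 ^ n := h2n
        _ ≤ b := hsb
    omega
  by_cases hcase1 : s1 = 1
  · -- Case II : LTE argument
    have hbn1 : b = n1 := by rw [hb1, hcase1, one_pow, one_mul]
    have hbn : b ≤ n := by omega
    obtain ⟨p, hpp, hps⟩ := Nat.exists_prime_and_dvd (show s ≠ 1 by omega)
    have hpb : ¬ p ∣ b := by
      intro hpbdvd
      have hpmem : p ∈ s.primeFactors.filter (fun p => p ∣ b) := by
        simp only [Finset.mem_filter, Nat.mem_primeFactors]
        exact ⟨⟨hpp, hps, hs0⟩, hpbdvd⟩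
      have hdvds1 : p ^ s.factorization p ∣ s1 := Finset.dvd_prod_of_mem _ hpmem
      have hfpos : 0 < s.factorization p :=
        Nat.Prime.factorization_pos_of_dvd hpp hs0 hps
      have : p ∣ s1 := dvd_trans (dvd_pow_self p (by omega)) hdvds1
      rw [hcase1] at this
      have h9 := Nat.eq_one_of_dvd_one this
      have h10 := hpp.two_le
      omega
    have hpM : p ^ n ∣ M := by
      have hps2 : p ∣ s2 := by rw [← hs1s2, hcase1, one_mul] at hps; exact hps
      exact dvd_trans (pow_dvd_pow_of_dvd hps2 n) hs2n
    have hfin := cullen_caseII s n b q M hs hn hb hq hbn hM hgeo hq1n p hpp hps hpb hpM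
    have hfinR : (2:ℝ) ^ n ≤ 4 * (s:ℝ) * ((n:ℝ) + 1) ^ (s + 3) := by exact_mod_cast hfin
    linarith
  · -- Case III : s1 ≥ 2 and s2 ≥ 2
    have hs1two : 2 ≤ s1 := by omega
    have hs2two : 2 ≤ s2 := by omega
    have hb2n : 2 ^ n ≤ b := by
      calc 2 ^ n ≤ s1 ^ n := Nat.pow_le_pow_left hs1two n
        _ ≤ s1 ^ n * n1 := Nat.le_mul_of_pos_right _ (by omega)
        _ = b := hb1.symm
    have hqs : q ≤ s + 1 := by
      by_contra hcon
      push_neg at hcon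
      have h1 : (2 ^ n) ^ (q - 1) ≤ b ^ (q - 1) := Nat.pow_le_pow_left hb2n _
      have h2 : 2 ^ (n * (q - 1)) ≤ n * s ^ n := by
        rw [pow_mul]; exact le_trans h1 hbq1M
      have h3 : 2 ^ (n * (q-1)) < 2 ^ ((s+1) * n) := lt_of_le_of_lt h2 hnsn
      have h4 : n * (q - 1) < (s + 1) * n := (Nat.pow_lt_pow_iff_right (by omega)).mp h3
      have h5 : n * (s + 1) ≤ n * (q - 1) := Nat.mul_le_mul_left n (by omega)
      have h6 : (s + 1) * n = n * (s + 1) := Nat.mul_comm _ _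
      omega
    have hq2s : q - 2 ≤ s - 1 := by omega
    -- trichotomy on s1^(q-2) vs s2
    rcases lt_trichotomy (s1 ^ (q - 2)) s2 with hlt | heq2 | hgt
    · -- III-b : s2 > s1^(q-2)
      set A := s1 ^ (q - 2) with hA
      have hApos : 1 ≤ A := Nat.one_le_pow _ _ (by omega)
      have hAs : A ≤ s ^ s := by
        calc A ≤ s ^ (q - 2) := Nat.pow_le_pow_left hs1les _
          _ ≤ s ^ s := Nat.pow_le_pow_right (by omega) (by omega)
      have hswap : (s1 ^ n) ^ (q - 2) = A ^ n := by
        rw [hA, ← pow_mul, ← pow_mul, mul_comm]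
      have hNat : (A + 1) ^ n ≤ A ^ n * (s * (n + 1) ^ s) := by
        calc (A + 1) ^ n ≤ s2 ^ n := Nat.pow_le_pow_left (by omega) n
          _ ≤ s2 ^ n * n2 := Nat.le_mul_of_pos_right _ (by omega)
          _ = M := hM2.symm
          _ ≤ (q - 1) * b ^ (q - 2) := hMhigh
          _ ≤ (q - 1) * (s1 ^ n * n) ^ (q - 2) := by
              apply Nat.mul_le_mul_left
              apply Nat.pow_le_pow_left
              calc b = s1 ^ n * n1 := hb1
                _ ≤ s1 ^ n * n := Nat.mul_le_mul_left _ hn1n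
          _ = (q - 1) * ((s1 ^ n) ^ (q-2) * n ^ (q - 2)) := by rw [mul_pow]
          _ = (q - 1) * (A ^ n * n ^ (q - 2)) := by rw [hswap]
          _ ≤ s * (A ^ n * (n + 1) ^ s) := by
              apply Nat.mul_le_mul (by omega)
              apply Nat.mul_le_mul_left
              calc n ^ (q - 2) ≤ (n+1) ^ (q - 2) := Nat.pow_le_pow_left (by omega) _
                _ ≤ (n + 1) ^ s := Nat.pow_le_pow_right (by omega) (by omega)
          _ = A ^ n * (s * (n + 1) ^ s) := by ring
      -- convert to reals
      have hARpos : (0:ℝ) < (A:ℝ) := by positivity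
      have hcast : ((A:ℝ) + 1) ^ n ≤ (A:ℝ) ^ n * ((s:ℝ) * ((n:ℝ) + 1) ^ s) := by
        exact_mod_cast hNat
      have hchain : ((1:ℝ) + 1/(s:ℝ)^s) ^ n ≤ (s:ℝ) * ((n:ℝ) + 1) ^ s := by
        have h1 : (1:ℝ) + 1/(s:ℝ)^s ≤ 1 + 1/(A:ℝ) := by
          have hAR : (A:ℝ) ≤ (s:ℝ)^s := by exact_mod_cast hAs
          have : 1/(s:ℝ)^s ≤ 1/(A:ℝ) := by
            apply one_div_le_one_div_of_le hARpos hAR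
          linarith
        have h2 : ((1:ℝ) + 1/(s:ℝ)^s) ^ n ≤ ((1:ℝ) + 1/(A:ℝ)) ^ n :=
          pow_le_pow_left₀ (by positivity) h1 n
        have h3 : ((1:ℝ) + 1/(A:ℝ)) ^ n = ((A:ℝ) + 1) ^ n / (A:ℝ) ^ n := by
          rw [← div_pow]
          congr 1
          field_simp
        have h4 : ((A:ℝ) + 1) ^ n / (A:ℝ) ^ n ≤ (s:ℝ) * ((n:ℝ) + 1) ^ s := by
          rw [div_le_iff₀ (by positivity)]
          calc ((A:ℝ) + 1) ^ n ≤ (A:ℝ) ^ n * ((s:ℝ) * ((n:ℝ) + 1) ^ s) := hcast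
            _ = (s:ℝ) * ((n:ℝ) + 1) ^ s * (A:ℝ) ^ n := by ring
        calc ((1:ℝ) + 1/(s:ℝ)^s) ^ n ≤ ((1:ℝ) + 1/(A:ℝ)) ^ n := h2
          _ = ((A:ℝ) + 1) ^ n / (A:ℝ) ^ n := h3
          _ ≤ (s:ℝ) * ((n:ℝ) + 1) ^ s := h4
      linarith
    · -- III-c : equality
      have hq21 : 1 ≤ q - 2 := by omega
      have hbpow : b ^ (q - 2) = s2 ^ n * n1 ^ (q - 2) := by
        rw [hb1, mul_pow, ← heq2, ← pow_mul, ← pow_mul, mul_comm n (q-2)]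
      have hkey : n1 ^ (q - 2) * M = b ^ (q - 2) * n2 := by
        rw [hM2, hbpow]; ring
      have hmod1 : M ≡ 1 [MOD b] := by
        have : b ∣ M - 1 := ⟨K, by omega⟩
        exact ((Nat.modEq_iff_dvd' (by omega)).mpr this).symm
      have hmod2 : n1 ^ (q - 2) * M ≡ n1 ^ (q - 2) * 1 [MOD b] := Nat.ModEq.mul_left _ hmod1
      have hmod3 : n1 ^ (q - 2) ≡ 0 [MOD b] := by
        calc n1 ^ (q - 2) = n1 ^ (q - 2) * 1 := by ring
          _ ≡ n1 ^ (q - 2) * M [MOD b] := hmod2.symm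
          _ = b ^ (q - 2) * n2 := hkey
          _ ≡ 0 [MOD b] := (Nat.modEq_zero_iff_dvd).mpr
              (dvd_mul_of_dvd_left (dvd_pow_self b (by omega)) n2)
      have hbdvd : b ∣ n1 ^ (q - 2) := (Nat.modEq_zero_iff_dvd).mp hmod3
      have hble : b ≤ n1 ^ (q - 2) := Nat.le_of_dvd (by positivity) hbdvd
      have hNat : 2 ^ n ≤ (n + 1) ^ s := by
        calc 2 ^ n ≤ b := hb2n
          _ ≤ n1 ^ (q - 2) := hble
          _ ≤ (n + 1) ^ (q - 2) := Nat.pow_le_pow_left (by omega) _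
          _ ≤ (n + 1) ^ s := Nat.pow_le_pow_right (by omega) (by omega)
      have hcast : (2:ℝ) ^ n ≤ ((n:ℝ) + 1) ^ s := by exact_mod_cast hNat
      linarith
    · -- III-a : s2 < s1^(q-2)
      have hswap : (s1 ^ (q-2)) ^ n = (s1 ^ n) ^ (q - 2) := by
        rw [← pow_mul, ← pow_mul, mul_comm]
      have hNat : (s2 + 1) ^ n ≤ s2 ^ n * n := by
        calc (s2 + 1) ^ n ≤ (s1 ^ (q-2)) ^ n := Nat.pow_le_pow_left (by omega) n
          _ = (s1 ^ n) ^ (q - 2) := hswap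
          _ ≤ b ^ (q - 2) := by
              apply Nat.pow_le_pow_left
              calc s1 ^ n = s1 ^ n * 1 := by ring
                _ ≤ s1 ^ n * n1 := Nat.mul_le_mul_left _ hn1pos
                _ = b := hb1.symm
          _ ≤ M := hMlow
          _ = s2 ^ n * n2 := hM2
          _ ≤ s2 ^ n * n := Nat.mul_le_mul_left _ hn2n
      have hs2Rpos : (0:ℝ) < (s2:ℝ) := by positivity
      have hcast : ((s2:ℝ) + 1) ^ n ≤ (s2:ℝ) ^ n * (n:ℝ) := by exact_mod_cast hNat
      have hchain : ((1:ℝ) + 1/(s:ℝ)) ^ n ≤ (n:ℝ) := by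
        have h1 : (1:ℝ) + 1/(s:ℝ) ≤ 1 + 1/(s2:ℝ) := by
          have hsR : (s2:ℝ) ≤ (s:ℝ) := by exact_mod_cast hs2les
          have : 1/(s:ℝ) ≤ 1/(s2:ℝ) := one_div_le_one_div_of_le hs2Rpos hsR
          linarith
        have h2 : ((1:ℝ) + 1/(s:ℝ)) ^ n ≤ ((1:ℝ) + 1/(s2:ℝ)) ^ n :=
          pow_le_pow_left₀ (by positivity) h1 n
        have h3 : ((1:ℝ) + 1/(s2:ℝ)) ^ n = ((s2:ℝ) + 1) ^ n / (s2:ℝ) ^ n := by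
          rw [← div_pow]
          congr 1
          field_simp
        have h4 : ((s2:ℝ) + 1) ^ n / (s2:ℝ) ^ n ≤ (n:ℝ) := by
          rw [div_le_iff₀ (by positivity)]
          calc ((s2:ℝ) + 1) ^ n ≤ (s2:ℝ) ^ n * (n:ℝ) := hcast
            _ = (n:ℝ) * (s2:ℝ) ^ n := by ring
        calc ((1:ℝ) + 1/(s:ℝ)) ^ n ≤ ((1:ℝ) + 1/(s2:ℝ)) ^ n := h2
          _ = ((s2:ℝ) + 1) ^ n / (s2:ℝ) ^ n := h3
          _ ≤ (n:ℝ) := h4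
      linarith

/-- For each fixed integer `s ≥ 2`, there are only finitely many integers `n ≥ 2`
for which the `s`-Cullen number `n·s^n + 1` is a repunit, i.e. equals
`(b^q − 1)/(b − 1) = b^{q-1} + ⋯ + b + 1` for some integers `b ≥ 2`, `q ≥ 3`. -/
theorem only_finitely_many_cullen_repunits (s : ℕ) (hs : 2 ≤ s) :
    {n : ℕ | 2 ≤ n ∧ ∃ b q : ℕ, 2 ≤ b ∧ 3 ≤ q ∧
      n * s ^ n + 1 = ∑ j ∈ Finset.range q, b ^ j}.Finite := by
  have hsR : (2:ℝ) ≤ (s:ℝ) := by exact_mod_cast hs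
  have hr2 : (1:ℝ) < 1 + 1/(s:ℝ) := by
    have : (0:ℝ) < 1/(s:ℝ) := by positivity
    linarith
  have hr3 : (1:ℝ) < 1 + 1/(s:ℝ)^s := by
    have : (0:ℝ) < 1/(s:ℝ)^s := by positivity
    linarith
  have h1 := ev_lt_pow' (4 * (s:ℝ)) (s + 3) one_lt_two
  have h2 := ev_lt_pow' (1:ℝ) 1 hr2
  have h3 := ev_lt_pow' ((s:ℝ)) s hr3
  have h4 := ev_lt_pow' (1:ℝ) s one_lt_two
  obtain ⟨N, hN⟩ := Filter.eventually_atTop.mp ((h1.and (h2.and (h3.and h4))))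
  apply Set.Finite.subset (Set.finite_Iio N)
  rintro n ⟨hn2, b, q, hb, hq, heq⟩
  simp only [Set.mem_Iio]
  by_contra hcon
  push_neg at hcon
  obtain ⟨hE1, hE2, hE3, hE4⟩ := hN n hcon
  refine cullen_no_big_solution s n b q hs hn2 hb hq heq hE1 ?_ hE3 ?_
  · rw [one_mul, pow_one] at hE2
    linarith
  · rw [one_mul] at hE4
    exact hE4
end

section
/- Let s, b, q and n be integers with s ≥ 2, b ≥ 2, q ≥ 3, n ≥ 1 satisfying n·s^n = b·(b^{q−2} + b^{q−3} + ⋯ + b + 1). Then either q ≤ q_s or n ≤ N_s, where q_s = max{7, s}, c_s = 1 + log₂(s), and N_s = ⌊max{c_s², 127}⌋. -/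
open Finset

lemma sum_pow_mul (c a k : ℕ) :
    ∑ j ∈ range (a * k), c ^ j = (∑ j ∈ range a, c ^ j) * ∑ i ∈ range k, (c ^ a) ^ i := by
  induction k with
  | zero => simp
  | succ k ih =>
    rw [Nat.mul_succ, Finset.sum_range_succ, mul_add, ← ih, Finset.sum_range_add]
    congr 1
    simp_rw [pow_add]
    rw [← Finset.mul_sum, ← pow_mul, mul_comm]

lemma geom_nat_identity (b : ℕ) (hb : 1 ≤ b) (m : ℕ) :
    (b - 1) * ∑ j ∈ range m, b ^ j = b ^ m - 1 := by
  induction m with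
  | zero => simp
  | succ m ih =>
    rw [Finset.sum_range_succ, mul_add, ih, pow_succ]
    have h1 : 1 ≤ b ^ m := Nat.one_le_pow _ _ hb
    have h2 : (b - 1) * b ^ m = b ^ m * b - b ^ m := by
      rw [Nat.sub_mul, one_mul, mul_comm]
    have h3 : b ^ m ≤ b ^ m * b := Nat.le_mul_of_pos_right _ (by omega)
    omega

lemma sum_pow_le (b g : ℕ) (hb : 2 ≤ b) : ∑ j ∈ range g, b ^ j ≤ b ^ g := by
  induction g with
  | zero => simp
  | succ g ih =>
    rw [Finset.sum_range_succ, pow_succ]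
    have : b ^ g * 2 ≤ b ^ g * b := Nat.mul_le_mul_left _ hb
    omega

lemma not_sq_dvd_sum (p c : ℕ) (hp : p.Prime) (hodd : Odd p) (hc : c % p = 1) :
    ¬ (p ^ 2 ∣ ∑ i ∈ range p, c ^ i) := by
  intro hdvd
  have hp2 : 2 ≤ p := hp.two_le
  have hceq : c = p * (c / p) + 1 := by
    conv_lhs => rw [← Nat.div_add_mod c p]
    rw [hc]
  obtain ⟨t, ht⟩ : ∃ t, p - 1 = 2 * t := by
    rcases hodd with ⟨k, hk⟩; exact ⟨k, by omega⟩
  have hsumid : ∑ i ∈ range p, i = p * t := by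
    have h2 := Finset.sum_range_id_mul_two p
    rw [ht] at h2
    have h3 : p * (2 * t) = (p * t) * 2 := by ring
    omega
  set R := ZMod (p ^ 2) with hR
  have hchar : ((p : R) * (p : R)) = 0 := by
    have : ((p ^ 2 : ℕ) : R) = 0 := ZMod.natCast_self _
    push_cast at this
    linear_combination this
  set x : R := (p : R) * ((c / p : ℕ) : R) with hx
  have hxx : x * x = 0 := by
    rw [hx]
    have : (p : R) * ((c / p : ℕ) : R) * ((p : R) * ((c / p : ℕ) : R))
        = ((p:R) * (p:R)) * (((c / p : ℕ) : R) * ((c / p : ℕ) : R)) := by ring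
    rw [this, hchar, zero_mul]
  have hcR : (c : R) = 1 + x := by
    rw [hx]
    conv_lhs => rw [hceq]
    push_cast [R]; ring
  have hpow : ∀ i : ℕ, (c : R) ^ i = 1 + (i : R) * x := by
    intro i
    induction i with
    | zero => simp
    | succ i ih =>
      rw [pow_succ, ih, hcR]
      push_cast [R]
      ring_nf
      rw [mul_comm x x] at hxx
      linear_combination ((i:R)) * hxx
  have hsum : ((∑ i ∈ range p, c ^ i : ℕ) : R) = (p : R) := by
    push_cast [R]
    calc ∑ i ∈ range p, (c : R) ^ i = ∑ i ∈ range p, (1 + (i : R) * x) := by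
          exact Finset.sum_congr rfl fun i _ => hpow i
      _ = (p : R) + (∑ i ∈ range p, (i : R)) * x := by
          rw [Finset.sum_add_distrib, Finset.sum_const, Finset.card_range, Finset.sum_mul]
          simp [mul_comm]
      _ = (p : R) := by
          have : (∑ i ∈ range p, (i : R)) = ((∑ i ∈ range p, i : ℕ) : R) := by push_cast [R]; rfl
          rw [this, hsumid, hx]
          push_cast [R]
          have h0 : ((p:R) * (t:R)) * ((p : R) * ((c / p : ℕ) : R))
              = ((p:R)*(p:R)) * ((t:R) * ((c / p : ℕ) : R)) := by ring
          rw [h0, hchar, zero_mul, add_zero]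
  rw [(ZMod.natCast_eq_zero_iff _ _).mpr hdvd] at hsum
  have : p ^ 2 ∣ p := (ZMod.natCast_eq_zero_iff _ _).mp hsum.symm
  have := Nat.le_of_dvd (by omega) this
  nlinarith

lemma fact_le_one_of_not_sq_dvd {p x : ℕ} (hp : p.Prime) (hx : x ≠ 0) (h : ¬ p ^ 2 ∣ x) :
    x.factorization p ≤ 1 := by
  by_contra hcon
  push_neg at hcon
  exact h (dvd_trans (pow_dvd_pow p hcon) (Nat.ordProj_dvd x p))

lemma cast_eq_one_of_mod {p c : ℕ} (hc : c % p = 1) : (c : ZMod p) = 1 := by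
  have h : ((c % p : ℕ) : ZMod p) = (c : ZMod p) := ZMod.natCast_mod c p
  rw [hc] at h
  simpa using h.symm

lemma one_le_of_mod {p c : ℕ} (hp : 2 ≤ p) (hc : c % p = 1) : 1 ≤ c := by
  rcases Nat.eq_zero_or_pos c with h | h
  · subst h; simp at hc
  · exact h

lemma not_dvd_sum_of_not_dvd {p c k : ℕ} (hp : p.Prime) (hc : c % p = 1) (hk : ¬ p ∣ k) :
    ¬ p ∣ ∑ i ∈ range k, c ^ i := by
  intro hdvd
  have h1 : ((∑ i ∈ range k, c ^ i : ℕ) : ZMod p) = 0 :=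
    (ZMod.natCast_eq_zero_iff _ _).mpr hdvd
  have h2 : ((∑ i ∈ range k, c ^ i : ℕ) : ZMod p) = (k : ZMod p) := by
    push_cast
    rw [cast_eq_one_of_mod hc]
    simp
  rw [h2] at h1
  exact hk ((ZMod.natCast_eq_zero_iff _ _).mp h1)

lemma pow_mod_one {p c : ℕ} (hp : 2 ≤ p) (hc : c % p = 1) (e : ℕ) : c ^ e % p = 1 := by
  have hone : (1 : ℕ) % p = 1 := Nat.one_mod_eq_one.mpr (by omega)
  have h1 : c ^ e ≡ 1 ^ e [MOD p] := Nat.ModEq.pow e (by unfold Nat.ModEq; rw [hc, hone])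
  rw [one_pow] at h1
  unfold Nat.ModEq at h1
  rw [hone] at h1
  exact h1

lemma sum_pow_ne_zero {c k : ℕ} (hc : 1 ≤ c) (hk : k ≠ 0) : ∑ i ∈ range k, c ^ i ≠ 0 := by
  have : 0 < ∑ i ∈ range k, c ^ i :=
    Finset.sum_pos (fun i _ => Nat.pow_pos (n := i) hc) (by simpa using hk)
  omega

lemma fact_sum_le_odd {p : ℕ} (hp : p.Prime) (hodd : Odd p) :
    ∀ k, k ≠ 0 → ∀ c, c % p = 1 →
      (∑ i ∈ range k, c ^ i).factorization p ≤ k.factorization p := by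
  intro k
  induction k using Nat.strong_induction_on with
  | _ k IH =>
    intro hk c hc
    have hp2 : 2 ≤ p := hp.two_le
    have hc1 : 1 ≤ c := one_le_of_mod hp2 hc
    by_cases hpk : p ∣ k
    · obtain ⟨k', rfl⟩ := hpk
      have hk' : k' ≠ 0 := by rintro rfl; simp at hk
      have hsplit := sum_pow_mul c p k'
      have hA : (∑ i ∈ range p, c ^ i) ≠ 0 := sum_pow_ne_zero hc1 (by omega)
      have hB : (∑ i ∈ range k', (c ^ p) ^ i) ≠ 0 :=
        sum_pow_ne_zero (Nat.one_le_pow _ _ hc1) hk'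
      rw [hsplit, Nat.factorization_mul hA hB]
      have h1 : (∑ i ∈ range p, c ^ i).factorization p ≤ 1 :=
        fact_le_one_of_not_sq_dvd hp hA (not_sq_dvd_sum p c hp hodd hc)
      have h2 : (∑ i ∈ range k', (c ^ p) ^ i).factorization p ≤ k'.factorization p :=
        IH k' (by nlinarith [hp.two_le, Nat.pos_of_ne_zero hk']) hk' _ (pow_mod_one hp2 hc p)
      have h3 : (p * k').factorization p = 1 + k'.factorization p := by
        rw [Nat.factorization_mul (by omega) hk']
        simp [hp.factorization_self]
      simp only [Finsupp.add_apply]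
      omega
    · rw [Nat.factorization_eq_zero_of_not_dvd (not_dvd_sum_of_not_dvd hp hc hpk)]
      omega

lemma fact_sum_le_two :
    ∀ k, k ≠ 0 → ∀ b, b % 2 = 1 →
      (∑ i ∈ range k, b ^ i).factorization 2 ≤ (b + 1).factorization 2 + k.factorization 2 := by
  intro k
  induction k using Nat.strong_induction_on with
  | _ k IH =>
    intro hk b hb
    have hb1 : 1 ≤ b := one_le_of_mod (by norm_num) hb
    by_cases h2k : 2 ∣ k
    · obtain ⟨k', rfl⟩ := h2k
      have hk' : k' ≠ 0 := by rintro rfl; simp at hk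
      have hsplit := sum_pow_mul b 2 k'
      have hA : (∑ i ∈ range 2, b ^ i) ≠ 0 := sum_pow_ne_zero hb1 (by omega)
      have hB : (∑ i ∈ range k', (b ^ 2) ^ i) ≠ 0 :=
        sum_pow_ne_zero (Nat.one_le_pow _ _ hb1) hk'
      rw [hsplit, Nat.factorization_mul hA hB]
      have hAval : (∑ i ∈ range 2, b ^ i) = b + 1 := by
        simp [Finset.sum_range_succ, add_comm]
      have h2 : (∑ i ∈ range k', (b ^ 2) ^ i).factorization 2
          ≤ (b ^ 2 + 1).factorization 2 + k'.factorization 2 :=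
        IH k' (by omega) hk' _ (pow_mod_one (by norm_num) hb 2)
      have hsq : (b ^ 2 + 1).factorization 2 ≤ 1 := by
        apply fact_le_one_of_not_sq_dvd Nat.prime_two (by positivity)
        obtain ⟨t, ht⟩ : ∃ t, b = 2 * t + 1 := ⟨b / 2, by omega⟩
        rintro ⟨u, hu⟩
        rw [ht] at hu
        ring_nf at hu
        omega
      have h3 : (2 * k').factorization 2 = 1 + k'.factorization 2 := by
        rw [Nat.factorization_mul (by omega) hk']
        simp [Nat.prime_two.factorization_self]
      simp only [Finsupp.add_apply]
      rw [hAval] at *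
      omega
    · rw [Nat.factorization_eq_zero_of_not_dvd
        (not_dvd_sum_of_not_dvd Nat.prime_two hb h2k)]
      omega

open Finset Real

lemma sq_lt_two_pow' : ∀ s : ℕ, 12 ≤ s → s ^ 2 < 2 ^ s := by
  intro s hs
  induction s, hs using Nat.le_induction with
  | base => norm_num
  | succ s hs ih =>
    have h1 : (s + 1) ^ 2 ≤ 2 * s ^ 2 := by nlinarith
    calc (s + 1) ^ 2 ≤ 2 * s ^ 2 := h1
      _ < 2 * 2 ^ s := by omega
      _ = 2 ^ (s + 1) := by ring

lemma sq_lt_two_pow_max (s : ℕ) (hs : 2 ≤ s) : s ^ 2 < 2 ^ (max 7 s) := by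
  rcases le_or_gt s 11 with h | h
  · have h2 : (2:ℕ) ^ 7 ≤ 2 ^ (max 7 s) := Nat.pow_le_pow_right (by norm_num) (le_max_left _ _)
    have : s ^ 2 ≤ 121 := by nlinarith
    omega
  · calc s ^ 2 < 2 ^ s := sq_lt_two_pow' s (by omega)
      _ ≤ 2 ^ (max 7 s) := Nat.pow_le_pow_right (by norm_num) (le_max_right _ _)

lemma logb_ratio {a x : ℝ} (ha : 2 ≤ a) (hax : a ≤ x) :
    a * (1 + Real.logb 2 x) ≤ x * (1 + Real.logb 2 a) := by
  have ha0 : 0 < a := by linarith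
  have hx0 : 0 < x := by linarith
  have hlog2 : (0.6931471803 : ℝ) < Real.log 2 := Real.log_two_gt_d9
  have hL : 1 ≤ Real.logb 2 a := by
    rw [show (1:ℝ) = Real.logb 2 2 from (Real.logb_self_eq_one (by norm_num)).symm]
    exact Real.logb_le_logb_of_le (by norm_num) (by norm_num) ha
  have hlog : Real.logb 2 x = Real.logb 2 a + Real.log (x / a) / Real.log 2 := by
    rw [Real.logb, Real.logb, Real.log_div (ne_of_gt hx0) (ne_of_gt ha0)]
    ring
  have h1 : Real.log (x / a) ≤ x / a - 1 := Real.log_le_sub_one_of_pos (by positivity)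
  have h2 : a * (x / a - 1) = x - a := by field_simp
  have h3 : a * Real.log (x / a) ≤ x - a := by
    calc a * Real.log (x / a) ≤ a * (x / a - 1) :=
          mul_le_mul_of_nonneg_left h1 (le_of_lt ha0)
      _ = x - a := h2
  have h4 : (x - a) ≤ (x - a) * ((1 + Real.logb 2 a) * Real.log 2) := by
    have hge : 1 ≤ (1 + Real.logb 2 a) * Real.log 2 := by nlinarith
    nlinarith [sub_nonneg.mpr hax]
  have hlogpos : (0:ℝ) < Real.log 2 := by linarith
  have h5 : a * (Real.log (x / a) / Real.log 2) ≤ (x - a) / Real.log 2 := by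
    rw [← mul_div_assoc]
    exact (div_le_div_iff_of_pos_right hlogpos).mpr h3
  have h6 : (x - a) / Real.log 2 ≤ (x - a) * (1 + Real.logb 2 a) := by
    rw [div_le_iff₀ (by linarith)]
    nlinarith
  calc a * (1 + Real.logb 2 x)
      = a * (1 + Real.logb 2 a) + a * (Real.log (x / a) / Real.log 2) := by rw [hlog]; ring
    _ ≤ a * (1 + Real.logb 2 a) + (x - a) * (1 + Real.logb 2 a) := by linarith
    _ = x * (1 + Real.logb 2 a) := by ring

lemma logb3_ge : (11 : ℝ) / 7 ≤ Real.logb 2 3 := by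
  have h : ((2:ℝ) ^ (11:ℕ)) ≤ ((3:ℝ) ^ (7:ℕ)) := by norm_num
  have h2 := Real.logb_le_logb_of_le (b := 2) (by norm_num) (by positivity) h
  rw [Real.logb_pow, Real.logb_pow, Real.logb_self_eq_one (by norm_num)] at h2
  push_cast at h2
  linarith

lemma logb_le_three {s : ℝ} (hs0 : 0 < s) (hs : s ≤ 8) : Real.logb 2 s ≤ 3 := by
  have h2 := Real.logb_le_logb_of_le (b := 2) (by norm_num) hs0 hs
  rw [show (8:ℝ) = 2 ^ (3:ℕ) by norm_num, Real.logb_pow,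
    Real.logb_self_eq_one (by norm_num)] at h2
  push_cast at h2
  linarith

lemma c_le_m {s : ℕ} {m : ℝ} (hs : 2 ≤ s) (hm7 : 7 ≤ m) (hms : (s:ℝ) ≤ m) :
    1 + Real.logb 2 (s:ℝ) ≤ 4 / 7 * m := by
  rcases le_or_gt s 8 with h | h
  · have h8 : (s:ℝ) ≤ 8 := by exact_mod_cast h
    have hs0 : (0:ℝ) < s := by positivity
    have := logb_le_three hs0 h8
    linarith
  · have h9 : (9:ℝ) ≤ (s:ℝ) := by exact_mod_cast h
    have hr := logb_ratio (a := 9) (x := (s:ℝ)) (by norm_num) h9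
    have h16 : Real.logb 2 9 ≤ 4 := by
      have h2 := Real.logb_le_logb_of_le (b := 2) (by norm_num) (by norm_num)
        (show (9:ℝ) ≤ 16 by norm_num)
      rw [show (16:ℝ) = 2 ^ (4:ℕ) by norm_num, Real.logb_pow,
        Real.logb_self_eq_one (by norm_num)] at h2
      push_cast at h2
      linarith
    -- 9 * (1 + logb 2 s) ≤ s * (1 + logb 2 9) ≤ 5 s
    have : 9 * (1 + Real.logb 2 s) ≤ 5 * s := by nlinarith
    nlinarith

lemma coef_ineq {P y : ℝ} (hP : 3 ≤ P) (hy : 11/7 ≤ y) :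
    (P - 1) * (1 + 2 * y) ≤ P ^ 2 * (y - 2/7) := by
  nlinarith [sq_nonneg (P - 29/18), mul_nonneg (sub_nonneg.mpr hy)
    (show (0:ℝ) ≤ P ^ 2 - 2 * P + 2 by nlinarith)]

/-- If `s ≥ 2`, `b ≥ 2`, `q ≥ 3`, `n ≥ 1` satisfy
`n·s^n = b·(b^{q−2} + ⋯ + b + 1)`, then `q ≤ q_s = max{7, s}` or
`n ≤ N_s = ⌊max{(1 + log₂ s)², 127}⌋`. -/
theorem q_le_or_n_le (s b q n : ℕ) (hs : 2 ≤ s) (hb : 2 ≤ b) (hq : 3 ≤ q) (hn : 1 ≤ n)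
    (heq : n * s ^ n = b * ∑ j ∈ Finset.range (q - 1), b ^ j) :
    q ≤ max 7 s ∨ n ≤ ⌊max ((1 + Real.logb 2 s) ^ 2) 127⌋₊ := by
  by_cases hqmax : q ≤ max 7 s
  · exact Or.inl hqmax
  right
  push_neg at hqmax
  rcases le_or_gt n 127 with hsmall | hn128'
  · exact le_trans hsmall (Nat.le_floor (le_trans (by norm_num) (le_max_right _ _)))
  have hn128 : 128 ≤ n := hn128'
  have h7max : 7 ≤ max 7 s := le_max_left _ _
  have hsmax : s ≤ max 7 s := le_max_right _ _
  obtain ⟨m, hm_def⟩ : ∃ m', q - 1 = m' := ⟨q - 1, rfl⟩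
  rw [hm_def] at heq
  have hm7 : 7 ≤ m := by omega
  have hms : s ≤ m := by omega
  obtain ⟨S, hS_def⟩ : ∃ S', ∑ j ∈ Finset.range m, b ^ j = S' := ⟨_, rfl⟩
  rw [hS_def] at heq
  have hS_pos : 0 < S := hS_def ▸ Finset.sum_pos (fun i _ => Nat.pow_pos (n := i) (by omega))
    (Finset.nonempty_range_iff.mpr (by omega))
  have hbm1le : b ^ (m - 1) ≤ S := hS_def ▸
    Finset.single_le_sum (f := fun j => b ^ j) (fun i _ => Nat.zero_le _)
      (Finset.mem_range.mpr (by omega))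
  have hbm : b ^ m ≤ n * s ^ n := by
    rw [heq]
    calc b ^ m = b * b ^ (m - 1) := by
          rw [← pow_succ']
          congr 1
          omega
      _ ≤ b * S := Nat.mul_le_mul_left _ hbm1le
  have hn2 : n ≤ 2 ^ n := (Nat.lt_two_pow_self (n := n)).le
  obtain ⟨p, hp_def⟩ : ∃ p', s.minFac = p' := ⟨_, rfl⟩
  have hp : p.Prime := hp_def ▸ Nat.minFac_prime (by omega)
  have hps : p ∣ s := hp_def ▸ Nat.minFac_dvd s
  have hp2 : 2 ≤ p := hp.two_le
  have hple : p ≤ s := Nat.le_of_dvd (by omega) hps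
  have hpns : p ^ n ∣ n * s ^ n := Dvd.dvd.mul_left (pow_dvd_pow_of_dvd hps n) n
  by_cases hpb : p ∣ b
  · -- Case A : p ∣ b, leads to contradiction with q > max 7 s
    exfalso
    obtain ⟨m', hm'⟩ : ∃ m', m = m' + 1 := ⟨m - 1, by omega⟩
    have hT : S = b * (∑ j ∈ Finset.range m', b ^ j) + 1 := by
      rw [← hS_def, hm', Finset.sum_range_succ']
      simp [Finset.mul_sum, pow_succ, mul_comm]
    have hpS : ¬ p ∣ S := by
      rw [hT]
      intro hdvd
      have h1 : p ∣ 1 := (Nat.dvd_add_right (Dvd.dvd.mul_right hpb _)).mp hdvd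
      have := Nat.le_of_dvd one_pos h1
      omega
    have hcop : Nat.Coprime (p ^ n) S :=
      Nat.Coprime.pow_left n ((Nat.Prime.coprime_iff_not_dvd hp).mpr hpS)
    have hpnb : p ^ n ∣ b := hcop.dvd_of_dvd_mul_right (heq ▸ hpns)
    have h2nb : 2 ^ n ≤ b :=
      le_trans (Nat.pow_le_pow_left hp2 n) (Nat.le_of_dvd (by omega) hpnb)
    have hchain : (2 ^ m) ^ n ≤ (s ^ 2) ^ n := by
      calc (2 ^ m) ^ n = (2 ^ n) ^ m := by rw [← pow_mul, ← pow_mul, Nat.mul_comm]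
        _ ≤ b ^ m := Nat.pow_le_pow_left h2nb m
        _ ≤ n * s ^ n := hbm
        _ ≤ s ^ n * s ^ n := Nat.mul_le_mul_right _
            (le_trans hn2 (Nat.pow_le_pow_left hs n))
        _ = (s ^ 2) ^ n := by rw [← pow_add, ← pow_mul]; congr 1; omega
    have h2m : 2 ^ m ≤ s ^ 2 := by
      by_contra hcon
      push_neg at hcon
      have := Nat.pow_lt_pow_left hcon (show n ≠ 0 by omega)
      omega
    have hcontr := sq_lt_two_pow_max s hs
    have hmono : 2 ^ (max 7 s) ≤ 2 ^ m := Nat.pow_le_pow_right (by norm_num) (by omega)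
    omega
  · -- Case B : p ∤ b
    have hpnS : p ^ n ∣ S := by
      have hcopb : Nat.Coprime (p ^ n) b :=
        Nat.Coprime.pow_left n ((hp.coprime_iff_not_dvd).mpr hpb)
      exact hcopb.dvd_of_dvd_mul_left (heq ▸ hpns)
    have hnfS : n ≤ S.factorization p :=
      (hp.pow_dvd_iff_le_factorization (by omega)).mp hpnS
    -- common real-valued facts
    have hbR : (2:ℝ) ≤ (b:ℝ) := by exact_mod_cast hb
    have hsR : (2:ℝ) ≤ (s:ℝ) := by exact_mod_cast hs
    have hmR : (7:ℝ) ≤ (m:ℝ) := by exact_mod_cast hm7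
    have hmsR : (s:ℝ) ≤ (m:ℝ) := by exact_mod_cast hms
    have hnR : (128:ℝ) ≤ (n:ℝ) := by exact_mod_cast hn128
    have hlog22 : Real.logb 2 (2:ℝ) = 1 := Real.logb_self_eq_one (by norm_num)
    have hL1 : 1 ≤ Real.logb 2 (b:ℝ) := by
      have := Real.logb_le_logb_of_le (b := 2) (by norm_num) (by norm_num) hbR
      linarith
    have hM0 : 0 ≤ Real.logb 2 (m:ℝ) := Real.logb_nonneg (by norm_num) (by linarith only [hmR])
    have hC2 : 2 ≤ 1 + Real.logb 2 (s:ℝ) := by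
      have := Real.logb_le_logb_of_le (b := 2) (by norm_num) (by norm_num) hsR
      linarith
    have hlognn : Real.logb 2 (n:ℝ) ≤ (n:ℝ) := by
      have hcast : (n:ℝ) ≤ (2:ℝ) ^ n := by exact_mod_cast hn2
      have h1 := Real.logb_le_logb_of_le (b := 2) (by norm_num) (by linarith only [hnR]) hcast
      rw [Real.logb_pow, hlog22] at h1
      linarith
    have hF1 : (m:ℝ) * Real.logb 2 (b:ℝ) ≤ (n:ℝ) * (1 + Real.logb 2 (s:ℝ)) := by
      have hcast : ((b:ℝ)) ^ m ≤ (n:ℝ) * (s:ℝ) ^ n := by exact_mod_cast hbm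
      have h1 := Real.logb_le_logb_of_le (b := 2) (by norm_num) (by positivity) hcast
      rw [Real.logb_pow, Real.logb_mul (by positivity) (by positivity),
        Real.logb_pow] at h1
      linarith only [h1, hlognn]
    have hF2 : (m:ℝ) ≤ (n:ℝ) * (1 + Real.logb 2 (s:ℝ)) := by
      have h1 : (m:ℝ) * 1 ≤ (m:ℝ) * Real.logb 2 (b:ℝ) :=
        mul_le_mul_of_nonneg_left hL1 (by linarith only [hmR])
      linarith only [h1, hF1]
    have hKEY : (2/7 : ℝ) * n ≤ 1 + Real.logb 2 (m:ℝ) := by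
      rcases hp.eq_two_or_odd' with hptwo | hpodd
      · -- p = 2
        have hbodd : b % 2 = 1 := by
          rcases Nat.mod_two_eq_zero_or_one b with h | h
          · exact absurd (hptwo ▸ Nat.dvd_of_mod_eq_zero h) hpb
          · exact h
        have hf2 : S.factorization 2 ≤ (b + 1).factorization 2 + m.factorization 2 :=
          hS_def ▸ fact_sum_le_two m (by omega) b hbodd
        rw [hptwo] at hnfS
        have hkeyNat : 2 ^ n ≤ (b + 1) * m := by
          calc 2 ^ n ≤ 2 ^ ((b + 1).factorization 2 + m.factorization 2) :=
                Nat.pow_le_pow_right (by norm_num) (le_trans hnfS hf2)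
            _ = 2 ^ ((b + 1).factorization 2) * 2 ^ (m.factorization 2) := pow_add 2 _ _
            _ ≤ (b + 1) * m :=
                Nat.mul_le_mul (Nat.ordProj_le _ (by omega)) (Nat.ordProj_le _ (by omega))
        have hcast : (2:ℝ) ^ n ≤ ((b:ℝ) + 1) * m := by exact_mod_cast hkeyNat
        have h2bm : ((b:ℝ) + 1) * m ≤ (2 * b) * m :=
          mul_le_mul_of_nonneg_right (by linarith only [hbR]) (by positivity)
        have h1 := Real.logb_le_logb_of_le (b := 2) (by norm_num) (by positivity)
          (le_trans hcast h2bm)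
        rw [Real.logb_pow, hlog22, Real.logb_mul (by positivity) (by positivity),
          Real.logb_mul (by norm_num) (by positivity), hlog22] at h1
        have hCle : 1 + Real.logb 2 (s:ℝ) ≤ 4 / 7 * (m:ℝ) := c_le_m hs hmR hmsR
        have hLle : Real.logb 2 (b:ℝ) ≤ 4 / 7 * (n:ℝ) := by
          have h3 : (n:ℝ) * (1 + Real.logb 2 (s:ℝ)) ≤ (n:ℝ) * (4 / 7 * (m:ℝ)) :=
            mul_le_mul_of_nonneg_left hCle (by positivity)
          have h4 : Real.logb 2 (b:ℝ) * (m:ℝ) ≤ (4 / 7 * (n:ℝ)) * (m:ℝ) := by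
            have h5 := le_trans hF1 h3
            calc Real.logb 2 (b:ℝ) * (m:ℝ) = (m:ℝ) * Real.logb 2 (b:ℝ) := mul_comm _ _
              _ ≤ (n:ℝ) * (4 / 7 * (m:ℝ)) := h5
              _ = (4 / 7 * (n:ℝ)) * (m:ℝ) := by ring
          exact le_of_mul_le_mul_right h4 (by linarith only [hmR])
        linarith only [h1, hLle, hnR]
      · -- p odd
        have hp3 : 3 ≤ p := by
          rcases hpodd with ⟨t, ht⟩
          omega
        set g := Nat.gcd m (p - 1) with hg_def
        have hgm : g ∣ m := Nat.gcd_dvd_left _ _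
        have hgp : g ≤ p - 1 := Nat.le_of_dvd (by omega) (Nat.gcd_dvd_right _ _)
        have hg0 : 0 < g := Nat.gcd_pos_of_pos_left _ (by omega)
        have hglt : g < m := by omega
        obtain ⟨k, hk⟩ := hgm
        have hk2 : 2 ≤ k := by
          by_contra hcon
          push_neg at hcon
          have : m ≤ g * 1 := hk ▸ Nat.mul_le_mul_left g (by omega)
          omega
        have h2g : 2 * g ≤ m := by
          calc 2 * g = g * 2 := by ring
            _ ≤ g * k := Nat.mul_le_mul_left g hk2
            _ = m := hk.symm
        have hSdvd : S ∣ b ^ m - 1 := by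
          have hgi := geom_nat_identity b (by omega) m
          rw [hS_def] at hgi
          exact Dvd.intro_left (b - 1) hgi
        have hbm1 : p ∣ b ^ m - 1 :=
          dvd_trans (dvd_trans (dvd_pow_self p (show n ≠ 0 by omega)) hpnS) hSdvd
        haveI : Fact p.Prime := ⟨hp⟩
        have hbmZ : (b : ZMod p) ^ m = 1 := by
          have h1 : ((b ^ m - 1 : ℕ) : ZMod p) = 0 :=
            (ZMod.natCast_eq_zero_iff _ _).mpr hbm1
          rw [Nat.cast_sub (Nat.one_le_pow _ _ (by omega))] at h1
          push_cast at h1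
          linear_combination h1
        have hbpZ : (b : ZMod p) ^ (p - 1) = 1 := ZMod.pow_card_sub_one_eq_one (by
          intro h0
          exact hpb ((ZMod.natCast_eq_zero_iff _ _).mp h0))
        have hbgZ : (b : ZMod p) ^ g = 1 := pow_gcd_eq_one.mpr ⟨hbmZ, hbpZ⟩
        have hbgmod : b ^ g % p = 1 := by
          have hbg1 : 1 ≤ b ^ g := Nat.one_le_pow _ _ (by omega)
          have h1 : p ∣ b ^ g - 1 := by
            apply (ZMod.natCast_eq_zero_iff _ _).mp
            rw [Nat.cast_sub hbg1]
            push_cast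
            rw [hbgZ]
            ring
          obtain ⟨u, hu⟩ := h1
          rw [Nat.sub_eq_iff_eq_add hbg1] at hu
          rw [hu, Nat.mul_add_mod]
          exact Nat.one_mod_eq_one.mpr (by omega)
        have hsplit : S = (∑ j ∈ Finset.range g, b ^ j) * ∑ i ∈ Finset.range k, (b ^ g) ^ i := by
          rw [← hS_def, hk]
          exact sum_pow_mul b g k
        have hA0 : (∑ j ∈ Finset.range g, b ^ j) ≠ 0 := sum_pow_ne_zero (by omega) (by omega)
        have hB0 : (∑ i ∈ Finset.range k, (b ^ g) ^ i) ≠ 0 :=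
          sum_pow_ne_zero (Nat.one_le_pow _ _ (by omega)) (by omega)
        have hfB : (∑ i ∈ Finset.range k, (b ^ g) ^ i).factorization p ≤ k.factorization p :=
          fact_sum_le_odd hp hpodd k (by omega) _ hbgmod
        have hfk : k.factorization p ≤ m.factorization p := by
          apply (hp.pow_dvd_iff_le_factorization (by omega)).mp
          exact dvd_trans (Nat.ordProj_dvd k p) ⟨g, by rw [hk]; ring⟩
        have hnle : n ≤ (∑ j ∈ Finset.range g, b ^ j).factorization p + m.factorization p := by
          rw [hsplit, Nat.factorization_mul hA0 hB0] at hnfS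
          simp only [Finsupp.add_apply] at hnfS
          omega
        have hkeyNat : p ^ n ≤ b ^ g * m := by
          calc p ^ n ≤ p ^ ((∑ j ∈ Finset.range g, b ^ j).factorization p
                + m.factorization p) := Nat.pow_le_pow_right (by omega) hnle
            _ = p ^ ((∑ j ∈ Finset.range g, b ^ j).factorization p)
                * p ^ (m.factorization p) := pow_add p _ _
            _ ≤ (∑ j ∈ Finset.range g, b ^ j) * m :=
                Nat.mul_le_mul (Nat.ordProj_le _ hA0) (Nat.ordProj_le _ (by omega))
            _ ≤ b ^ g * m := Nat.mul_le_mul_right _ (sum_pow_le b g hb)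
        -- real consequences
        have hpR : (3:ℝ) ≤ (p:ℝ) := by exact_mod_cast hp3
        have hy : (11:ℝ)/7 ≤ Real.logb 2 (p:ℝ) := by
          have := Real.logb_le_logb_of_le (b := 2) (by norm_num) (by norm_num)
            (show (3:ℝ) ≤ (p:ℝ) from hpR)
          linarith only [this, logb3_ge]
        have hcast : (p:ℝ) ^ n ≤ (b:ℝ) ^ g * m := by exact_mod_cast hkeyNat
        have hmain := Real.logb_le_logb_of_le (b := 2) (by norm_num) (by positivity) hcast
        rw [Real.logb_pow, Real.logb_mul (by positivity) (by positivity),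
          Real.logb_pow] at hmain
        -- hmain : n * logb 2 p ≤ g * logb 2 b + logb 2 m
        have hgR : (g:ℝ) ≤ (p:ℝ) - 1 := by
          have : (g:ℝ) ≤ ((p - 1 : ℕ):ℝ) := by exact_mod_cast hgp
          rw [Nat.cast_sub (by omega)] at this
          exact_mod_cast this
        have h2gR : 2 * (g:ℝ) ≤ (m:ℝ) := by exact_mod_cast h2g
        have hLpos : (0:ℝ) ≤ Real.logb 2 (b:ℝ) := by linarith only [hL1]
        by_cases hsp : s.Prime
        · -- s = p
          have hpe : p = s := by rw [← hp_def, Nat.Prime.minFac_eq hsp]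
          have hgL : 2 * ((g:ℝ) * Real.logb 2 (b:ℝ)) ≤ (n:ℝ) * (1 + Real.logb 2 (s:ℝ)) := by
            calc 2 * ((g:ℝ) * Real.logb 2 (b:ℝ)) = (2 * (g:ℝ)) * Real.logb 2 (b:ℝ) := by ring
              _ ≤ (m:ℝ) * Real.logb 2 (b:ℝ) := mul_le_mul_of_nonneg_right h2gR hLpos
              _ ≤ (n:ℝ) * (1 + Real.logb 2 (s:ℝ)) := hF1
          have hys : Real.logb 2 (p:ℝ) = Real.logb 2 (s:ℝ) := by rw [hpe]
          rw [hys] at hmain hy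
          have hprod : (0:ℝ) ≤ (n:ℝ) * (Real.logb 2 (s:ℝ) - 11/7) :=
            mul_nonneg (by positivity) (by linarith only [hy])
          linarith only [hmain, hgL, hM0, hprod]
        · -- p ^ 2 ≤ s
          have hp2s : p ^ 2 ≤ s := by
            have h0 := Nat.minFac_sq_le_self (show 0 < s by omega) hsp
            rwa [hp_def] at h0
          have hp2sR : ((p:ℝ)) ^ 2 ≤ (s:ℝ) := by exact_mod_cast hp2s
          have h9 : (2:ℝ) ≤ ((p:ℝ))^2 := by
            have h9' : (3:ℝ)^2 ≤ ((p:ℝ))^2 := pow_le_pow_left₀ (by norm_num) hpR 2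
            norm_num at h9'
            linarith only [h9']
          have hratio := logb_ratio (a := ((p:ℝ))^2) (x := (s:ℝ)) h9 hp2sR
          have hlogp2 : Real.logb 2 ((p:ℝ)^2) = 2 * Real.logb 2 (p:ℝ) := by
            rw [show ((p:ℝ))^2 = ((p:ℝ))^(2:ℕ) by norm_num, Real.logb_pow]
            push_cast
            ring
          rw [hlogp2] at hratio
          -- hratio : p^2 * (1 + logb 2 s) ≤ s * (1 + 2 * logb 2 p)
          have hp1 : (0:ℝ) ≤ (p:ℝ) - 1 := by linarith only [hpR]
          have hsL : (s:ℝ) * ((p:ℝ) - 1) * Real.logb 2 (b:ℝ)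
              ≤ ((p:ℝ) - 1) * ((n:ℝ) * (1 + Real.logb 2 (s:ℝ))) := by
            have h1 : (s:ℝ) * Real.logb 2 (b:ℝ) ≤ (m:ℝ) * Real.logb 2 (b:ℝ) :=
              mul_le_mul_of_nonneg_right hmsR hLpos
            have h2 := mul_le_mul_of_nonneg_left (le_trans h1 hF1) hp1
            linarith only [h2]
          -- derive (p-1) * L * p^2 ≤ (p-1) * n * (1 + 2y)
          have hDb : ((p:ℝ))^2 * (((p:ℝ) - 1) * Real.logb 2 (b:ℝ))
              ≤ ((p:ℝ) - 1) * (n:ℝ) * (1 + 2 * Real.logb 2 (p:ℝ)) := by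
            have hs0 : (0:ℝ) < (s:ℝ) := by linarith only [hsR]
            have hn0 : (0:ℝ) ≤ (n:ℝ) := by linarith only [hnR]
            have ha := mul_le_mul_of_nonneg_left hsL (show (0:ℝ) ≤ ((p:ℝ))^2 by positivity)
            have hbb := mul_le_mul_of_nonneg_left hratio (mul_nonneg hp1 hn0)
            have h1 : (s:ℝ) * (((p:ℝ))^2 * (((p:ℝ) - 1) * Real.logb 2 (b:ℝ)))
                ≤ (s:ℝ) * (((p:ℝ) - 1) * (n:ℝ) * (1 + 2 * Real.logb 2 (p:ℝ))) := by
              linarith only [ha, hbb]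
            exact le_of_mul_le_mul_left h1 hs0
          -- combine: n * y ≤ (p-1) L + M, p² (p-1) L ≤ (p-1) n (1+2y)
          have hgLle : (g:ℝ) * Real.logb 2 (b:ℝ) ≤ ((p:ℝ) - 1) * Real.logb 2 (b:ℝ) :=
            mul_le_mul_of_nonneg_right hgR hLpos
          -- coefficient inequality: (p-1)(1+2y) ≤ p²(y - 2/7)
          have hcoef : ((p:ℝ) - 1) * (1 + 2 * Real.logb 2 (p:ℝ))
              ≤ ((p:ℝ))^2 * (Real.logb 2 (p:ℝ) - 2/7) := coef_ineq hpR hy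
          have hppos : (0:ℝ) < ((p:ℝ))^2 := by positivity
          have e1 := mul_le_mul_of_nonneg_left hmain (le_of_lt hppos)
          have e2 := mul_le_mul_of_nonneg_left hgLle (le_of_lt hppos)
          have e3 := mul_le_mul_of_nonneg_left hcoef (show (0:ℝ) ≤ (n:ℝ) by positivity)
          have e4 : ((p:ℝ))^2 * ((2/7 : ℝ) * n) ≤ ((p:ℝ))^2 * (1 + Real.logb 2 (m:ℝ)) := by
            have e5 := mul_le_mul_of_nonneg_left hM0 (le_of_lt hppos)
            linarith only [e1, e2, e3, hDb, e5, hppos]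
          exact le_of_mul_le_mul_left e4 hppos
    -- final combination
    have hMle : Real.logb 2 (m:ℝ) ≤ Real.logb 2 (n:ℝ) + Real.logb 2 (1 + Real.logb 2 (s:ℝ)) := by
      have h1 := Real.logb_le_logb_of_le (b := 2) (by norm_num) (by linarith only [hmR]) hF2
      rw [Real.logb_mul (by positivity) (show (1:ℝ) + Real.logb 2 (s:ℝ) ≠ 0 by
        intro h0; rw [h0] at hC2; norm_num at hC2)] at h1
      exact h1
    have hlogn16 : 1 + Real.logb 2 (n:ℝ) ≤ (n:ℝ) / 16 := by
      have hr := logb_ratio (a := (128:ℝ)) (x := (n:ℝ)) (by norm_num) hnR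
      have h128 : Real.logb 2 (128:ℝ) = 7 := by
        rw [show (128:ℝ) = 2 ^ (7:ℕ) by norm_num, Real.logb_pow,
          Real.logb_self_eq_one (by norm_num)]
        norm_num
      rw [h128] at hr
      linarith only [hr, hnR]
    have hlogC : (25/112 : ℝ) * n ≤ Real.logb 2 (1 + Real.logb 2 (s:ℝ)) := by
      linarith only [hKEY, hMle, hlogn16]
    have hfin : (n:ℝ) ≤ (1 + Real.logb 2 (s:ℝ)) ^ 2 := by
      have hCpos : (0:ℝ) < 1 + Real.logb 2 (s:ℝ) := by linarith only [hC2]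
      have hlhs : Real.logb 2 (n:ℝ) ≤ Real.logb 2 ((1 + Real.logb 2 (s:ℝ)) ^ 2) := by
        rw [show ((1 + Real.logb 2 (s:ℝ)))^2 = ((1 + Real.logb 2 (s:ℝ)))^(2:ℕ) by norm_num,
          Real.logb_pow]
        push_cast
        linarith only [hlogC, hlogn16, hnR]
      exact (Real.logb_le_logb (by norm_num) (by linarith only [hnR]) (by positivity)).mp hlhs
    exact Nat.le_floor (le_trans hfin (le_max_left _ _))
end

section
/- Let s, b, q and n be integers with s ≥ 2, b ≥ 2, q ≥ 3, n ≥ 1 satisfying n·s^n = b·(b^{q−2} + b^{q−3} + ⋯ + b + 1). Then (1 + log₂(s))·n > q. -/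
/-!
The repunit `b·(1 + b + ⋯ + b^{q-2})` strictly exceeds `b^{q-1} ≥ 2^{q-1}`, so `2^{q-1} < n·s^n`.
Since `2n ≤ 2^n`, this gives `2^q < 2n·s^n ≤ (2s)^n`, and taking `log₂` yields `q < n·(1 + log₂ s)`.
-/

lemma Nat.two_mul_le_two_pow (n : ℕ) : 2 * n ≤ 2 ^ n := by
  cases n with
  | zero => simp
  | succ k =>
    have := Nat.lt_two_pow_self (n := k)
    rw [pow_succ]
    omega

lemma Nat.pow_lt_mul_geom_sum {b m : ℕ} (hb : 0 < b) (hm : 2 ≤ m) :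
    b ^ m < b * ∑ j ∈ Finset.range m, b ^ j := by
  obtain ⟨k, rfl⟩ : ∃ k, m = k + 1 := ⟨m - 1, by omega⟩
  have hk : 0 < ∑ j ∈ Finset.range k, b ^ j :=
    Finset.sum_pos (fun j _ => pow_pos hb j) (Finset.nonempty_range_iff.mpr (by omega))
  rw [Finset.sum_range_succ, mul_add, ← pow_succ']
  exact Nat.lt_add_of_pos_left (Nat.mul_pos hb hk)

lemma lt_one_add_logb_two_mul {x : ℝ} (hx : 0 < x) {q n : ℕ} (h : (2 : ℝ) ^ q < (2 * x) ^ n) :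
    (q : ℝ) < (1 + Real.logb 2 x) * n := by
  have hlog := Real.logb_lt_logb one_lt_two (by positivity) h
  rwa [Real.logb_pow, Real.logb_pow, Real.logb_mul two_ne_zero hx.ne', Real.logb_self_eq_one
    one_lt_two, mul_one, mul_comm] at hlog

theorem log_bound_on_q_general (s b q n : ℕ) (hs : 2 ≤ s) (hb : 2 ≤ b) (hq : 3 ≤ q)
    (heq : n * s ^ n = b * ∑ j ∈ Finset.range (q - 1), b ^ j) :
    (1 + Real.logb 2 s) * n > q := by
  have hrepunit : 2 ^ (q - 1) < n * s ^ n :=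
    heq ▸ (Nat.pow_le_pow_left hb _).trans_lt (Nat.pow_lt_mul_geom_sum (by omega) (by omega))
  have hpow : 2 ^ q < (2 * s) ^ n :=
    calc 2 ^ q = 2 * 2 ^ (q - 1) := by rw [← pow_succ']; congr 1; omega
      _ < 2 * (n * s ^ n) := by omega
      _ = 2 * n * s ^ n := (mul_assoc 2 n _).symm
      _ ≤ 2 ^ n * s ^ n := Nat.mul_le_mul_right _ (Nat.two_mul_le_two_pow n)
      _ = (2 * s) ^ n := (mul_pow 2 s n).symm
  exact lt_one_add_logb_two_mul (by exact_mod_cast (by omega : 0 < s)) (by exact_mod_cast hpow)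

/-- If `s ≥ 2`, `b ≥ 2`, `q ≥ 3`, `n ≥ 1` satisfy
`n·s^n = b·(b^{q−2} + ⋯ + b + 1)`, then `(1 + log₂ s)·n > q`. -/
theorem log_bound_on_q (s b q n : ℕ) (hs : 2 ≤ s) (hb : 2 ≤ b) (hq : 3 ≤ q) (hn : 1 ≤ n)
    (heq : n * s ^ n = b * ∑ j ∈ Finset.range (q - 1), b ^ j) :
    (1 + Real.logb 2 s) * n > q :=
  log_bound_on_q_general s b q n hs hb hq heq
end

section
/- Let q ≥ 4 and b ≥ 2 be integers, and let p be a prime dividing Φ_{q−1}(b), where Φ_m denotes the m-th cyclotomic polynomial. Then either p ≡ 1 (mod q − 1), or p is the largest prime divisor of q − 1 and p² does not divide Φ_{q−1}(b). -/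
open Polynomial Finset

/-- Let `q ≥ 4` and `b ≥ 2` be integers and `p` a prime dividing `Φ_{q−1}(b)`.
Then either `p ≡ 1 (mod q − 1)`, or `p` is the largest prime divisor of
`q − 1` and `p²` does not divide `Φ_{q−1}(b)`. -/
theorem prime_divisor_of_cyclotomic_eval (q b : ℕ) (hq : 4 ≤ q) (hb : 2 ≤ b)
    (p : ℕ) (hp : p.Prime) (hdvd : (p : ℤ) ∣ (Polynomial.cyclotomic (q - 1) ℤ).eval (b : ℤ)) :
    p ≡ 1 [MOD q - 1] ∨
      (p ∣ q - 1 ∧ (∀ r : ℕ, r.Prime → r ∣ q - 1 → r ≤ p) ∧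
        ¬ (p : ℤ) ^ 2 ∣ (Polynomial.cyclotomic (q - 1) ℤ).eval (b : ℤ)) := by
  set n := q - 1 with hn
  have hn3 : 3 ≤ n := by omega
  have hn0 : 0 < n := by omega
  haveI hpfact : Fact p.Prime := ⟨hp⟩
  have hroot : IsRoot (cyclotomic n (ZMod p)) ((Nat.castRingHom (ZMod p)) b) := by
    have h0 : (Int.castRingHom (ZMod p)) ((cyclotomic n ℤ).eval ((b : ℕ) : ℤ)) = 0 := by
      rw [Int.coe_castRingHom, ZMod.intCast_zmod_eq_zero_iff_dvd]; exact hdvd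
    rw [← eval_natCast_map (Int.castRingHom (ZMod p)), map_cyclotomic_int] at h0
    simpa [IsRoot.def] using h0
  have hcop : Nat.Coprime b p := Polynomial.coprime_of_root_cyclotomic hn0 hroot
  have hpb : ¬ p ∣ b := fun h => hp.one_lt.ne' (Nat.eq_one_of_dvd_coprimes hcop h dvd_rfl)
  by_cases hpn : p ∣ n
  · -- hard case: p ∣ n
    right
    set k := n.factorization p with hk
    set m := n / p ^ k with hmdef
    have hkpos : 0 < k := hp.factorization_pos_of_dvd hn0.ne' hpn
    have hnm : p ^ k * m = n := Nat.ordProj_mul_ordCompl_eq_self n p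
    have hm : ¬ p ∣ m := Nat.not_dvd_ordCompl hp hn0.ne'
    have hm0 : 0 < m := Nat.ordCompl_pos p hn0.ne'
    -- b is a root of cyclotomic m mod p
    have hrootm : IsRoot (cyclotomic m (ZMod p)) ((b : ℕ) : ZMod p) := by
      have h1 := hroot
      rw [← hnm, cyclotomic_mul_prime_pow_eq (ZMod p) hm hkpos] at h1
      have hexp : p ^ k - p ^ (k - 1) ≠ 0 := by
        have : p ^ (k - 1) < p ^ k := Nat.pow_lt_pow_right hp.one_lt (by omega)
        omega
      have h2 : (cyclotomic m (ZMod p)).eval ((b : ℕ) : ZMod p) ^ (p ^ k - p ^ (k - 1)) = 0 := by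
        simpa only [IsRoot.def, eval_pow, Nat.coe_castRingHom] using h1
      exact pow_eq_zero_iff hexp |>.mp h2
    haveI : NeZero (m : ZMod p) := ⟨fun h => hm ((ZMod.natCast_eq_zero_iff m p).mp h)⟩
    have hprim : IsPrimitiveRoot ((b : ℕ) : ZMod p) m :=
      (Polynomial.isRoot_cyclotomic_iff).mp hrootm
    have hordm : orderOf ((b : ℕ) : ZMod p) = m := hprim.eq_orderOf.symm
    have hbne : ((b : ℕ) : ZMod p) ≠ 0 := fun h =>
      hpb ((ZMod.natCast_eq_zero_iff b p).mp h)
    have hmdvd : m ∣ p - 1 := by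
      have := ZMod.orderOf_dvd_card_sub_one hbne
      rwa [hordm] at this
    have hmax : ∀ r : ℕ, r.Prime → r ∣ n → r ≤ p := by
      intro r hr hrn
      rw [← hnm] at hrn
      rcases hr.dvd_mul.mp hrn with h | h
      · exact (Nat.prime_dvd_prime_iff_eq hr hp).mp (hr.dvd_of_dvd_pow h) |>.le
      · have : r ∣ p - 1 := h.trans hmdvd
        have hr1 : r ≤ p - 1 := Nat.le_of_dvd (Nat.sub_pos_of_lt hp.one_lt) this
        omega
    refine ⟨hpn, hmax, ?_⟩
    intro hsq
    -- set up c and the geometric sum S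
    set c : ℤ := (b : ℤ) ^ (n / p) with hcdef
    have hnp : n / p * p = n := Nat.div_mul_cancel hpn
    have hnppos : 0 < n / p := Nat.div_pos (Nat.le_of_dvd hn0 hpn) hp.pos
    have hnpeq : n / p = p ^ (k - 1) * m := by
      apply Nat.div_eq_of_eq_mul_left hp.pos
      rw [mul_assoc, mul_comm m p, ← mul_assoc, ← pow_succ]
      rw [show k - 1 + 1 = k by omega, hnm]
    have hmdvdnp : m ∣ n / p := hnpeq ▸ Dvd.intro_left _ rfl
    have hc1 : (p : ℤ) ∣ c - 1 := by
      have hpow : ((b : ℕ) : ZMod p) ^ (n / p) = 1 :=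
        orderOf_dvd_iff_pow_eq_one.mp (hordm ▸ hmdvdnp)
      have h0 : (((b : ℤ) ^ (n / p) - 1 : ℤ) : ZMod p) = 0 := by
        push_cast
        rw [hpow]
        ring
      rw [hcdef]
      exact (ZMod.intCast_zmod_eq_zero_iff_dvd _ _).mp h0
    have hb2 : (2 : ℤ) ≤ (b : ℤ) := by exact_mod_cast hb
    have hcg2 : (2 : ℤ) ≤ c := by
      rw [hcdef]
      calc (2 : ℤ) = 2 ^ 1 := (pow_one 2).symm
      _ ≤ 2 ^ (n / p) := by
        apply pow_le_pow_right₀ one_le_two hnppos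
      _ ≤ (b : ℤ) ^ (n / p) := pow_le_pow_left₀ (by norm_num) hb2 _
    have hpc : ¬ (p : ℤ) ∣ c := by
      intro h
      have h1 : (p : ℤ) ∣ 1 := by
        have := dvd_sub h hc1
        simpa using this
      exact hp.one_lt.ne' (Nat.dvd_one.mp (by exact_mod_cast h1))
    set S : ℤ := ∑ i ∈ Finset.range p, c ^ i with hSdef
    have hgeom : S * (c - 1) = (b : ℤ) ^ n - 1 := by
      rw [geom_sum_mul, hcdef, ← pow_mul, hnp]
    have hΦdvd : ((b : ℤ) ^ (n / p) - 1) * (cyclotomic n ℤ).eval (b : ℤ) ∣ (b : ℤ) ^ n - 1 := by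
      have hmem : n / p ∈ n.properDivisors :=
        Nat.mem_properDivisors.mpr ⟨Nat.div_dvd_of_dvd hpn, Nat.div_lt_self hn0 hp.one_lt⟩
      obtain ⟨P, hP⟩ := X_pow_sub_one_mul_cyclotomic_dvd_X_pow_sub_one_of_dvd ℤ hmem
      refine ⟨P.eval (b : ℤ), ?_⟩
      have := congrArg (Polynomial.eval ((b : ℕ) : ℤ)) hP
      simpa using this
    have hSdvd : (cyclotomic n ℤ).eval (b : ℤ) ∣ S := by
      obtain ⟨t, ht⟩ := hΦdvd
      refine ⟨t, mul_left_cancel₀ (show c - 1 ≠ 0 by omega) ?_⟩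
      rw [mul_comm (c-1) S, hgeom, ht]; ring
    have hpsqS : (p : ℤ) ^ 2 ∣ S := hsq.trans hSdvd
    rcases hp.eq_two_or_odd' with hp2 | hpodd
    · -- p = 2
      have hm1 : m = 1 := Nat.dvd_one.mp (by simpa [hp2] using hmdvd)
      have hk2 : 2 ≤ k := by
        by_contra h
        have hk1 : k = 1 := by omega
        have : n = 2 := by rw [← hnm, hk1, hm1, hp2]; ring
        omega
      have hSc : S = 1 + c := by
        rw [hSdef, hp2]
        simp [Finset.sum_range_succ]
      have hbodd : Odd (b : ℤ) := by
        rcases Int.even_or_odd (b : ℤ) with he | ho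
        · exact absurd (by exact_mod_cast he.two_dvd : 2 ∣ b) (hp2 ▸ hpb)
        · exact ho
      have hceq : c = ((b : ℤ) ^ (p ^ (k - 2) * m)) ^ 2 := by
        rw [hcdef, ← pow_mul, hnpeq]
        congr 1
        rw [hp2]
        rw [show k - 1 = k - 2 + 1 by omega]
        ring
      have hcodd : Odd ((b : ℤ) ^ (p ^ (k - 2) * m)) := hbodd.pow
      have hmod : c % 4 = 1 := by
        rw [hceq]; exact Int.sq_mod_four_eq_one_of_odd hcodd
      have h4 : (4 : ℤ) ∣ S := by
        have : ((p : ℤ)) ^ 2 = 4 := by rw [hp2]; norm_num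
        rwa [this] at hpsqS
      omega
    · -- p odd
      have hone := emultiplicity_geom_sum₂_eq_one (R := ℤ) (x := c) (y := 1)
        (Nat.prime_iff_prime_int.mp hp) hpodd (by simpa using hc1) hpc
      have hS2 : (p : ℤ) ^ 2 ∣ ∑ i ∈ Finset.range p, c ^ i * 1 ^ (p - 1 - i) := by
        simpa using hpsqS
      have hle := le_emultiplicity_of_pow_dvd hS2
      rw [hone] at hle
      exact absurd hle (by norm_num)
  · -- easy case: p ∤ n, then p ≡ 1 mod n
    left
    haveI : NeZero (n : ZMod p) := ⟨fun h => hpn ((ZMod.natCast_eq_zero_iff n p).mp h)⟩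
    have hprim : IsPrimitiveRoot ((b : ℕ) : ZMod p) n := (Polynomial.isRoot_cyclotomic_iff).mp
      (by simpa using hroot)
    have hbne : ((b : ℕ) : ZMod p) ≠ 0 := fun h =>
      hpb ((ZMod.natCast_eq_zero_iff b p).mp h)
    have hdiv : n ∣ p - 1 := by
      have := ZMod.orderOf_dvd_card_sub_one hbne
      rwa [← hprim.eq_orderOf] at this
    exact ((Nat.modEq_iff_dvd' hp.pos).2 hdiv).symm
end

section
/- Let q ≥ 4 and b ≥ 2 be integers, and let Φ_m denote the m-th cyclotomic polynomial. Then all prime factors of Φ_{q−1}(b), counted with multiplicity, are ≥ q, with at most one exception; that is, either every prime p dividing Φ_{q−1}(b) satisfies p ≥ q, or there is exactly one prime p < q dividing Φ_{q−1}(b), p² does not divide Φ_{q−1}(b), and every other prime divisor of Φ_{q−1}(b) is ≥ q. -/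
/-!
Let `n = q - 1` and let `p` be a prime dividing `Φ_n(b)`. Writing `n = p^k m` with `p ∤ m`, the
residue of `b` mod `p` is a primitive `m`-th root of unity, so `m ∣ p - 1`. Hence a prime
`p < q` must divide `n`, and `p` exceeds every other prime factor of `n`: two such primes would
each exceed the other. If moreover `p ∣ n = dp`, then `Φ_n(b)` divides `1 + x + ⋯ + x^(p-1)` with
`x = b^d ≡ 1 (mod p)`, which is `≡ p (mod p²)` for odd `p`; for `p = 2`, `n = 2^k` with `k ≥ 2`
and `Φ_n(b) = y² + 1` is not divisible by `4`.
-/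

open Polynomial Finset

theorem Polynomial.cyclotomic_mul_dvd_geom_sum (R : Type*) [CommRing R] {d p : ℕ} (hd : 0 < d)
    (hp : 1 < p) : cyclotomic (d * p) R ∣ ∑ i ∈ range p, (X ^ d) ^ i := by
  suffices cyclotomic (d * p) ℤ ∣ ∑ i ∈ range p, (X ^ d) ^ i by
    simpa [map_cyclotomic_int] using _root_.map_dvd (mapRingHom (Int.castRingHom R)) this
  have hd_mem : d ∈ (d * p).properDivisors :=
    Nat.mem_properDivisors.mpr ⟨dvd_mul_right d p, lt_mul_of_one_lt_right hd hp⟩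
  have h := X_pow_sub_one_mul_cyclotomic_dvd_X_pow_sub_one_of_dvd ℤ hd_mem
  rw [pow_mul, ← mul_geom_sum (X ^ d : ℤ[X]) p] at h
  have hX : (X ^ d - 1 : ℤ[X]) ≠ 0 := by simpa only [C_1] using X_pow_sub_C_ne_zero hd (1 : ℤ)
  exact (mul_dvd_mul_iff_left hX).mp h

theorem Int.not_sq_dvd_geom_sum_of_dvd_sub_one {p : ℕ} (hp : p.Prime) (hodd : Odd p) {x : ℤ}
    (hx : (p : ℤ) ∣ x - 1) : ¬ (p : ℤ) ^ 2 ∣ ∑ i ∈ Finset.range p, x ^ i := by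
  have hp_int := Nat.prime_iff_prime_int.mp hp
  have hpx : ¬ (p : ℤ) ∣ x := fun h => hp_int.not_dvd_one ((dvd_sub_right h).mp hx)
  have h := emultiplicity_geom_sum₂_eq_one (y := 1) hp_int hodd hx hpx
  simp only [one_pow, mul_one] at h
  rw [pow_dvd_iff_le_emultiplicity, h]
  norm_num

theorem Polynomial.not_four_dvd_cyclotomic_two_pow_eval {k : ℕ} (hk : 2 ≤ k) (b : ℤ) :
    ¬ (4 : ℤ) ∣ (cyclotomic (2 ^ k) ℤ).eval b := by
  obtain ⟨j, rfl⟩ : ∃ j, k = j + 2 := ⟨k - 2, by omega⟩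
  have hsq : ∀ z : ZMod 4, 1 + z ^ 2 ≠ 0 := by decide
  rw [cyclotomic_prime_pow_eq_geom_sum Nat.prime_two, pow_succ, pow_mul]
  simp only [sum_range_succ, range_zero, sum_empty, eval_add, eval_pow, eval_X, eval_one, pow_zero,
    pow_one, zero_add]
  intro h4
  apply hsq (b ^ 2 ^ j : ℤ)
  exact_mod_cast (ZMod.intCast_zmod_eq_zero_iff_dvd (1 + (b ^ 2 ^ j) ^ 2) 4).mpr h4

section CyclotomicEval

variable {p n : ℕ} [hp : Fact p.Prime] {b : ℤ}

theorem isRoot_cyclotomic_zmod_of_dvd_eval (h : (p : ℤ) ∣ (cyclotomic n ℤ).eval b) :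
    (cyclotomic n (ZMod p)).IsRoot (b : ZMod p) := by
  rwa [IsRoot.def, ← map_cyclotomic_int, eval_intCast_map, Int.coe_castRingHom,
    ZMod.intCast_zmod_eq_zero_iff_dvd]

theorem isPrimitiveRoot_ordCompl_of_dvd_cyclotomic_eval (hn : n ≠ 0)
    (h : (p : ℤ) ∣ (cyclotomic n ℤ).eval b) : IsPrimitiveRoot (b : ZMod p) (ordCompl[p] n) := by
  have : NeZero ((ordCompl[p] n : ℕ) : ZMod p) :=
    ⟨by rw [Ne, ZMod.natCast_eq_zero_iff]; exact Nat.not_dvd_ordCompl hp.out hn⟩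
  have hroot := isRoot_cyclotomic_zmod_of_dvd_eval h
  rwa [← Nat.ordProj_mul_ordCompl_eq_self n p, isRoot_cyclotomic_prime_pow_mul_iff_of_charP]
    at hroot

theorem ordCompl_dvd_sub_one_of_dvd_cyclotomic_eval (hn : n ≠ 0)
    (h : (p : ℤ) ∣ (cyclotomic n ℤ).eval b) : ordCompl[p] n ∣ p - 1 := by
  have hprim := isPrimitiveRoot_ordCompl_of_dvd_cyclotomic_eval hn h
  rw [hprim.eq_orderOf]
  exact ZMod.orderOf_dvd_card_sub_one (hprim.ne_zero (Nat.ordCompl_pos p hn).ne')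

theorem dvd_sub_one_of_dvd_cyclotomic_eval (hpn : ¬ p ∣ n)
    (h : (p : ℤ) ∣ (cyclotomic n ℤ).eval b) : n ∣ p - 1 := by
  have hn : n ≠ 0 := by rintro rfl; exact hpn (dvd_zero p)
  simpa [Nat.factorization_eq_zero_of_not_dvd hpn] using
    ordCompl_dvd_sub_one_of_dvd_cyclotomic_eval hn h

theorem lt_of_dvd_cyclotomic_eval {r : ℕ} (hr : r.Prime) (hrp : r ≠ p) (hrn : r ∣ n) (hn : n ≠ 0)
    (h : (p : ℤ) ∣ (cyclotomic n ℤ).eval b) : r < p := by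
  have hr_compl : r ∣ ordCompl[p] n := by
    rw [← Nat.ordProj_mul_ordCompl_eq_self n p] at hrn
    exact (((Nat.coprime_primes hr hp.out).mpr hrp).pow_right _).dvd_of_dvd_mul_left hrn
  have := Nat.le_of_dvd (Nat.sub_pos_of_lt hp.out.one_lt)
    (hr_compl.trans (ordCompl_dvd_sub_one_of_dvd_cyclotomic_eval hn h))
  omega

theorem not_sq_dvd_cyclotomic_eval (hpn : p ∣ n) (hn : 2 < n)
    (h : (p : ℤ) ∣ (cyclotomic n ℤ).eval b) : ¬ (p : ℤ) ^ 2 ∣ (cyclotomic n ℤ).eval b := by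
  rcases hp.out.eq_two_or_odd' with rfl | hodd
  · have hpow : 2 ^ n.factorization 2 = n := by
      simpa [Nat.dvd_one.mp (ordCompl_dvd_sub_one_of_dvd_cyclotomic_eval (by omega) h)] using
        Nat.ordProj_mul_ordCompl_eq_self n 2
    have hk : 1 < n.factorization 2 :=
      (Nat.pow_lt_pow_iff_right (by norm_num : 1 < 2)).mp (by rwa [pow_one, hpow])
    rw [← hpow]
    exact_mod_cast not_four_dvd_cyclotomic_two_pow_eval hk b
  · obtain ⟨d, rfl⟩ := hpn
    have hd : 0 < d := Nat.pos_of_ne_zero (by rintro rfl; omega)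
    have hprim := isPrimitiveRoot_ordCompl_of_dvd_cyclotomic_eval (by omega) h
    have hx : (p : ℤ) ∣ b ^ d - 1 := by
      rw [← ZMod.intCast_zmod_eq_zero_iff_dvd, Int.cast_sub, Int.cast_pow, Int.cast_one,
        sub_eq_zero, hprim.pow_eq_one_iff_dvd]
      exact (Nat.coprime_ordCompl hp.out (by omega)).symm.dvd_of_dvd_mul_left (Nat.ordCompl_dvd _ _)
    have hdvd := eval_dvd (x := b) (cyclotomic_mul_dvd_geom_sum ℤ hd hp.out.one_lt)
    simp only [eval_finsetSum, eval_pow, eval_X, mul_comm d p] at hdvd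
    exact fun hsq => Int.not_sq_dvd_geom_sum_of_dvd_sub_one hp.out hodd hx (hsq.trans hdvd)

end CyclotomicEval

theorem cyclotomic_eval_prime_factors_ge_general (q b : ℕ) (hq : 4 ≤ q) :
    (∀ p : ℕ, p.Prime → (p : ℤ) ∣ (Polynomial.cyclotomic (q - 1) ℤ).eval (b : ℤ) → q ≤ p) ∨
      (∃ p : ℕ, p.Prime ∧ p < q ∧ (p : ℤ) ∣ (Polynomial.cyclotomic (q - 1) ℤ).eval (b : ℤ) ∧
        ¬ (p : ℤ) ^ 2 ∣ (Polynomial.cyclotomic (q - 1) ℤ).eval (b : ℤ) ∧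
        ∀ r : ℕ, r.Prime → (r : ℤ) ∣ (Polynomial.cyclotomic (q - 1) ℤ).eval (b : ℤ) →
          r ≠ p → q ≤ r) := by
  have hn : 2 < q - 1 := by omega
  have small_dvd : ∀ p : ℕ, p.Prime → (p : ℤ) ∣ (cyclotomic (q - 1) ℤ).eval (b : ℤ) → p < q →
      p ∣ q - 1 := by
    intro p hp hpE hpq
    by_contra hpn
    have : Fact p.Prime := ⟨hp⟩
    have := Nat.le_of_dvd (Nat.sub_pos_of_lt hp.one_lt) (dvd_sub_one_of_dvd_cyclotomic_eval hpn hpE)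
    omega
  by_cases hsmall : ∃ p : ℕ, p.Prime ∧ p < q ∧ (p : ℤ) ∣ (cyclotomic (q - 1) ℤ).eval (b : ℤ)
  · obtain ⟨p, hp, hpq, hpE⟩ := hsmall
    have : Fact p.Prime := ⟨hp⟩
    refine Or.inr ⟨p, hp, hpq, hpE, not_sq_dvd_cyclotomic_eval (small_dvd p hp hpE hpq) hn hpE, ?_⟩
    intro r hr hrE hrp
    by_contra! hrq
    have : Fact r.Prime := ⟨hr⟩
    have hr_lt := lt_of_dvd_cyclotomic_eval hr hrp (small_dvd r hr hrE hrq) (by omega) hpE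
    have hp_lt := lt_of_dvd_cyclotomic_eval hp hrp.symm (small_dvd p hp hpE hpq) (by omega) hrE
    exact lt_asymm hr_lt hp_lt
  · refine Or.inl fun p hp hpE => ?_
    by_contra! hpq
    exact hsmall ⟨p, hp, hpq, hpE⟩

/-- Let `q ≥ 4` and `b ≥ 2` be integers.  All prime factors of `Φ_{q−1}(b)`,
counted with multiplicity, are `≥ q` with at most one exception: either every
prime divisor of `Φ_{q−1}(b)` is `≥ q`, or there is exactly one prime `p < q`
dividing `Φ_{q−1}(b)`, its square does not divide `Φ_{q−1}(b)`, and every other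
prime divisor is `≥ q`. -/
theorem cyclotomic_eval_prime_factors_ge (q b : ℕ) (hq : 4 ≤ q) (hb : 2 ≤ b) :
    (∀ p : ℕ, p.Prime → (p : ℤ) ∣ (Polynomial.cyclotomic (q - 1) ℤ).eval (b : ℤ) → q ≤ p) ∨
      (∃ p : ℕ, p.Prime ∧ p < q ∧ (p : ℤ) ∣ (Polynomial.cyclotomic (q - 1) ℤ).eval (b : ℤ) ∧
        ¬ (p : ℤ) ^ 2 ∣ (Polynomial.cyclotomic (q - 1) ℤ).eval (b : ℤ) ∧
        ∀ r : ℕ, r.Prime → (r : ℤ) ∣ (Polynomial.cyclotomic (q - 1) ℤ).eval (b : ℤ) →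
          r ≠ p → q ≤ r) :=
  cyclotomic_eval_prime_factors_ge_general q b hq
end

section
/- Let q ≥ 3 and b ≥ 2 be integers. Then Φ_{q−1}(b) ≥ b^{φ(q−1)}/2, where Φ_m denotes the m-th cyclotomic polynomial and φ is Euler's totient function. -/
open Polynomial Finset

namespace CycLB

/-- normalized cyclotomic value `Φ_n(b)/b^φ(n)` -/
noncomputable def G (n : ℕ) (b : ℝ) : ℝ := (cyclotomic n ℝ).eval b / b ^ n.totient

/-- `∏_{p | n prime} (1 - b⁻¹ ^ p)` -/
noncomputable def PP (n : ℕ) (b : ℝ) : ℝ := ∏ p ∈ n.primeFactors, (1 - b⁻¹ ^ p)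

/-- product of the smallest prime factor and the second smallest -/
def E (n : ℕ) : ℕ := n.minFac * (n / n.minFac).minFac

lemma G_pos (n : ℕ) {b : ℝ} (hb : 1 < b) : 0 < G n b :=
  div_pos (cyclotomic_pos' n hb) (pow_pos (by linarith) _)

lemma G_dvd {p m : ℕ} (hp : p.Prime) (hd : p ∣ m) {b : ℝ} (hb : 0 < b) :
    G (m * p) b = G m (b ^ p) := by
  have h := congrArg (eval b) (cyclotomic_expand_eq_cyclotomic hp hd ℝ)
  rw [expand_eval] at h
  have ht : (m * p).totient = p * m.totient := by
    rw [mul_comm m p, Nat.totient_mul_of_prime_of_dvd hp hd]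
  unfold G
  rw [← h, ht, ← pow_mul]

lemma G_not_dvd {p m : ℕ} (hp : p.Prime) (hd : ¬ p ∣ m) {b : ℝ} (hb : 0 < b) :
    G (m * p) b * G m b = G m (b ^ p) := by
  have h := congrArg (eval b) (cyclotomic_expand_eq_cyclotomic_mul hp hd ℝ)
  rw [expand_eval, eval_mul] at h
  have hcop : Nat.Coprime m p := ((Nat.Prime.coprime_iff_not_dvd hp).mpr hd).symm
  have hp1 : p - 1 + 1 = p := Nat.succ_pred_eq_of_pos hp.pos
  have ht : (m * p).totient = m.totient * (p - 1) := by
    rw [Nat.totient_mul hcop, Nat.totient_prime hp]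
  have hexp : m.totient * (p - 1) + m.totient = m.totient * p := by
    conv_rhs => rw [← hp1]
    ring
  unfold G
  rw [div_mul_div_comm, ← h, ht, ← pow_mul, ← pow_add, hexp, Nat.mul_comm m.totient p]

lemma G_prime {p : ℕ} (hp : p.Prime) {b : ℝ} (hb : 1 < b) :
    (1 - b⁻¹) * G p b = 1 - b⁻¹ ^ p := by
  haveI : Fact p.Prime := ⟨hp⟩
  have hb0 : (0:ℝ) < b := by linarith
  have he : (cyclotomic p ℝ).eval b = ∑ i ∈ range p, b ^ i := by
    rw [cyclotomic_prime, eval_finset_sum]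
    simp
  have hg := geom_sum_mul b p
  have hp1 : p - 1 + 1 = p := Nat.succ_pred_eq_of_pos hp.pos
  have hbp : b * b ^ (p-1) = b ^ p := by
    rw [mul_comm, ← pow_succ, hp1]
  have h1 : 1 - b⁻¹ = (b - 1) / b := by field_simp
  have h2 : 1 - b⁻¹ ^ p = (b ^ p - 1) / b ^ p := by
    rw [inv_pow]
    field_simp
  unfold G
  rw [he, Nat.totient_prime hp, h1, h2, div_mul_div_comm, mul_comm (b-1) _, hg, hbp]

lemma prod_one_sub_ge (S : Finset ℕ) {y : ℝ} (h0 : 0 ≤ y) (h1 : y ≤ 1) :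
    1 - ∑ s ∈ S, y ^ s ≤ ∏ s ∈ S, (1 - y ^ s) := by
  classical
  induction S using Finset.induction_on with
  | empty => simp
  | @insert a S haS ih =>
    rw [prod_insert haS, sum_insert haS]
    have hya : 0 ≤ y ^ a := pow_nonneg h0 a
    have hya1 : y ^ a ≤ 1 := pow_le_one₀ h0 h1
    have hsum : 0 ≤ ∑ s ∈ S, y ^ s := sum_nonneg fun s _ => pow_nonneg h0 s
    nlinarith [ih, mul_nonneg hya hsum]

lemma prod_one_sub_le (S : Finset ℕ) {a : ℕ} (ha : a ∈ S) {y : ℝ} (h0 : 0 ≤ y) (h1 : y ≤ 1) :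
    ∏ s ∈ S, (1 - y ^ s) ≤ 1 - y ^ a := by
  classical
  rw [← Finset.prod_erase_mul S _ ha]
  have h2 : ∏ s ∈ S.erase a, (1 - y ^ s) ≤ 1 := by
    apply Finset.prod_le_one
    · intro i _
      have := pow_le_one₀ h0 h1 (n := i)
      linarith
    · intro i _
      have := pow_nonneg h0 i
      linarith
  have h3 : (0:ℝ) ≤ 1 - y ^ a := by
    have := pow_le_one₀ h0 h1 (n := a); linarith
  nlinarith [h2, h3]

lemma sum_pow_le (S : Finset ℕ) (a : ℕ) (haodd : Odd a) {y : ℝ} (h0 : 0 ≤ y) (h1 : y ≤ 1/2)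
    (hS : ∀ s ∈ S, Odd s ∧ a ≤ s) :
    ∑ s ∈ S, y ^ s ≤ y ^ a * (1 - y ^ 2)⁻¹ := by
  classical
  set N := S.sup id + 1 with hN
  have hsub : S ⊆ (range N).image (fun j => a + 2 * j) := by
    intro s hs
    obtain ⟨hso, hsa⟩ := hS s hs
    refine mem_image.mpr ⟨(s - a) / 2, mem_range.mpr ?_, ?_⟩
    · have hle : s ≤ S.sup id := le_sup (f := id) hs
      omega
    · obtain ⟨k, hk⟩ := hso
      obtain ⟨l, hl⟩ := haodd
      omega
  have h2' : (0:ℝ) < 1 - y^2 := by nlinarith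
  calc ∑ s ∈ S, y ^ s ≤ ∑ s ∈ (range N).image (fun j => a + 2*j), y ^ s :=
        Finset.sum_le_sum_of_subset_of_nonneg hsub (fun i _ _ => pow_nonneg h0 i)
    _ = ∑ j ∈ range N, y ^ (a + 2*j) := Finset.sum_image (by intro u _ v _ h; simp only at h; omega)
    _ = y ^ a * ∑ j ∈ range N, (y^2) ^ j := by
        rw [mul_sum]
        refine sum_congr rfl fun j _ => ?_
        rw [pow_add, ← pow_mul]
    _ ≤ y ^ a * (1 - y^2)⁻¹ := by
        have hg := geom_sum_mul (y^2) N
        have hid : (∑ j ∈ range N, (y^2)^j) * (1 - y^2) = 1 - (y^2)^N := by nlinarith [hg]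
        have hpw : (0:ℝ) ≤ (y^2)^N := pow_nonneg (sq_nonneg y) N
        have hle : (∑ j ∈ range N, (y^2)^j) ≤ (1 - y^2)⁻¹ := by
          rw [inv_eq_one_div, le_div_iff₀ h2']
          nlinarith
        exact mul_le_mul_of_nonneg_left hle (pow_nonneg h0 a)

lemma PP_pos (n : ℕ) {b : ℝ} (hb : 2 ≤ b) : 0 < PP n b := by
  unfold PP
  apply Finset.prod_pos
  intro p hp
  have h2 : 1 ≤ p := (Nat.prime_of_mem_primeFactors hp).one_lt.le
  have hb0 : (0:ℝ) < b⁻¹ := by positivity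
  have hx2 : b⁻¹ ≤ 1/2 := by
    rw [inv_eq_one_div, div_le_div_iff₀ (by linarith) (by norm_num)]; linarith
  have : b⁻¹ ^ p ≤ b⁻¹ ^ 1 := pow_le_pow_of_le_one hb0.le (by linarith) h2
  simp only [pow_one] at this
  linarith

lemma PP_le_one (n : ℕ) {b : ℝ} (hb : 2 ≤ b) : PP n b ≤ 1 := by
  unfold PP
  apply Finset.prod_le_one
  · intro p hp
    have hb0 : (0:ℝ) < b⁻¹ := by positivity
    have hx2 : b⁻¹ ≤ 1/2 := by
      rw [inv_eq_one_div, div_le_div_iff₀ (by linarith) (by norm_num)]; linarith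
    have h2 : 1 ≤ p := (Nat.prime_of_mem_primeFactors hp).one_lt.le
    have : b⁻¹ ^ p ≤ b⁻¹ ^ 1 := pow_le_pow_of_le_one hb0.le (by linarith) h2
    simp only [pow_one] at this
    linarith
  · intro p hp
    have : (0:ℝ) ≤ b⁻¹ ^ p := by positivity
    linarith

lemma keys {a c c' A' : ℝ} (ha0 : 0 < a) (ha : a ≤ 1/64) (hc0 : 0 < c)
    (hc : c ≤ a * (1/64)) (hc'0 : 0 < c') (hc'a : c' ≤ a * c)
    (hA'l : 1 - (16/15) * a ≤ A') (hA'u : A' ≤ 1 - a) (hA'0 : 0 < A') :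
    (1 - 2*a) * A' * (1 + 2*c) ≤ 1 - 2*c' ∧
    1 + 2*c' ≤ (1 + 2*a) * A' * (1 - 2*c) ∧
    (1 - 2*a) * (1 + 2*c) ≤ A' * (1 - 2*c') ∧
    A' * (1 + 2*c') ≤ (1 + 2*a) * (1 - 2*c) := by
  have h2a : (0:ℝ) < 1 - 2*a := by linarith
  have hca : c ≤ a := by nlinarith
  have h2c : (0:ℝ) < 1 - 2*c := by nlinarith
  have h2c' : (0:ℝ) < 1 - 2*c' := by nlinarith
  have hac : 0 < a * c := mul_pos ha0 hc0
  refine ⟨?_, ?_, ?_, ?_⟩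
  · have k1 : (1 - 2*a) * A' ≤ (1 - 2*a) * (1 - a) := mul_le_mul_of_nonneg_left hA'u h2a.le
    have k2 : (1 - 2*a) * A' * (1 + 2*c) ≤ (1 - 2*a) * (1 - a) * (1 + 2*c) :=
      mul_le_mul_of_nonneg_right k1 (by linarith)
    nlinarith [k2, mul_nonneg ha0.le hc0.le, mul_nonneg (mul_nonneg ha0.le ha0.le) hc0.le]
  · have k1 : (1 + 2*a) * (1 - (16/15)*a) ≤ (1 + 2*a) * A' :=
      mul_le_mul_of_nonneg_left hA'l (by linarith)
    have k2 : (1 + 2*a) * (1 - (16/15)*a) * (1 - 2*c) ≤ (1 + 2*a) * A' * (1 - 2*c) :=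
      mul_le_mul_of_nonneg_right k1 h2c.le
    nlinarith [k2, mul_nonneg ha0.le hc0.le, mul_nonneg (mul_nonneg ha0.le ha0.le) hc0.le]
  · have k1 : (1 - (16/15)*a) * (1 - 2*c') ≤ A' * (1 - 2*c') :=
      mul_le_mul_of_nonneg_right hA'l h2c'.le
    nlinarith [k1, mul_nonneg ha0.le hc0.le, mul_nonneg ha0.le hc'0.le]
  · have k1 : A' * (1 + 2*c') ≤ (1 - a) * (1 + 2*c') :=
      mul_le_mul_of_nonneg_right hA'u (by linarith)
    nlinarith [k1, mul_nonneg ha0.le hc0.le, mul_nonneg ha0.le hc'0.le]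

set_option maxHeartbeats 2000000 in
theorem main : ∀ n : ℕ, 2 ≤ n → Squarefree n → ∀ b : ℝ, 2 ≤ b →
    ((Odd n.primeFactors.card →
       PP n b * (1 - 2 * b⁻¹ ^ E n) ≤ (1 - b⁻¹) * G n b ∧
       (1 - b⁻¹) * G n b ≤ PP n b * (1 + 2 * b⁻¹ ^ E n)) ∧
     (¬ Odd n.primeFactors.card →
       (1 - b⁻¹) * (1 - 2 * b⁻¹ ^ E n) ≤ PP n b * G n b ∧
       PP n b * G n b ≤ (1 - b⁻¹) * (1 + 2 * b⁻¹ ^ E n))) := by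
  intro n
  induction n using Nat.strong_induction_on with
  | _ n IH =>
  intro hn hsq b hb
  have hb1 : (1:ℝ) < b := by linarith
  have hb0 : (0:ℝ) < b := by linarith
  have hx0 : (0:ℝ) < b⁻¹ := by positivity
  have hx2 : b⁻¹ ≤ 1/2 := by
    rw [inv_eq_one_div, div_le_div_iff₀ hb0 (by norm_num)]; linarith
  have hxp : ∀ j k : ℕ, j ≤ k → b⁻¹ ^ k ≤ b⁻¹ ^ j :=
    fun j k h => pow_le_pow_of_le_one hx0.le (by linarith) h
  have hx6 : b⁻¹ ^ 6 ≤ 1/64 := by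
    calc b⁻¹ ^ 6 ≤ (1/2:ℝ) ^ 6 := pow_le_pow_left₀ hx0.le hx2 6
      _ = 1/64 := by norm_num
  have hn1 : n ≠ 1 := by omega
  have hn0 : n ≠ 0 := by omega
  have hp₁ : (n.minFac).Prime := Nat.minFac_prime hn1
  set p₁ := n.minFac with hp₁def
  set m := n / p₁ with hmdef
  have hmp : m * p₁ = n := Nat.div_mul_cancel (Nat.minFac_dvd n)
  have hmn : m < n := Nat.div_lt_self (by omega) hp₁.one_lt
  clear_value p₁ m
  have hp₁2 : 2 ≤ p₁ := hp₁.two_le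
  have hm0 : m ≠ 0 := by
    intro h
    rw [h, zero_mul] at hmp
    exact hn0 hmp.symm
  have hp₁m : ¬ p₁ ∣ m := by
    rintro ⟨t, ht⟩
    have hdv : p₁ * p₁ ∣ n := ⟨t, by rw [← hmp, ht]; ring⟩
    have h1 := Nat.isUnit_iff.mp (hsq p₁ hdv)
    omega
  by_cases hm1 : m = 1
  · -- n is prime
    have hnp : n = p₁ := by rw [← hmp, hm1, one_mul]
    have hpn : n.Prime := by rw [hnp]; exact hp₁
    have hpf : n.primeFactors = {n} := hpn.primeFactors
    have hE : E n = n := by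
      unfold E
      rw [← hp₁def, ← hmdef, hm1, Nat.minFac_one, mul_one, hnp]
    have hgp := G_prime hpn hb1
    have hPPn : PP n b = 1 - b⁻¹ ^ n := by unfold PP; rw [hpf, prod_singleton]
    constructor
    · intro _
      rw [hPPn, hgp, hE]
      have h1 : (0:ℝ) ≤ b⁻¹ ^ n := by positivity
      have h2 : b⁻¹ ^ n ≤ 1 := pow_le_one₀ hx0.le (by linarith)
      constructor <;> nlinarith
    · intro hodd
      rw [hpf] at hodd
      simp at hodd
  · -- n = m * p₁ with m ≥ 2
    have hm2 : 2 ≤ m := by omega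
    have hmdvd : m ∣ n := ⟨p₁, hmp.symm⟩
    have hsqm : Squarefree m := hsq.squarefree_of_dvd hmdvd
    have hpfn : n.primeFactors = insert p₁ m.primeFactors := by
      rw [← hmp, Nat.primeFactors_mul hm0 (by omega : p₁ ≠ 0), hp₁.primeFactors,
        Finset.union_comm, ← Finset.insert_eq]
    have hp₁pf : p₁ ∉ m.primeFactors := fun h => hp₁m (Nat.dvd_of_mem_primeFactors h)
    have hcard : n.primeFactors.card = m.primeFactors.card + 1 := by
      rw [hpfn, card_insert_of_notMem hp₁pf]
    have hPlt : ∀ P ∈ m.primeFactors, p₁ < P := by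
      intro P hP
      have hPp : P.Prime := Nat.prime_of_mem_primeFactors hP
      have h1 : p₁ ≤ P := by
        rw [hp₁def]
        exact Nat.minFac_le_of_dvd hPp.two_le ((Nat.dvd_of_mem_primeFactors hP).trans hmdvd)
      have h2 : P ≠ p₁ := fun h => hp₁m (h ▸ Nat.dvd_of_mem_primeFactors hP)
      omega
    have hp₂' : (m.minFac).Prime := Nat.minFac_prime hm1
    set p₂ := m.minFac with hp₂def
    have hp₂ : p₂.Prime := hp₂'
    have hp₂pf : p₂ ∈ m.primeFactors :=
      Nat.mem_primeFactors.mpr ⟨hp₂, Nat.minFac_dvd m, hm0⟩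
    have hPge : ∀ P ∈ m.primeFactors, p₂ ≤ P := fun P hP =>
      Nat.minFac_le_of_dvd (Nat.prime_of_mem_primeFactors hP).two_le
        (Nat.dvd_of_mem_primeFactors hP)
    have hEn : E n = p₁ * p₂ := by unfold E; rw [← hp₁def, ← hmdef, ← hp₂def]
    have hdivm := Nat.div_mul_cancel (Nat.minFac_dvd m)
    rw [← hp₂def] at hdivm
    clear_value p₂
    have hp₁p₂ : p₁ < p₂ := hPlt _ hp₂pf
    have hp₂3 : 3 ≤ p₂ := by have := hp₂.two_le; omega
    have hp₂odd : Odd p₂ := hp₂.odd_of_ne_two (by omega)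
    have hPodd : ∀ P ∈ m.primeFactors, Odd P := fun P hP =>
      (Nat.prime_of_mem_primeFactors hP).odd_of_ne_two (by have := hPlt P hP; omega)
    have hen6 : 6 ≤ p₁ * p₂ := by nlinarith
    -- real setup
    set b' := b ^ p₁ with hb'def
    have hb'2 : (2:ℝ) ≤ b' := le_trans hb (le_self_pow₀ (by linarith) (by omega))
    have hxb' : b'⁻¹ = b⁻¹ ^ p₁ := by rw [hb'def, ← inv_pow]
    have hGid : G n b * G m b = G m b' := by
      have h := G_not_dvd hp₁ hp₁m (b := b) hb0
      rw [hmp, ← hb'def] at h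
      exact h
    clear_value b'
    have hb'1 : (1:ℝ) < b' := by linarith
    have hgmpos := G_pos m hb1
    have hgm'pos := G_pos m hb'1
    have hgnpos := G_pos n hb1
    have hGn' : G n b = G m b' / G m b := (eq_div_iff hgmpos.ne').mpr hGid
    have hPPn : PP n b = (1 - b⁻¹ ^ p₁) * PP m b := by
      unfold PP
      rw [hpfn, prod_insert hp₁pf]
    have hPP' : PP m b' = ∏ P ∈ m.primeFactors, (1 - (b⁻¹ ^ p₁) ^ P) := by
      unfold PP
      rw [hxb']
    -- abbreviations
    set a := b⁻¹ ^ (p₁ * p₂) with hadef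
    set A := PP m b with hAdef
    set A' := PP m b' with hA'def
    clear_value a A A'
    have ha0 : (0:ℝ) < a := by rw [hadef]; positivity
    have ha64 : a ≤ 1/64 := by rw [hadef]; exact le_trans (hxp 6 _ hen6) hx6
    have hApos : 0 < A := by rw [hAdef]; exact PP_pos m hb
    have hAle : A ≤ 1 := by rw [hAdef]; exact PP_le_one m hb
    have hA'pos : 0 < A' := by rw [hA'def]; exact PP_pos m hb'2
    have hxp₁1 : b⁻¹ ^ p₁ ≤ 1/2 := by
      have h := hxp 1 p₁ (by omega)
      rw [pow_one] at h
      linarith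
    have hxp₁0 : (0:ℝ) ≤ b⁻¹ ^ p₁ := by positivity
    -- bounds on A'
    have hA'le : A' ≤ 1 - a := by
      rw [hPP', hadef]
      have h := prod_one_sub_le m.primeFactors hp₂pf hxp₁0 (by linarith)
      rwa [← pow_mul] at h
    have hA'ge : 1 - (16/15) * a ≤ A' := by
      rw [hPP']
      have h1 := prod_one_sub_ge m.primeFactors hxp₁0 (le_trans hxp₁1 (by norm_num))
      have h2 := sum_pow_le m.primeFactors p₂ hp₂odd hxp₁0 hxp₁1
        (fun P hP => ⟨hPodd P hP, hPge P hP⟩)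
      have h3 : ((b⁻¹ ^ p₁) ^ 2) ≤ 1/16 := by
        rw [← pow_mul]
        calc b⁻¹ ^ (p₁ * 2) ≤ b⁻¹ ^ 4 := hxp 4 _ (by omega)
          _ ≤ (1/2:ℝ)^4 := pow_le_pow_left₀ hx0.le hx2 4
          _ ≤ 1/16 := by norm_num
      have h4 : (0:ℝ) < 1 - (b⁻¹ ^ p₁) ^ 2 := by nlinarith
      have h5 : (1 - (b⁻¹ ^ p₁) ^ 2)⁻¹ ≤ 16/15 := by
        rw [inv_eq_one_div, div_le_div_iff₀ h4 (by norm_num)]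
        nlinarith
      have h6 : (b⁻¹ ^ p₁) ^ p₂ = a := by rw [hadef, ← pow_mul]
      have h7 : ∑ P ∈ m.primeFactors, (b⁻¹ ^ p₁) ^ P ≤ (16/15) * a := by
        calc ∑ P ∈ m.primeFactors, (b⁻¹ ^ p₁) ^ P
            ≤ (b⁻¹ ^ p₁) ^ p₂ * (1 - (b⁻¹ ^ p₁) ^ 2)⁻¹ := h2
          _ ≤ a * (16/15) := by rw [h6]; exact mul_le_mul_of_nonneg_left h5 ha0.le
          _ = (16/15) * a := by ring
      linarith
    -- common positivity facts
    have h1x : (0:ℝ) < 1 - b⁻¹ := by linarith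
    have h1xp : (0:ℝ) < 1 - b⁻¹ ^ p₁ := by linarith
    have h2a : (0:ℝ) < 1 - 2*a := by linarith
    by_cases hmpr : m / p₂ = 1
    · -- m = p₂ prime, n = p₁ * p₂, card = 2
      have hmeq : m = p₂ := by
        rw [hmpr, one_mul] at hdivm
        exact hdivm.symm
      have hmprime : m.Prime := by rw [hmeq]; exact hp₂
      have hpfm : m.primeFactors = {m} := hmprime.primeFactors
      have hcard2 : n.primeFactors.card = 2 := by rw [hcard, hpfm, card_singleton]
      have hgp := G_prime hmprime hb1
      have hgp' := G_prime hmprime hb'1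
      have hAeq : A = 1 - b⁻¹ ^ p₂ := by
        rw [hAdef]; unfold PP; rw [hpfm, prod_singleton, hmeq]
      have hgp'2 : (1 - b⁻¹ ^ p₁) * G m b' = 1 - a := by
        rw [← hxb', hgp', hxb', ← pow_mul, hadef, hmeq]
      have hgp2 : (1 - b⁻¹) * G m b = 1 - b⁻¹ ^ p₂ := by rw [hgp, hmeq]
      constructor
      · intro hodd
        rw [hcard2] at hodd
        exact absurd hodd (by decide)
      · intro _
        rw [hEn, hPPn, ← hadef, hAeq, hGn', ← mul_div_assoc]
        have hxp2le : b⁻¹ ^ p₂ ≤ 1 := pow_le_one₀ hx0.le (by linarith)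
        have hxp2ge : (0:ℝ) ≤ b⁻¹ ^ p₂ := by positivity
        constructor
        · rw [le_div_iff₀ hgmpos]
          have e1 : (1 - b⁻¹) * (1 - 2 * a) * G m b = (1 - 2*a) * (1 - b⁻¹ ^ p₂) := by
            rw [mul_comm (1 - b⁻¹) (1 - 2*a), mul_assoc, hgp2]
          rw [e1]
          have e2 : (1 - b⁻¹ ^ p₁) * (1 - b⁻¹ ^ p₂) * G m b' =
              (1 - b⁻¹ ^ p₂) * (1 - a) := by
            rw [mul_comm (1 - b⁻¹ ^ p₁) (1 - b⁻¹ ^ p₂), mul_assoc, hgp'2]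
          rw [e2]
          nlinarith
        · rw [div_le_iff₀ hgmpos]
          have e1 : (1 - b⁻¹) * (1 + 2 * a) * G m b = (1 + 2*a) * (1 - b⁻¹ ^ p₂) := by
            rw [mul_comm (1 - b⁻¹) (1 + 2*a), mul_assoc, hgp2]
          have e2 : (1 - b⁻¹ ^ p₁) * (1 - b⁻¹ ^ p₂) * G m b' =
              (1 - b⁻¹ ^ p₂) * (1 - a) := by
            rw [mul_comm (1 - b⁻¹ ^ p₁) (1 - b⁻¹ ^ p₂), mul_assoc, hgp'2]
          rw [e1, e2]
          nlinarith
    · -- m has at least two prime factors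
      have hm20 : m / p₂ ≠ 0 := by
        intro h
        rw [h, zero_mul] at hdivm
        omega
      have hp₃' : ((m / p₂).minFac).Prime := Nat.minFac_prime hmpr
      set p₃ := (m / p₂).minFac with hp₃def
      have hp₃ : p₃.Prime := hp₃'
      have hmind : p₃ ∣ m / p₂ := by
        rw [hp₃def]
        exact Nat.minFac_dvd (m / p₂)
      have hp₃m : p₃ ∣ m := hmind.trans ⟨p₂, hdivm.symm⟩
      have hEm : E m = p₂ * p₃ := by unfold E; rw [← hp₂def, ← hp₃def]
      have hp₂d2 : p₂ ∣ m / p₂ → False := by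
        intro hdvd2
        obtain ⟨t, ht⟩ := hdvd2
        have hsqd : p₂ * p₂ ∣ m := ⟨t, by rw [← hdivm, ht]; ring⟩
        have h1 := Nat.isUnit_iff.mp (hsqm p₂ hsqd)
        omega
      have hp₃ne : p₃ ≠ p₂ := by
        intro h
        exact hp₂d2 (h ▸ hmind)
      clear_value p₃
      have hp₃pf : p₃ ∈ m.primeFactors := Nat.mem_primeFactors.mpr ⟨hp₃, hp₃m, hm0⟩
      have hp₃gt : p₂ < p₃ := by
        have := hPge p₃ hp₃pf
        omega
      have hp₃odd : Odd p₃ := hPodd p₃ hp₃pf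
      have hp₃3 : p₂ + 2 ≤ p₃ := by
        obtain ⟨k1, hk1⟩ := hp₂odd
        obtain ⟨k2, hk2⟩ := hp₃odd
        omega
      have hEmge : p₁ * p₂ + 6 ≤ E m := by rw [hEm]; nlinarith
      set c := b⁻¹ ^ E m with hcdef
      set c' := b'⁻¹ ^ E m with hc'def
      have hc0 : (0:ℝ) < c := by positivity
      have hb'0 : (0:ℝ) < b' := by linarith
      have hc'0 : (0:ℝ) < c' := by positivity
      have hc'eq : c' = b⁻¹ ^ (p₁ * E m) := by rw [hc'def, hxb', ← pow_mul]
      clear_value c c'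
      have hca : c ≤ a * (1/64) := by
        calc c = b⁻¹ ^ E m := hcdef
          _ ≤ b⁻¹ ^ (p₁ * p₂ + 6) := hxp _ _ hEmge
          _ = b⁻¹ ^ (p₁ * p₂) * b⁻¹ ^ 6 := by rw [pow_add]
          _ = a * b⁻¹ ^ 6 := by rw [← hadef]
          _ ≤ a * (1/64) := mul_le_mul_of_nonneg_left hx6 ha0.le
      have hc'c : c' ≤ c * c := by
        have h2 : E m + E m ≤ p₁ * E m := by
          have ht : 1 ≤ p₂ * p₃ := Nat.one_le_iff_ne_zero.mpr
            (Nat.mul_ne_zero (by omega) (by omega))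
          rw [hEm]
          nlinarith [hp₁2, ht]
        calc c' = b⁻¹ ^ (p₁ * E m) := hc'eq
          _ ≤ b⁻¹ ^ (E m + E m) := hxp _ _ h2
          _ = b⁻¹ ^ E m * b⁻¹ ^ E m := by rw [pow_add]
          _ = c * c := by rw [← hcdef]
      have hca' : c ≤ a := by nlinarith
      have hc'a : c' ≤ a * c := by
        nlinarith [hc'c, mul_le_mul_of_nonneg_right hca' hc0.le]
      have h2c : (0:ℝ) < 1 - 2*c := by nlinarith
      have h2c' : (0:ℝ) < 1 - 2*c' := by nlinarith [mul_nonneg ha0.le hc0.le]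
      obtain ⟨key1, key2, key3, key4⟩ := keys ha0 ha64 hc0 hca hc'0 hc'a hA'ge hA'le hA'pos
      -- induction hypotheses
      obtain ⟨IHo, IHe⟩ := IH m hmn hm2 hsqm b hb
      obtain ⟨IHo', IHe'⟩ := IH m hmn hm2 hsqm b' hb'2
      rw [← hAdef, ← hcdef] at IHo IHe
      rw [← hA'def, ← hc'def, hxb'] at IHo' IHe'
      rcases Nat.even_or_odd m.primeFactors.card with hpar | hpar
      · -- m even, n odd
        obtain ⟨EB1, EB2⟩ := IHe (Nat.not_odd_iff_even.mpr hpar)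
        obtain ⟨EB1', EB2'⟩ := IHe' (Nat.not_odd_iff_even.mpr hpar)
        constructor
        · intro _
          rw [hEn, hPPn, ← hadef, hGn', ← mul_div_assoc]
          constructor
          · rw [le_div_iff₀ hgmpos]
            rw [← mul_le_mul_iff_of_pos_right hA'pos]
            have key := key1
            have s1 : ((1 - b⁻¹ ^ p₁) * (1-2*a) * A') * (A * G m b) ≤
                ((1 - b⁻¹ ^ p₁) * (1-2*a) * A') * ((1 - b⁻¹) * (1 + 2*c)) := by
              apply mul_le_mul_of_nonneg_left EB2
              exact mul_nonneg (mul_nonneg h1xp.le h2a.le) hA'pos.le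
            have s2 : (1 - b⁻¹) * ((1 - b⁻¹ ^ p₁) * (1 - 2*c')) ≤
                (1 - b⁻¹) * (A' * G m b') :=
              mul_le_mul_of_nonneg_left EB1' h1x.le
            have s3 : ((1 - b⁻¹ ^ p₁) * (1 - b⁻¹)) * ((1 - 2*a) * A' * (1 + 2*c)) ≤
                ((1 - b⁻¹ ^ p₁) * (1 - b⁻¹)) * (1 - 2*c') :=
              mul_le_mul_of_nonneg_left key (mul_nonneg h1xp.le h1x.le)
            linarith [s1, s2, s3]
          · rw [div_le_iff₀ hgmpos]
            rw [← mul_le_mul_iff_of_pos_right hA'pos]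
            have key := key2
            have s1 : (1 - b⁻¹) * (A' * G m b') ≤
                (1 - b⁻¹) * ((1 - b⁻¹ ^ p₁) * (1 + 2*c')) :=
              mul_le_mul_of_nonneg_left EB2' h1x.le
            have s2 : ((1 - b⁻¹ ^ p₁) * (1+2*a) * A') * ((1 - b⁻¹) * (1 - 2*c)) ≤
                ((1 - b⁻¹ ^ p₁) * (1+2*a) * A') * (A * G m b) := by
              apply mul_le_mul_of_nonneg_left EB1
              exact mul_nonneg (mul_nonneg h1xp.le (by linarith)) hA'pos.le
            have s3 : ((1 - b⁻¹ ^ p₁) * (1 - b⁻¹)) * (1 + 2*c') ≤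
                ((1 - b⁻¹ ^ p₁) * (1 - b⁻¹)) * ((1 + 2*a) * A' * (1 - 2*c)) :=
              mul_le_mul_of_nonneg_left key (mul_nonneg h1xp.le h1x.le)
            linarith [s1, s2, s3]
        · intro hodd
          exact absurd (hcard ▸ hpar.add_one) hodd
      · -- m odd, n even
        obtain ⟨OB1, OB2⟩ := IHo hpar
        obtain ⟨OB1', OB2'⟩ := IHo' hpar
        constructor
        · intro hodd
          rw [hcard] at hodd
          obtain ⟨j, hj⟩ := hodd
          obtain ⟨i, hi⟩ := hpar
          omega
        · intro _
          rw [hEn, hPPn, ← hadef, hGn', ← mul_div_assoc]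
          constructor
          · rw [le_div_iff₀ hgmpos]
            have key := key3
            have s1 : (1 - 2*a) * ((1 - b⁻¹) * G m b) ≤ (1 - 2*a) * (A * (1 + 2*c)) :=
              mul_le_mul_of_nonneg_left OB2 h2a.le
            have s2 : A * (A' * (1 - 2*c')) ≤ A * ((1 - b⁻¹ ^ p₁) * G m b') :=
              mul_le_mul_of_nonneg_left OB1' hApos.le
            have s3 : A * ((1 - 2*a) * (1 + 2*c)) ≤ A * (A' * (1 - 2*c')) :=
              mul_le_mul_of_nonneg_left key hApos.le
            linarith [s1, s2, s3]
          · rw [div_le_iff₀ hgmpos]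
            have key := key4
            have s1 : A * ((1 - b⁻¹ ^ p₁) * G m b') ≤ A * (A' * (1 + 2*c')) :=
              mul_le_mul_of_nonneg_left OB2' hApos.le
            have s2 : (1 + 2*a) * (A * (1 - 2*c)) ≤ (1 + 2*a) * ((1 - b⁻¹) * G m b) :=
              mul_le_mul_of_nonneg_left OB1 (by linarith)
            have s3 : A * (A' * (1 + 2*c')) ≤ A * ((1 + 2*a) * (1 - 2*c)) :=
              mul_le_mul_of_nonneg_left key hApos.le
            linarith [s1, s2, s3]

set_option maxHeartbeats 1000000 in
lemma sq_ge (n : ℕ) (hn : 2 ≤ n) (hsq : Squarefree n) {b : ℝ} (hb : 2 ≤ b) :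
    1 - b⁻¹ ≤ G n b := by
  have hb1 : (1:ℝ) < b := by linarith
  have hb0 : (0:ℝ) < b := by linarith
  have hx0 : (0:ℝ) < b⁻¹ := by positivity
  have hx2 : b⁻¹ ≤ 1/2 := by
    rw [inv_eq_one_div, div_le_div_iff₀ hb0 (by norm_num)]; linarith
  have hxp : ∀ j k : ℕ, j ≤ k → b⁻¹ ^ k ≤ b⁻¹ ^ j :=
    fun j k h => pow_le_pow_of_le_one hx0.le (by linarith) h
  have hsq2 : b⁻¹ ^ 2 ≤ 1/4 := by
    calc b⁻¹ ^ 2 ≤ (1/2:ℝ)^2 := pow_le_pow_left₀ hx0.le hx2 2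
      _ ≤ 1/4 := by norm_num
  have hgn := G_pos n hb1
  have hn1 : n ≠ 1 := by omega
  have hn0 : n ≠ 0 := by omega
  have hp₁ : (n.minFac).Prime := Nat.minFac_prime hn1
  have hp₁2 : 2 ≤ n.minFac := hp₁.two_le
  have hp₁pf : n.minFac ∈ n.primeFactors :=
    Nat.mem_primeFactors.mpr ⟨hp₁, Nat.minFac_dvd n, hn0⟩
  have hxp₁0 : (0:ℝ) ≤ b⁻¹ ^ n.minFac := by positivity
  have hxp₁2 : b⁻¹ ^ n.minFac ≤ b⁻¹ ^ 2 := hxp 2 _ hp₁2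
  have hPP0 : 0 < PP n b := PP_pos n hb
  obtain ⟨Ho, He⟩ := main n hn hsq b hb
  have hEfac : E n = n.minFac * (n / n.minFac).minFac := rfl
  rcases Nat.even_or_odd n.primeFactors.card with hpar | hpar
  · -- even number of prime factors
    obtain ⟨L, _⟩ := He (Nat.not_odd_iff_even.mpr hpar)
    have hm1 : n / n.minFac ≠ 1 := by
      intro h
      have h2 := Nat.div_mul_cancel (Nat.minFac_dvd n)
      rw [h, one_mul] at h2
      have hnp : n = n.minFac := h2.symm
      have hpn : n.Prime := by rw [hnp]; exact hp₁
      have hc1 : n.primeFactors.card = 1 := by rw [hpn.primeFactors, card_singleton]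
      obtain ⟨t, ht⟩ := hpar
      omega
    have hp₂2 : 2 ≤ (n / n.minFac).minFac := (Nat.minFac_prime hm1).two_le
    have hEge : n.minFac + 2 ≤ E n := by rw [hEfac]; nlinarith
    have h2e : 2 * b⁻¹ ^ E n ≤ b⁻¹ ^ n.minFac := by
      have h1 : b⁻¹ ^ E n ≤ b⁻¹ ^ (n.minFac + 2) := hxp _ _ hEge
      have h2 : b⁻¹ ^ (n.minFac + 2) = b⁻¹ ^ n.minFac * b⁻¹ ^ 2 := pow_add _ _ _
      nlinarith [hxp₁0]
    have hPPle : PP n b ≤ 1 - b⁻¹ ^ n.minFac := by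
      unfold PP
      exact prod_one_sub_le _ hp₁pf hx0.le (by linarith)
    have hstep : PP n b * (1 - b⁻¹) ≤ PP n b * G n b := by
      calc PP n b * (1 - b⁻¹) ≤ (1 - 2 * b⁻¹ ^ E n) * (1 - b⁻¹) := by
            apply mul_le_mul_of_nonneg_right _ (by linarith)
            linarith
        _ = (1 - b⁻¹) * (1 - 2 * b⁻¹ ^ E n) := by ring
        _ ≤ PP n b * G n b := L
    exact le_of_mul_le_mul_left hstep hPP0
  · -- odd number of prime factors
    obtain ⟨L, _⟩ := Ho hpar
    by_cases hm1 : n / n.minFac = 1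
    · -- n prime
      have h2 := Nat.div_mul_cancel (Nat.minFac_dvd n)
      rw [hm1, one_mul] at h2
      have hnp : n = n.minFac := h2.symm
      have hpn : n.Prime := by rw [hnp]; exact hp₁
      have hpf : n.primeFactors = {n} := hpn.primeFactors
      have hPPn : PP n b = 1 - b⁻¹ ^ n := by unfold PP; rw [hpf, prod_singleton]
      have hE : E n = n := by
        rw [hEfac, hm1, Nat.minFac_one, mul_one, ← hnp]
      rw [hPPn, hE] at L
      have ht : b⁻¹ ^ n ≤ b⁻¹ ^ 2 := hxp 2 n hn
      have h0 : (0:ℝ) ≤ b⁻¹ ^ n := by positivity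
      have key : (1 - b⁻¹) * (1 - b⁻¹) ≤ (1 - b⁻¹ ^ n) * (1 - 2 * b⁻¹ ^ n) := by
        nlinarith [ht, h0, hsq2, mul_nonneg hx0.le (show (0:ℝ) ≤ 1 - 2*b⁻¹ by linarith),
          sq_nonneg (b⁻¹ ^ n)]
      have hfin : (1 - b⁻¹) * (1 - b⁻¹) ≤ (1 - b⁻¹) * G n b := le_trans key L
      exact le_of_mul_le_mul_left hfin (by linarith)
    · -- n composite with odd number of prime factors
      have hp₂2 : 2 ≤ (n / n.minFac).minFac := (Nat.minFac_prime hm1).two_le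
      have hEge : n.minFac + 2 ≤ E n := by rw [hEfac]; nlinarith
      have hE0 : (0:ℝ) ≤ b⁻¹ ^ E n := by positivity
      have h2e : b⁻¹ ^ E n ≤ b⁻¹ ^ n.minFac * b⁻¹ ^ 2 := by
        have h1 : b⁻¹ ^ E n ≤ b⁻¹ ^ (n.minFac + 2) := hxp _ _ hEge
        rw [pow_add] at h1
        exact h1
      -- split off the factor at the least prime
      have hsplit : (∏ P ∈ n.primeFactors.erase n.minFac, (1 - b⁻¹ ^ P)) *
          (1 - b⁻¹ ^ n.minFac) = PP n b := by
        unfold PP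
        exact Finset.prod_erase_mul _ _ hp₁pf
      set R := ∏ P ∈ n.primeFactors.erase n.minFac, (1 - b⁻¹ ^ P) with hRdef
      have hodd3 : ∀ s ∈ n.primeFactors.erase n.minFac, Odd s ∧ 3 ≤ s := by
        intro P hP
        have hPpf : P ∈ n.primeFactors := mem_of_mem_erase hP
        have hPne : P ≠ n.minFac := ne_of_mem_erase hP
        have hPp : P.Prime := Nat.prime_of_mem_primeFactors hPpf
        have hge : n.minFac ≤ P :=
          Nat.minFac_le_of_dvd hPp.two_le (Nat.dvd_of_mem_primeFactors hPpf)
        have h3 : 3 ≤ P := by omega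
        exact ⟨hPp.odd_of_ne_two (by omega), h3⟩
      have hR1 : 1 - (4/3) * b⁻¹ ^ 3 ≤ R := by
        rw [hRdef]
        have h1 := prod_one_sub_ge (n.primeFactors.erase n.minFac) hx0.le (by linarith)
        have h2 := sum_pow_le (n.primeFactors.erase n.minFac) 3 (by decide)
          hx0.le hx2 hodd3
        have h4 : (0:ℝ) < 1 - b⁻¹ ^ 2 := by linarith
        have h5 : (1 - b⁻¹ ^ 2)⁻¹ ≤ 4/3 := by
          rw [inv_eq_one_div, div_le_div_iff₀ h4 (by norm_num)]
          linarith
        have h6 : b⁻¹ ^ 3 * (1 - b⁻¹ ^ 2)⁻¹ ≤ b⁻¹ ^ 3 * (4/3) :=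
          mul_le_mul_of_nonneg_left h5 (by positivity)
        have h7 : ∑ P ∈ n.primeFactors.erase n.minFac, b⁻¹ ^ P ≤ (4/3) * b⁻¹ ^ 3 := by
          calc ∑ P ∈ n.primeFactors.erase n.minFac, b⁻¹ ^ P
              ≤ b⁻¹ ^ 3 * (1 - b⁻¹ ^ 2)⁻¹ := h2
            _ ≤ b⁻¹ ^ 3 * (4/3) := h6
            _ = (4/3) * b⁻¹ ^ 3 := by ring
        linarith
      have hx3 : b⁻¹ ^ 3 ≤ b⁻¹ ^ 2 * (1/2) := by
        have : b⁻¹ ^ 3 = b⁻¹ ^ 2 * b⁻¹ := by ring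
        rw [this]
        exact mul_le_mul_of_nonneg_left hx2 (by positivity)
      -- lower bounds for the three factors
      have f1 : 1 - (2/3) * b⁻¹ ^ 2 ≤ R := by nlinarith [hR1, hx3]
      have f2 : 1 - b⁻¹ ^ 2 ≤ 1 - b⁻¹ ^ n.minFac := by linarith
      have f3 : 1 - (1/2) * b⁻¹ ^ 2 ≤ 1 - 2 * b⁻¹ ^ E n := by nlinarith [h2e, hxp₁0, hxp₁2]
      have g1 : (0:ℝ) ≤ 1 - (2/3) * b⁻¹ ^ 2 := by linarith
      have g2 : (0:ℝ) ≤ 1 - b⁻¹ ^ 2 := by linarith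
      have g3 : (0:ℝ) ≤ 1 - (1/2) * b⁻¹ ^ 2 := by linarith
      have hR0 : (0:ℝ) ≤ R := by linarith [f1]
      have m1 : (1 - (2/3) * b⁻¹ ^ 2) * (1 - b⁻¹ ^ 2) ≤ R * (1 - b⁻¹ ^ n.minFac) :=
        mul_le_mul f1 f2 g2 hR0
      have m2 : (1 - (2/3) * b⁻¹ ^ 2) * (1 - b⁻¹ ^ 2) * (1 - (1/2) * b⁻¹ ^ 2) ≤
          R * (1 - b⁻¹ ^ n.minFac) * (1 - 2 * b⁻¹ ^ E n) :=
        mul_le_mul m1 f3 g3 (by nlinarith [m1, mul_nonneg g1 g2])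
      have poly : (1 - b⁻¹) * (1 - b⁻¹) ≤
          (1 - (2/3) * b⁻¹ ^ 2) * (1 - b⁻¹ ^ 2) * (1 - (1/2) * b⁻¹ ^ 2) := by
        nlinarith [hx0, hx2, hsq2, sq_nonneg b⁻¹,
          mul_nonneg hx0.le (show (0:ℝ) ≤ 1 - 2*b⁻¹ by linarith),
          mul_nonneg (mul_nonneg hx0.le hx0.le) hx0.le]
      have hfin : (1 - b⁻¹) * (1 - b⁻¹) ≤ (1 - b⁻¹) * G n b := by
        calc (1 - b⁻¹) * (1 - b⁻¹)
            ≤ R * (1 - b⁻¹ ^ n.minFac) * (1 - 2 * b⁻¹ ^ E n) := le_trans poly m2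
          _ = PP n b * (1 - 2 * b⁻¹ ^ E n) := by rw [← hsplit]
          _ ≤ (1 - b⁻¹) * G n b := L
      exact le_of_mul_le_mul_left hfin (by linarith)

lemma all_ge : ∀ n : ℕ, 2 ≤ n → ∀ b : ℝ, 2 ≤ b → 1 - b⁻¹ ≤ G n b := by
  intro n
  induction n using Nat.strong_induction_on with
  | _ n IH =>
  intro hn b hb
  have hb1 : (1:ℝ) < b := by linarith
  have hb0 : (0:ℝ) < b := by linarith
  by_cases hsq : Squarefree n
  · exact sq_ge n hn hsq hb
  · rw [Nat.squarefree_iff_prime_squarefree] at hsq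
    push_neg at hsq
    obtain ⟨p, hp, hpp⟩ := hsq
    have hpn : p ∣ n := (dvd_mul_right p p).trans hpp
    have hmp : n / p * p = n := Nat.div_mul_cancel hpn
    have hp0 : 0 < p := hp.pos
    have hm0 : n / p ≠ 0 := by
      intro h
      rw [h, zero_mul] at hmp
      omega
    have hpm : p ∣ n / p := by
      obtain ⟨t, ht⟩ := hpp
      have h1 : n / p * p = p * t * p := by rw [hmp, ht]; ring
      have h2 : n / p = p * t := Nat.eq_of_mul_eq_mul_right hp0 h1
      exact ⟨t, h2⟩
    have hm2 : 2 ≤ n / p := le_trans hp.two_le (Nat.le_of_dvd (Nat.pos_of_ne_zero hm0) hpm)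
    have hmlt : n / p < n := Nat.div_lt_self (by omega) hp.one_lt
    have hbp2 : (2:ℝ) ≤ b ^ p := le_trans hb (le_self_pow₀ (by linarith) (by omega))
    have hG : G n b = G (n / p) (b ^ p) := by
      have h := G_dvd hp hpm (b := b) hb0
      rw [hmp] at h
      exact h
    have hIH := IH (n / p) hmlt hm2 (b ^ p) hbp2
    have hinv : (b ^ p)⁻¹ ≤ b⁻¹ := by
      have h1 : b ≤ b ^ p := le_self_pow₀ (by linarith) (by omega)
      exact inv_anti₀ hb0 h1
    rw [hG]
    linarith

end CycLB

/-- Let `q ≥ 3` and `b ≥ 2` be integers.  Then `Φ_{q−1}(b) ≥ b^{φ(q−1)}/2`. -/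
theorem cyclotomic_eval_lower_bound (q b : ℕ) (hq : 3 ≤ q) (hb : 2 ≤ b) :
    ((((Polynomial.cyclotomic (q - 1) ℤ).eval (b : ℤ) : ℤ) : ℝ)) ≥
      (b : ℝ) ^ Nat.totient (q - 1) / 2 := by
  have hn : 2 ≤ q - 1 := by omega
  have hb2 : (2:ℝ) ≤ (b:ℝ) := by exact_mod_cast hb
  have hb0 : (0:ℝ) < (b:ℝ) := by linarith
  have hx2 : (b:ℝ)⁻¹ ≤ 1/2 := by
    rw [inv_eq_one_div, div_le_div_iff₀ hb0 (by norm_num)]; linarith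
  have h := CycLB.all_ge (q-1) hn (b:ℝ) hb2
  have hcast : (((Polynomial.cyclotomic (q-1) ℤ).eval (b:ℤ) : ℤ) : ℝ) =
      (Polynomial.cyclotomic (q-1) ℝ).eval (b:ℝ) := by
    rw [← Polynomial.map_cyclotomic_int (q-1) ℝ]
    have hc : ((b:ℕ):ℝ) = (((b:ℤ)):ℝ) := by push_cast; ring
    rw [hc]
    exact (Polynomial.eval_intCast_map (Int.castRingHom ℝ) _ _).symm
  rw [ge_iff_le, hcast]
  have hpw : (0:ℝ) < (b:ℝ) ^ ((q-1).totient) := by positivity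
  have hGdef : (Polynomial.cyclotomic (q-1) ℝ).eval (b:ℝ) =
      CycLB.G (q-1) (b:ℝ) * (b:ℝ) ^ ((q-1).totient) := by
    unfold CycLB.G
    field_simp
  rw [hGdef]
  calc (b:ℝ) ^ ((q-1).totient) / 2 = (1/2) * (b:ℝ) ^ ((q-1).totient) := by ring
    _ ≤ (1 - (b:ℝ)⁻¹) * (b:ℝ) ^ ((q-1).totient) :=
        mul_le_mul_of_nonneg_right (by linarith) hpw.le
    _ ≤ CycLB.G (q-1) (b:ℝ) * (b:ℝ) ^ ((q-1).totient) :=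
        mul_le_mul_of_nonneg_right h hpw.le
end

section
/- For each integer s ≥ 2, there exists a positive integer 𝒩_s such that there are no solutions in integers n, q, b to n·s^n = b·(b^{q−2} + b^{q−3} + ⋯ + b + 1) with n > 𝒩_s, 3 ≤ q ≤ q_s, and b ≥ 2, where q_s = max{7, s}. -/
lemma my_split : ∀ s : ℕ, ∀ b m k n : ℕ, 0 < b → 0 < m → 1 ≤ s →
    Nat.Coprime b m → b * m = k * s ^ n →
    ∃ C D : ℕ, C * D = s ∧ C ^ n ∣ b ∧ D ^ n ∣ m := by
  intro s
  induction s using Nat.strong_induction_on with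
  | _ s IH =>
    intro b m k n hb hm hs hcop heq
    rcases eq_or_lt_of_le hs with h1 | h2
    · exact ⟨1, 1, by omega, by simp, by simp⟩
    · set p := s.minFac with hp_def
      have hp : p.Prime := Nat.minFac_prime (by omega)
      have hps : p ∣ s := Nat.minFac_dvd s
      set e := s.factorization p with he_def
      have he1 : 1 ≤ e := hp.factorization_pos_of_dvd (by omega) hps
      have hordproj : p ^ e * (s / p ^ e) = s := Nat.ordProj_mul_ordCompl_eq_self s p
      set t := s / p ^ e with ht_def
      have hpt : ¬ p ∣ t := Nat.not_dvd_ordCompl hp (by omega)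
      have hpe2 : 2 ≤ p ^ e := by
        calc 2 ≤ p := hp.two_le
        _ = p ^ 1 := (pow_one p).symm
        _ ≤ p ^ e := Nat.pow_le_pow_right hp.pos he1
      have ht1 : 1 ≤ t := Nat.div_pos (Nat.le_of_dvd (by omega) ⟨t, hordproj.symm⟩) (by omega)
      have ht_lt : t < s := by
        rw [ht_def]
        exact Nat.div_lt_self (by omega) (by omega)
      have hdvd_bm : (p ^ e) ^ n ∣ b * m := by
        have h1 : (p ^ e) ^ n ∣ s ^ n := pow_dvd_pow_of_dvd ⟨t, hordproj.symm⟩ n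
        exact heq ▸ h1.mul_left k
      by_cases hpb : p ∣ b
      · have hpm : ¬ p ∣ m := fun h => hp.one_lt.ne'
          (Nat.eq_one_of_dvd_coprimes hcop hpb h)
        have hcoppm : Nat.Coprime ((p ^ e) ^ n) m :=
          ((Nat.Prime.coprime_iff_not_dvd hp |>.2 hpm).pow_left e).pow_left n
        have hdvd_b : (p ^ e) ^ n ∣ b := (Nat.Coprime.dvd_of_dvd_mul_right hcoppm hdvd_bm)
        obtain ⟨b₁, hb₁⟩ := hdvd_b
        have hb₁pos : 0 < b₁ := by
          rcases Nat.eq_zero_or_pos b₁ with h | h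
          · subst h; simp at hb₁; omega
          · exact h
        have heq' : b₁ * m = k * t ^ n := by
          have : (p ^ e) ^ n * (b₁ * m) = (p ^ e) ^ n * (k * t ^ n) := by
            calc (p ^ e) ^ n * (b₁ * m) = ((p ^ e) ^ n * b₁) * m := by ring
            _ = k * (p ^ e * t) ^ n := by rw [← hb₁, heq, hordproj]
            _ = (p ^ e) ^ n * (k * t ^ n) := by rw [mul_pow]; ring
          exact Nat.eq_of_mul_eq_mul_left (by positivity) this
        have hcop' : Nat.Coprime b₁ m := Nat.Coprime.coprime_dvd_left ⟨(p ^ e) ^ n, by rw [hb₁]; ring⟩ hcop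
        obtain ⟨C', D', hCD', hC', hD'⟩ := IH t ht_lt b₁ m k n hb₁pos hm ht1 hcop' heq'
        refine ⟨p ^ e * C', D', by rw [mul_assoc, hCD', hordproj], ?_, hD'⟩
        rw [mul_pow, hb₁]
        exact mul_dvd_mul_left _ hC'
      · have hcoppb : Nat.Coprime ((p ^ e) ^ n) b :=
          ((Nat.Prime.coprime_iff_not_dvd hp |>.2 hpb).pow_left e).pow_left n
        have hdvd_m : (p ^ e) ^ n ∣ m := (Nat.Coprime.dvd_of_dvd_mul_left hcoppb hdvd_bm)
        obtain ⟨m₁, hm₁⟩ := hdvd_m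
        have hm₁pos : 0 < m₁ := by
          rcases Nat.eq_zero_or_pos m₁ with h | h
          · subst h; simp at hm₁; omega
          · exact h
        have heq' : b * m₁ = k * t ^ n := by
          have : (p ^ e) ^ n * (b * m₁) = (p ^ e) ^ n * (k * t ^ n) := by
            calc (p ^ e) ^ n * (b * m₁) = b * ((p ^ e) ^ n * m₁) := by ring
            _ = k * (p ^ e * t) ^ n := by rw [← hm₁, heq, hordproj]
            _ = (p ^ e) ^ n * (k * t ^ n) := by rw [mul_pow]; ring
          exact Nat.eq_of_mul_eq_mul_left (by positivity) this
        have hcop' : Nat.Coprime b m₁ := Nat.Coprime.coprime_dvd_right ⟨(p ^ e) ^ n, by rw [hm₁]; ring⟩ hcop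
        obtain ⟨C', D', hCD', hC', hD'⟩ := IH t ht_lt b m₁ k n hb hm₁pos ht1 hcop' heq'
        refine ⟨C', p ^ e * D', by rw [mul_comm C' _, mul_assoc, mul_comm D' C', hCD', hordproj], hC', ?_⟩
        rw [mul_pow, hm₁]
        exact mul_dvd_mul_left _ hD'

lemma my_master (M Q : ℕ) (hM : 1 ≤ M) :
    ∃ N : ℕ, 0 < N ∧ ∀ n : ℕ, N < n → 2 * n ^ Q * M ^ n < (M + 1) ^ n := by
  have hM0 : (0:ℝ) < M := by exact_mod_cast hM
  have hr : (1:ℝ) < (M + 1) / M := by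
    rw [lt_div_iff₀ hM0]; push_cast; linarith
  have h := (tendsto_pow_const_div_const_pow_of_one_lt Q hr).eventually
    (gt_mem_nhds (show (0:ℝ) < 1/2 by norm_num))
  rw [Filter.eventually_atTop] at h
  obtain ⟨N, hN⟩ := h
  refine ⟨N + 1, by omega, fun n hn => ?_⟩
  have h1 := hN n (by omega)
  have h2 : 2 * (n:ℝ) ^ Q < ((M + 1) / M) ^ n := by
    rw [div_lt_iff₀ (by positivity)] at h1
    nlinarith [pow_pos (lt_trans one_pos hr) n]
  have h3 : 2 * (n:ℝ) ^ Q * M ^ n < (M + 1) ^ n := by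
    have hMn : (0:ℝ) < (M:ℝ) ^ n := by positivity
    have := mul_lt_mul_of_pos_right h2 hMn
    rwa [div_pow, div_mul_cancel₀] at this
    positivity
  exact_mod_cast h3

lemma my_ratio (M a n Q : ℕ) (ha : 1 ≤ a) (haM : a ≤ M)
    (h : 2 * n ^ Q * M ^ n < (M + 1) ^ n) : 2 * n ^ Q * a ^ n < (a + 1) ^ n := by
  have h2 : (M + 1) ^ n * a ^ n ≤ (a + 1) ^ n * M ^ n := by
    have h1 : (M + 1) * a ≤ (a + 1) * M := by nlinarith
    calc (M + 1) ^ n * a ^ n = ((M + 1) * a) ^ n := (mul_pow _ _ _).symm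
    _ ≤ ((a + 1) * M) ^ n := Nat.pow_le_pow_left h1 n
    _ = (a + 1) ^ n * M ^ n := mul_pow _ _ _
  have h3 : 2 * n ^ Q * a ^ n * M ^ n < (a + 1) ^ n * M ^ n := by
    calc 2 * n ^ Q * a ^ n * M ^ n = 2 * n ^ Q * M ^ n * a ^ n := by ring
    _ < (M + 1) ^ n * a ^ n := (Nat.mul_lt_mul_right (Nat.pow_pos ha)).2 h
    _ ≤ (a + 1) ^ n * M ^ n := h2
  exact Nat.lt_of_mul_lt_mul_right h3

lemma my_geom_ub (b : ℕ) (hb : 2 ≤ b) : ∀ k, ∑ j ∈ Finset.range (k + 1), b ^ j ≤ 2 * b ^ k := by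
  intro k
  induction k with
  | zero => simp
  | succ k ih =>
    rw [Finset.sum_range_succ]
    have h1 : 2 * b ^ k ≤ b ^ (k + 1) := by
      rw [pow_succ, mul_comm (b ^ k) b]
      exact Nat.mul_le_mul_right _ hb
    omega

lemma my_geom_lb (b k : ℕ) (hb : 1 ≤ b) (hk : 1 ≤ k) :
    b ^ k < ∑ j ∈ Finset.range (k + 1), b ^ j := by
  rw [Finset.sum_range_succ]
  have h1 : 1 ≤ ∑ j ∈ Finset.range k, b ^ j := by
    calc 1 = b ^ 0 := rfl
    _ ≤ ∑ j ∈ Finset.range k, b ^ j :=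
      Finset.single_le_sum (f := fun j => b ^ j) (fun i _ => Nat.zero_le _) (Finset.mem_range.2 hk)
  omega

lemma my_geom_split (b k : ℕ) :
    ∑ j ∈ Finset.range (k + 1), b ^ j = 1 + b * ∑ j ∈ Finset.range k, b ^ j := by
  rw [Finset.sum_range_succ', Finset.mul_sum]
  simp [pow_succ, mul_comm, add_comm]

/-- For each integer `s ≥ 2`, there is a positive integer `𝒩_s` such that
there are no solutions in integers `n, q, b` to
`n·s^n = b·(b^{q−2} + ⋯ + b + 1)` with `n > 𝒩_s`, `3 ≤ q ≤ max{7, s}`, `b ≥ 2`. -/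
theorem exists_bound_small_q (s : ℕ) (hs : 2 ≤ s) :
    ∃ N : ℕ, 0 < N ∧ ∀ n q b : ℕ, N < n → 3 ≤ q → q ≤ max 7 s → 2 ≤ b →
      n * s ^ n ≠ b * ∑ j ∈ Finset.range (q - 1), b ^ j := by
  set Q := max 7 s with hQ_def
  set M := s ^ Q with hM_def
  have hsQ : s ≤ Q := le_max_right 7 s
  have hQ7 : 7 ≤ Q := le_max_left 7 s
  have hM1 : 1 ≤ M := Nat.one_le_pow _ _ (by omega)
  obtain ⟨N, hN0, hN⟩ := my_master M Q hM1
  refine ⟨N, hN0, fun n q b hn hq3 hqQ hb heq => ?_⟩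
  have hn1 : 1 ≤ n := by omega
  set k := q - 2 with hk_def
  have hk1 : 1 ≤ k := by omega
  have hkQ : k ≤ Q := by omega
  have hq1 : q - 1 = k + 1 := by omega
  rw [hq1] at heq
  set m := ∑ j ∈ Finset.range (k + 1), b ^ j with hm_def
  have hmt : m = 1 + b * ∑ j ∈ Finset.range k, b ^ j := my_geom_split b k
  have hcop : Nat.Coprime b m := by
    rw [hmt]
    exact (Nat.coprime_add_mul_left_right b 1 _).2 (Nat.coprime_one_right b)
  have hm_lb : b ^ k < m := my_geom_lb b k (by omega) hk1
  have hm_ub : m ≤ 2 * b ^ k := my_geom_ub b (by omega) k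
  have hbk1 : 1 ≤ b ^ k := Nat.one_le_pow _ _ (by omega)
  have hm1 : 0 < m := by omega
  obtain ⟨C, D, hCD, hCb, hDm⟩ := my_split s b m n n (by omega) hm1 (by omega) hcop heq.symm
  have hC1 : 1 ≤ C := by
    rcases Nat.eq_zero_or_pos C with h | h
    · rw [h] at hCD; simp at hCD; omega
    · exact h
  have hD1 : 1 ≤ D := by
    rcases Nat.eq_zero_or_pos D with h | h
    · rw [h] at hCD; simp at hCD; omega
    · exact h
  obtain ⟨x, hx⟩ := hCb
  obtain ⟨y, hy⟩ := hDm
  have hxy : x * y = n := by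
    have hkey : (C ^ n * D ^ n) * (x * y) = (C ^ n * D ^ n) * n := by
      calc (C ^ n * D ^ n) * (x * y) = (C ^ n * x) * (D ^ n * y) := by ring
      _ = b * m := by rw [← hx, ← hy]
      _ = n * s ^ n := heq.symm
      _ = n * (C * D) ^ n := by rw [hCD]
      _ = (C ^ n * D ^ n) * n := by rw [mul_pow]; ring
    exact Nat.eq_of_mul_eq_mul_left (by positivity) hkey
  have hxn : x ≤ n := Nat.le_of_dvd (by omega) ⟨y, hxy.symm⟩
  have hbub : b ≤ C ^ n * n := by
    rw [hx]; exact Nat.mul_le_mul_left _ hxn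
  have hmub : m ≤ D ^ n * n := by
    rw [hy]
    exact Nat.mul_le_mul_left _ (Nat.le_of_dvd (by omega) ⟨x, by rw [← hxy]; ring⟩)
  have hbC : C ^ n ≤ b := Nat.le_of_dvd (by omega) ⟨x, hx⟩
  have hmD : D ^ n ≤ m := Nat.le_of_dvd hm1 ⟨y, hy⟩
  set E := C ^ k with hE_def
  have hCs : C ≤ s := Nat.le_of_dvd (by omega) ⟨D, hCD.symm⟩
  have hDs : D ≤ s := Nat.le_of_dvd (by omega) ⟨C, by rw [← hCD]; ring⟩
  have hEM : E ≤ M := by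
    calc E = C ^ k := rfl
    _ ≤ s ^ k := Nat.pow_le_pow_left hCs k
    _ ≤ s ^ Q := Nat.pow_le_pow_right (by omega) hkQ
  have hDM : D ≤ M := by
    calc D ≤ s := hDs
    _ = s ^ 1 := (pow_one s).symm
    _ ≤ s ^ Q := Nat.pow_le_pow_right (by omega) (by omega)
  have hmaster := hN n hn
  have hnkQ : n ^ k ≤ n ^ Q := Nat.pow_le_pow_right hn1 hkQ
  rcases lt_trichotomy E D with hlt | heqED | hgt
  · -- E < D
    have h1 : (E + 1) ^ n ≤ D ^ n := Nat.pow_le_pow_left (by omega) n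
    have h2 : b ^ k ≤ E ^ n * n ^ k := by
      calc b ^ k ≤ (C ^ n * n) ^ k := Nat.pow_le_pow_left hbub k
      _ = (C ^ k) ^ n * n ^ k := by rw [mul_pow, ← pow_mul, ← pow_mul, Nat.mul_comm n k]
    have h3 : (E + 1) ^ n ≤ 2 * n ^ Q * E ^ n := by
      calc (E + 1) ^ n ≤ D ^ n := h1
      _ ≤ m := hmD
      _ ≤ 2 * b ^ k := hm_ub
      _ ≤ 2 * (E ^ n * n ^ k) := by omega
      _ ≤ 2 * (E ^ n * n ^ Q) := by
          have := Nat.mul_le_mul_left (E ^ n) hnkQ; omega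
      _ = 2 * n ^ Q * E ^ n := by ring
    exact absurd (my_ratio M E n Q (Nat.one_le_pow _ _ (by omega)) hEM hmaster) (by omega)
  · -- E = D : s = C ^ (k+1), contradiction via C ^ n ∣ m and C ^ n ∣ m - 1
    have hCnm : C ^ n ∣ m := by
      refine dvd_trans ?_ ⟨y, hy⟩
      rw [← heqED, hE_def, ← pow_mul]
      exact pow_dvd_pow C (Nat.le_mul_of_pos_left n hk1)
    have hCnm1 : C ^ n ∣ m - 1 := by
      refine dvd_trans ⟨x, hx⟩ ?_
      rw [hmt]
      exact ⟨∑ j ∈ Finset.range k, b ^ j, by omega⟩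
    have hCn1 : C ^ n ∣ 1 := by
      have := Nat.dvd_sub hCnm hCnm1
      rwa [Nat.sub_sub_self (by omega)] at this
    have hCeq1 : C = 1 := by
      have h1 : C ^ n = 1 := Nat.eq_one_of_dvd_one hCn1
      have h2 : C ≤ C ^ n := Nat.le_self_pow (by omega) C
      omega
    have hE1 : E = 1 := by rw [hE_def, hCeq1, one_pow]
    have hDeq1 : D = 1 := by omega
    have hseq1 : s = 1 := by rw [← hCD, hCeq1, hDeq1, mul_one]
    omega
  · -- D < E
    have h1 : (D + 1) ^ n ≤ E ^ n := Nat.pow_le_pow_left (by omega) n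
    have h2 : E ^ n ≤ b ^ k := by
      calc E ^ n = (C ^ n) ^ k := by rw [hE_def, ← pow_mul, ← pow_mul, Nat.mul_comm n k]
      _ ≤ b ^ k := Nat.pow_le_pow_left hbC k
    have h3 : (D + 1) ^ n ≤ 2 * n ^ Q * D ^ n := by
      calc (D + 1) ^ n ≤ b ^ k := le_trans h1 h2
      _ ≤ m := le_of_lt hm_lb
      _ ≤ D ^ n * n := hmub
      _ ≤ D ^ n * n ^ Q := Nat.mul_le_mul_left _ (by
          calc n = n ^ 1 := (pow_one n).symm
          _ ≤ n ^ Q := Nat.pow_le_pow_right hn1 (by omega))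
      _ ≤ 2 * n ^ Q * D ^ n := by ring_nf; omega
    exact absurd (my_ratio M D n Q hD1 hDM hmaster) (by omega)
end

section
/- Let s ≥ 2 be an integer and let n be an integer with n ≥ 3 satisfying 2^{1/n}·n^{q_s/n} ≤ 1 + 1/s, where q_s = max{7, s}. Then there are no integers b ≥ 2 and q with 3 ≤ q ≤ q_s satisfying n·s^n = b·(b^{q−2} + b^{q−3} + ⋯ + b + 1). -/
/-!
Write `S = 1 + b + ⋯ + b^k` with `k = q - 2 ≥ 1`, so that `b^k < S < 2 b^k` and `S` is coprime
to `b`. From `n s^n = b S` the integer `s` splits as `s = d e` with `d^n ∣ b` and `e^n ∣ S`; then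
`d^n ≤ b ≤ n d^n`, and comparing `b^(k+1) < b S < 2 b^(k+1)` with `n d^n e^n` shows that the `n`-th
powers of `d^k` and `e` differ by a factor less than `2 n^k`. The hypothesis on `n` amounts to saying
that `2 n^(q_s) ≤ (1 + 1/s)^n`, so `d^k` and `e` differ by a factor less than `1 + 1/s`. As
`e ≤ s` this forces `d^k = e`, hence `d = 1` by coprimality, and then `s = e = 1`.
-/

open Finset

theorem geom_sum_range_succ_lt_two_mul_pow {b : ℕ} (hb : 2 ≤ b) (k : ℕ) :
    ∑ j ∈ range (k + 1), b ^ j < 2 * b ^ k := by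
  rw [sum_range_succ, two_mul]
  exact Nat.add_lt_add_right (Nat.geomSum_lt hb fun _ => mem_range.1) _

theorem pow_lt_geom_sum_range_succ (b : ℕ) {k : ℕ} (hk : k ≠ 0) :
    b ^ k < ∑ j ∈ range (k + 1), b ^ j := by
  rw [sum_range_succ, lt_add_iff_pos_left]
  exact lt_of_lt_of_le (pow_pos one_pos 0)
    (single_le_sum (f := (b ^ ·)) (fun _ _ => Nat.zero_le _) (mem_range.2 (Nat.pos_of_ne_zero hk)))

theorem coprime_geom_sum_range_succ (b k : ℕ) : b.Coprime (∑ j ∈ range (k + 1), b ^ j) := by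
  rw [geom_sum_succ, Nat.coprime_mul_left_add_right]
  exact Nat.coprime_one_right b

theorem Nat.Coprime.exists_mul_eq_of_pow_dvd_mul {u v s n : ℕ} (huv : u.Coprime v) (hn : n ≠ 0)
    (h : s ^ n ∣ u * v) : ∃ d e, d * e = s ∧ d.Coprime e ∧ d ^ n ∣ u ∧ e ^ n ∣ v := by
  obtain ⟨d, e, hdu, hev, rfl⟩ := exists_dvd_and_dvd_of_dvd_mul ((dvd_pow_self s hn).trans h)
  refine ⟨d, e, rfl, (huv.coprime_dvd_left hdu).coprime_dvd_right hev, ?_, ?_⟩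
  · exact ((huv.coprime_dvd_left hdu).pow_left n).dvd_of_dvd_mul_right
      ((pow_dvd_pow_of_dvd (Nat.dvd_mul_right d e) n).trans h)
  · exact ((huv.coprime_dvd_right hev).pow_right n).symm.dvd_of_dvd_mul_left
      ((pow_dvd_pow_of_dvd (Nat.dvd_mul_left e d) n).trans h)

section SplitBounds

variable {b S n d e k : ℕ}

theorem le_mul_pow_of_mul_eq (he : 0 < e) (heS : e ^ n ≤ S) (h : b * S = n * (d * e) ^ n) :
    b ≤ n * d ^ n := by
  refine Nat.le_of_mul_le_mul_right ?_ (pow_pos he n)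
  calc b * e ^ n ≤ b * S := Nat.mul_le_mul_left b heS
    _ = n * d ^ n * e ^ n := by rw [h, mul_pow, mul_assoc]

theorem pow_pow_lt_mul_pow_of_mul_eq (hd : 0 < d) (hdb : d ^ n ≤ b) (hS : b ^ k < S)
    (h : b * S = n * (d * e) ^ n) : (d ^ k) ^ n < n * e ^ n := by
  have hb : 0 < b := (pow_pos hd n).trans_le hdb
  refine Nat.lt_of_mul_lt_mul_left (a := d ^ n) ?_
  calc d ^ n * (d ^ k) ^ n = (d ^ n) ^ (k + 1) := by ring
    _ ≤ b ^ (k + 1) := Nat.pow_le_pow_left hdb _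
    _ = b * b ^ k := by ring
    _ < b * S := Nat.mul_lt_mul_of_pos_left hS hb
    _ = d ^ n * (n * e ^ n) := by rw [h]; ring

theorem pow_lt_mul_pow_pow_of_mul_eq (hb : 0 < b) (hbd : b ≤ n * d ^ n) (hS : S < 2 * b ^ k)
    (h : b * S = n * (d * e) ^ n) : e ^ n < 2 * n ^ k * (d ^ k) ^ n := by
  refine Nat.lt_of_mul_lt_mul_left (a := n * d ^ n) ?_
  calc n * d ^ n * e ^ n = b * S := by rw [h]; ring
    _ < b * (2 * b ^ k) := Nat.mul_lt_mul_of_pos_left hS hb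
    _ = 2 * b ^ (k + 1) := by ring
    _ ≤ 2 * (n * d ^ n) ^ (k + 1) := Nat.mul_le_mul_left 2 (Nat.pow_le_pow_left hbd _)
    _ = n * d ^ n * (2 * n ^ k * (d ^ k) ^ n) := by ring

end SplitBounds

theorem exists_split_of_mul_pow_eq_repunit {s n b k : ℕ} (hs : s ≠ 0) (hn : n ≠ 0) (hb : 2 ≤ b)
    (hk : k ≠ 0) (h : n * s ^ n = b * ∑ j ∈ range (k + 1), b ^ j) :
    ∃ d e, d * e = s ∧ d.Coprime e ∧ (d ^ k) ^ n < n * e ^ n ∧ e ^ n < 2 * n ^ k * (d ^ k) ^ n := by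
  set S := ∑ j ∈ range (k + 1), b ^ j
  obtain ⟨d, e, rfl, hde, hdb, heS⟩ :=
    (coprime_geom_sum_range_succ b k).exists_mul_eq_of_pow_dvd_mul hn (h ▸ dvd_mul_left _ _)
  have hd : 0 < d := Nat.pos_of_mul_pos_right (Nat.pos_of_ne_zero hs)
  have he : 0 < e := Nat.pos_of_mul_pos_left (Nat.pos_of_ne_zero hs)
  have hSlb : b ^ k < S := pow_lt_geom_sum_range_succ b hk
  have hbd : b ≤ n * d ^ n :=
    le_mul_pow_of_mul_eq he (Nat.le_of_dvd ((Nat.zero_le _).trans_lt hSlb) heS) h.symm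
  have hdb_le : d ^ n ≤ b := Nat.le_of_dvd (by omega) hdb
  exact ⟨d, e, rfl, hde, pow_pow_lt_mul_pow_of_mul_eq hd hdb_le hSlb h.symm,
    pow_lt_mul_pow_pow_of_mul_eq (by omega) hbd (geom_sum_range_succ_lt_two_mul_pow hb k) h.symm⟩

theorem two_mul_pow_mul_pow_le_succ_pow {s n Q : ℕ} (hs : s ≠ 0) (hn : n ≠ 0)
    (h : (2 : ℝ) ^ ((1 : ℝ) / n) * (n : ℝ) ^ ((Q : ℝ) / n) ≤ 1 + 1 / s) :
    2 * n ^ Q * s ^ n ≤ (s + 1) ^ n := by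
  have hpow (x : ℝ) (hx : 0 ≤ x) (y : ℝ) : (x ^ (y / n)) ^ n = x ^ y := by
    rw [← Real.rpow_mul_natCast hx, div_mul_cancel₀ _ (by exact_mod_cast hn)]
  have h2n : (2 * n ^ Q : ℝ) ≤ (1 + 1 / s) ^ n := by
    have := pow_le_pow_left₀ (by positivity) h n
    rwa [mul_pow, hpow 2 zero_le_two, hpow n n.cast_nonneg, Real.rpow_one, Real.rpow_natCast]
      at this
  have hs' : (s : ℝ) ≠ 0 := by exact_mod_cast hs
  exact_mod_cast calc (2 * n ^ Q * s ^ n : ℝ) ≤ (1 + 1 / s) ^ n * s ^ n := by gcongr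
    _ = (s + 1) ^ n := by rw [← mul_pow]; field_simp

theorem mul_lt_mul_of_pow_lt_mul_pow {a c x y C n : ℕ} (hn : n ≠ 0) (ha : 0 < a)
    (hC : C * a ^ n ≤ c ^ n) (h : x ^ n < C * y ^ n) : a * x < c * y := by
  rw [← Nat.pow_lt_pow_iff_left hn, mul_pow, mul_pow]
  calc a ^ n * x ^ n < a ^ n * (C * y ^ n) := Nat.mul_lt_mul_of_pos_left h (pow_pos ha n)
    _ = C * a ^ n * y ^ n := by ring
    _ ≤ c ^ n * y ^ n := Nat.mul_le_mul_right _ hC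

theorem eq_of_mul_lt_succ_mul {s x y : ℕ} (hxy : s * x < (s + 1) * y) (hyx : s * y < (s + 1) * x)
    (hy : y ≤ s) : x = y := by
  by_contra hne
  rcases Nat.lt_or_gt_of_ne hne with h | h <;> nlinarith

/-- Let `s ≥ 2` and let `n ≥ 3` satisfy `2^{1/n}·n^{q_s/n} ≤ 1 + 1/s` where
`q_s = max{7, s}`.  Then there are no integers `b ≥ 2` and `3 ≤ q ≤ q_s` with
`n·s^n = b·(b^{q−2} + ⋯ + b + 1)`. -/
theorem no_solutions_large_n (s n : ℕ) (hs : 2 ≤ s) (hn : 3 ≤ n)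
    (hbound : (2 : ℝ) ^ ((1 : ℝ) / n) * (n : ℝ) ^ ((max 7 s : ℝ) / n) ≤ 1 + 1 / s) :
    ¬ ∃ b q : ℕ, 2 ≤ b ∧ 3 ≤ q ∧ q ≤ max 7 s ∧
      n * s ^ n = b * ∑ j ∈ Finset.range (q - 1), b ^ j := by
  rintro ⟨b, q, hb, hq3, hqQ, heq⟩
  obtain ⟨k, rfl⟩ : ∃ k, q = k + 2 := ⟨q - 2, by omega⟩
  rw [show k + 2 - 1 = k + 1 by omega] at heq
  have hk : k ≠ 0 := by omega
  have hn0 : n ≠ 0 := by omega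
  have hC : 2 * n ^ k * s ^ n ≤ (s + 1) ^ n := by
    refine le_trans ?_ (two_mul_pow_mul_pow_le_succ_pow (Q := max 7 s) (by omega) hn0
      (by exact_mod_cast hbound))
    gcongr <;> omega
  obtain ⟨d, e, rfl, hde, hlt, hgt⟩ := exists_split_of_mul_pow_eq_repunit (by omega) hn0 hb hk heq
  have hd : 0 < d := Nat.pos_of_mul_pos_right (by omega : 0 < d * e)
  have hn_le : n * e ^ n ≤ 2 * n ^ k * e ^ n := by
    gcongr
    calc n ≤ n ^ k := Nat.le_self_pow hk n
      _ ≤ 2 * n ^ k := Nat.le_mul_of_pos_left _ two_pos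
  have hdke : d ^ k = e :=
    eq_of_mul_lt_succ_mul (mul_lt_mul_of_pow_lt_mul_pow hn0 (by omega) hC (hlt.trans_le hn_le))
      (mul_lt_mul_of_pow_lt_mul_pow hn0 (by omega) hC hgt) (Nat.le_mul_of_pos_left e hd)
  obtain rfl : d = 1 := hde.eq_one_of_dvd (hdke ▸ dvd_pow_self d hk)
  rw [one_pow] at hdke
  omega
end

section
/- Let s, b, q and n be integers with s ≥ 2, b ≥ 2, q ≥ 3 satisfying n·s^n = b·(b^{q−2} + b^{q−3} + ⋯ + b + 1), and suppose n > max{s, N_s}, where c_s = 1 + log₂(s) and N_s = ⌊max{c_s², 127}⌋. Then q < log₂(s) + 1.53. -/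
lemma aux_log_le_div20 {x : ℝ} (hx : 128 ≤ x) : Real.log x ≤ x / 20 := by
  have hx0 : (0:ℝ) < x := by linarith
  have h1 : Real.log x - Real.log 128 = Real.log (x / 128) := (Real.log_div (by positivity) (by norm_num)).symm
  have h2 : Real.log (x / 128) ≤ x / 128 - 1 := Real.log_le_sub_one_of_pos (by positivity)
  have h3 : Real.log 128 = 7 * Real.log 2 := by
    rw [show (128:ℝ) = 2 ^ 7 by norm_num, Real.log_pow]; push_cast; ring
  have h4 : Real.log 2 < 0.6931471808 := Real.log_two_lt_d9
  nlinarith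

set_option maxHeartbeats 2000000 in
/-- Let `s ≥ 2`, `b ≥ 2`, `q ≥ 3` with `n·s^n = b·(b^{q−2} + ⋯ + b + 1)` and
`n > max{s, N_s}` where `N_s = ⌊max{(1 + log₂ s)², 127}⌋`.  Then
`q < log₂ s + 1.53`. -/
theorem q_lt_of_large_n (s b q n : ℕ) (hs : 2 ≤ s) (hb : 2 ≤ b) (hq : 3 ≤ q)
    (heq : n * s ^ n = b * ∑ j ∈ Finset.range (q - 1), b ^ j)
    (hn : n > max s ⌊max ((1 + Real.logb 2 s) ^ 2) 127⌋₊) :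
    (q : ℝ) < Real.logb 2 s + 1.53 := by
  set R := ∑ j ∈ Finset.range (q - 1), b ^ j with hR
  set Q := q - 1 with hQdef
  have hQ2 : 2 ≤ Q := by omega
  -- n ≥ 128
  have h127 : 127 ≤ ⌊max ((1 + Real.logb 2 s) ^ 2) 127⌋₊ :=
    Nat.le_floor (by exact_mod_cast le_max_right _ (127:ℝ))
  have hn128 : 128 ≤ n := by omega
  have hsn : s < n := lt_of_le_of_lt (le_max_left _ _) hn
  -- geometric identities
  have hgeom : (b - 1) * R + 1 = b ^ Q := by
    have h := geom_sum_mul (x := (b:ℤ)) Q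
    have h2 : ((b:ℤ) - 1) * (R:ℤ) = (b:ℤ)^Q - 1 := by
      rw [hR]; push_cast; linarith [h]
    have hb1 : (1:ℤ) ≤ (b:ℤ)^Q := one_le_pow₀ (by exact_mod_cast (by omega : 1 ≤ b))
    have : (((b-1) * R + 1 : ℕ) : ℤ) = ((b^Q : ℕ) : ℤ) := by
      push_cast [Nat.cast_sub (by omega : 1 ≤ b)]
      linarith
    exact_mod_cast this
  obtain ⟨m, hm⟩ : ∃ m, Q = m + 1 := ⟨Q - 1, by omega⟩
  have hm1 : 1 ≤ m := by omega
  have hRsplit : R = b ^ m + ∑ j ∈ Finset.range m, b ^ j := by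
    rw [hR, hm]; exact geom_sum_succ'
  have hR_lb : b ^ m + 1 ≤ R := by
    have : 1 ≤ ∑ j ∈ Finset.range m, b ^ j := by
      calc 1 = b ^ 0 := (pow_zero b).symm
      _ ≤ ∑ j ∈ Finset.range m, b ^ j :=
        Finset.single_le_sum (f := fun j => b ^ j) (fun i _ => Nat.zero_le _)
          (Finset.mem_range.mpr (by omega))
    omega
  have hR3 : 3 ≤ R := by
    have : 2 ≤ b ^ m := le_trans hb (Nat.le_self_pow (by omega) b)
    omega
  have hRc : ∃ c, R = b * c + 1 := by
    refine ⟨∑ j ∈ Finset.range m, b ^ j, ?_⟩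
    rw [hR, hm]; exact geom_sum_succ
  have heq' : n * s ^ n = b * R := heq
  have hbQ_lt : b ^ Q < n * s ^ n := by
    have hsplit : b - 1 = (b - 2) + 1 := by omega
    have hb2 : b = (b - 2) + 2 := by omega
    calc b ^ Q = (b-1) * R + 1 := hgeom.symm
    _ < b * R := by rw [hsplit]; conv_rhs => rw [hb2]
                    ring_nf; linarith [hR3]
    _ = n * s ^ n := heq'.symm
  by_cases hco : Nat.Coprime b s
  · -- Case B: b coprime to s, derive contradiction
    exfalso
    have hsnR : s ^ n ∣ R := by
      have h1 : s ^ n ∣ b * R := by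
        rw [← heq']; exact Dvd.dvd.mul_left dvd_rfl n
      exact (Nat.Coprime.pow_left n hco.symm).dvd_of_dvd_mul_left h1
    have hbn : b ∣ n := by
      have h1 : b ∣ n * s ^ n := by rw [heq']; exact Dvd.intro R rfl
      exact (Nat.Coprime.pow_right n hco).dvd_of_dvd_mul_right h1
    have hble : b ≤ n := Nat.le_of_dvd (by omega) hbn
    set p := s.minFac with hpdef
    have pp : p.Prime := Nat.minFac_prime (by omega)
    have hps : p ∣ s := Nat.minFac_dvd s
    have hple : p ≤ s := Nat.minFac_le (by omega)
    have hpb : ¬ p ∣ b := by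
      intro h
      have h1 : p ∣ Nat.gcd b s := Nat.dvd_gcd h hps
      rw [hco] at h1
      exact pp.one_lt.ne' (Nat.dvd_one.mp h1)
    have hbQ1 : b ^ Q - 1 = (b - 1) * R := by omega
    have hpn_dvd : p ^ n ∣ b ^ Q - 1 := by
      rw [hbQ1]
      exact dvd_trans (dvd_trans (pow_dvd_pow_of_dvd hps n) hsnR) (Dvd.intro_left (b-1) rfl)
    have hbQ1_pos : 0 < b ^ Q - 1 := by
      have : 4 ≤ b ^ Q := by
        calc 4 = 2 ^ 2 := by norm_num
        _ ≤ b ^ Q := Nat.pow_le_pow_left hb Q |>.trans' (Nat.pow_le_pow_right (by norm_num) hQ2)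
      omega
    -- basic real facts
    have hl2 : (0.6931471803 : ℝ) < Real.log 2 := Real.log_two_gt_d9
    have hl2' : Real.log 2 < 0.6931471808 := Real.log_two_lt_d9
    have hlogn : Real.log n ≤ (n:ℝ) / 20 := aux_log_le_div20 (by exact_mod_cast hn128)
    have hN128 : (128:ℝ) ≤ (n:ℝ) := by exact_mod_cast hn128
    have hlogn0 : 0 ≤ Real.log n := Real.log_nonneg (by linarith)
    -- Q ≤ n^2/13
    have hQnat : 2 ^ Q < n ^ (n+1) := by
      calc 2 ^ Q ≤ b ^ Q := Nat.pow_le_pow_left hb Q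
      _ < n * s ^ n := hbQ_lt
      _ ≤ n * n ^ n := by
        have : s ^ n ≤ n ^ n := Nat.pow_le_pow_left (by omega) n
        exact Nat.mul_le_mul_left n this
      _ = n ^ (n+1) := by ring
    have hQlog : (Q:ℝ) * Real.log 2 < ((n:ℝ) + 1) * Real.log n := by
      have h0 : ((2:ℝ)) ^ Q < ((n:ℝ)) ^ (n+1) := by exact_mod_cast hQnat
      have h1 := Real.log_lt_log (by positivity) h0
      rw [Real.log_pow, Real.log_pow] at h1
      push_cast at h1 ⊢
      linarith
    have hQ0R : (0:ℝ) < (Q:ℝ) := by exact_mod_cast (by omega : 0 < Q)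
    have hQleR : (Q:ℝ) ≤ (n:ℝ)^2 / 13 := by
      have e1 : (Q:ℝ) * 0.6931471803 ≤ (Q:ℝ) * Real.log 2 :=
        mul_le_mul_of_nonneg_left hl2.le (by positivity)
      have e2 : ((n:ℝ) + 1) * Real.log n ≤ ((n:ℝ) + 1) * ((n:ℝ)/20) :=
        mul_le_mul_of_nonneg_left hlogn (by linarith)
      nlinarith [mul_le_mul_of_nonneg_left hN128 (by linarith : (0:ℝ) ≤ (n:ℝ))]
    have hlogQ : Real.log Q ≤ 2 * Real.log n - 2 := by
      have h13 : (2:ℝ) ≤ Real.log 13 := by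
        rw [Real.le_log_iff_exp_le (by norm_num)]
        have he : Real.exp 2 = Real.exp 1 * Real.exp 1 := by
          rw [← Real.exp_add]; norm_num
        nlinarith [Real.exp_one_lt_d9, Real.exp_pos 1]
      have h1 : Real.log Q ≤ Real.log ((n:ℝ)^2 / 13) := Real.log_le_log hQ0R hQleR
      rw [Real.log_div (by positivity) (by norm_num), Real.log_pow] at h1
      push_cast at h1
      linarith
    by_cases hp2 : p = 2
    · -- p = 2
      rw [hp2] at hpn_dvd hpb
      have hbodd : ¬ 2 ∣ b := hpb
      rcases Nat.even_or_odd Q with hQev | hQodd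
      · -- Q even : LTE for 2
        haveI : Fact (Nat.Prime 2) := ⟨Nat.prime_two⟩
        have hlte := padicValNat.pow_two_sub_pow (x := b) (y := 1) (by omega)
          (by omega) hbodd (by omega) hQev
        simp only [one_pow, mul_one] at hlte
        have hv_n : n ≤ padicValNat 2 (b ^ Q - 1) := by
          rw [← Nat.factorization_def _ Nat.prime_two]
          exact (Nat.Prime.pow_dvd_iff_le_factorization Nat.prime_two (by omega)).mp hpn_dvd
        have hA : 2 ^ padicValNat 2 (b + 1) ≤ b + 1 :=
          Nat.le_of_dvd (by omega) pow_padicValNat_dvd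
        have hB : 2 ^ padicValNat 2 (b - 1) ≤ b - 1 :=
          Nat.le_of_dvd (by omega) pow_padicValNat_dvd
        have hC : 2 ^ padicValNat 2 Q ≤ Q := Nat.le_of_dvd (by omega) pow_padicValNat_dvd
        have hkey : 2 ^ (n + 1) ≤ n * n * Q := by
          calc 2 ^ (n+1) ≤ 2 ^ (padicValNat 2 (b ^ Q - 1) + 1) :=
                Nat.pow_le_pow_right (by norm_num) (by omega)
          _ = 2 ^ (padicValNat 2 (b+1)) * 2 ^ (padicValNat 2 (b-1)) * 2 ^ (padicValNat 2 Q) := by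
                rw [hlte]; ring
          _ ≤ (b+1) * (b-1) * Q := by
                exact Nat.mul_le_mul (Nat.mul_le_mul hA hB) hC
          _ ≤ n * n * Q := by
                have h1 : (b+1) * (b-1) ≤ n * n := by
                  have h2 : (b+1) * (b-1) + 1 = b * b := by
                    obtain ⟨k, rfl⟩ : ∃ k, b = k + 2 := ⟨b - 2, by omega⟩
                    simp [Nat.add_sub_cancel]; ring
                  nlinarith [Nat.mul_le_mul hble hble]
                exact Nat.mul_le_mul_right Q h1
        -- real contradiction
        have hkeyR : (2:ℝ) ^ (n+1) ≤ (n:ℝ) * n * Q := by exact_mod_cast hkey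
        have h1 := Real.log_le_log (by positivity) hkeyR
        rw [Real.log_pow] at h1
        rw [Real.log_mul (by positivity) (by positivity), Real.log_mul (by positivity) (by positivity)] at h1
        push_cast at h1
        nlinarith
      · -- Q odd : R is odd, so 2^n ∣ b - 1, contradiction
        have hRodd : R % 2 = 1 := by
          have h1 : R % 2 = (∑ j ∈ Finset.range Q, b ^ j % 2) % 2 := by
            rw [hR]; exact Finset.sum_nat_mod _ _ _
          have h2 : ∀ j ∈ Finset.range Q, b ^ j % 2 = 1 := by
            intro j _
            rw [Nat.pow_mod, (by omega : b % 2 = 1), one_pow]; norm_num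
          rw [Finset.sum_congr rfl h2, Finset.sum_const, Finset.card_range, smul_eq_mul,
            mul_one] at h1
          obtain ⟨k, hk⟩ := hQodd
          omega
        have hcop2 : (2 ^ n).Coprime R := Nat.Coprime.pow_left n (by
          have : ¬ 2 ∣ R := by omega
          exact (Nat.Prime.coprime_iff_not_dvd Nat.prime_two).mpr this)
        have h2nb1 : 2 ^ n ∣ b - 1 := by
          have h1 : 2 ^ n ∣ (b - 1) * R := by rw [← hbQ1]; exact hpn_dvd
          exact hcop2.dvd_of_dvd_mul_right h1
        have h2 : 2 ^ n ≤ b - 1 := Nat.le_of_dvd (by omega) h2nb1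
        have h3 : n < 2 ^ n := Nat.lt_two_pow_self
        omega
    · -- p odd
      have hp3 : 3 ≤ p := by
        have := pp.two_le; omega
      have hpodd : Odd p := pp.odd_of_ne_two hp2
      haveI : Fact p.Prime := ⟨pp⟩
      have hcop : Nat.Coprime b p := ((Nat.Prime.coprime_iff_not_dvd pp).mpr hpb).symm
      set u : (ZMod p)ˣ := ZMod.unitOfCoprime b hcop with hu
      set t := orderOf u with ht
      have ht_pos : 0 < t := orderOf_pos u
      have htp : t ∣ p - 1 := by
        have h1 : t ∣ Fintype.card (ZMod p)ˣ := orderOf_dvd_card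
        rwa [ZMod.card_units_eq_totient, Nat.totient_prime pp] at h1
      have htle : t ≤ p - 1 := Nat.le_of_dvd (by omega) htp
      have hcast : ∀ k : ℕ, (u : ZMod p) ^ k = 1 ↔ p ∣ b ^ k - 1 := by
        intro k
        rw [ZMod.coe_unitOfCoprime]
        have hbk : 1 ≤ b ^ k := Nat.one_le_pow _ _ (by omega)
        constructor
        · intro h
          have h1 : ((b ^ k : ℕ) : ZMod p) = ((1 : ℕ) : ZMod p) := by push_cast; simpa using h
          have h2 := (ZMod.natCast_eq_natCast_iff _ _ _).mp h1
          exact (Nat.modEq_iff_dvd' hbk).mp h2.symm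
        · intro h
          have h2 : (1 : ℕ) ≡ b ^ k [MOD p] := (Nat.modEq_iff_dvd' hbk).mpr h
          have h1 := (ZMod.natCast_eq_natCast_iff _ _ _).mpr h2.symm
          push_cast at h1
          simpa using h1
      have htQ : t ∣ Q := by
        apply orderOf_dvd_of_pow_eq_one
        have h1 : p ∣ b ^ Q - 1 := dvd_trans (dvd_pow_self p (by omega : n ≠ 0)) hpn_dvd
        have h2 := (hcast Q).mpr h1
        exact Units.ext (by push_cast; simpa using h2)
      have ht_dvd : p ∣ b ^ t - 1 := by
        apply (hcast t).mp
        have h := pow_orderOf_eq_one u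
        rw [← ht] at h
        rw [← Units.val_pow_eq_pow_val, h, Units.val_one]
      set m' := Q / t with hm'def
      have hm' : Q = t * m' := (Nat.mul_div_cancel' htQ).symm
      have hm'0 : m' ≠ 0 := by
        intro h; rw [h, mul_zero] at hm'; omega
      have hbt1 : 1 < b ^ t := Nat.one_lt_pow (by omega) (by omega)
      have hlte := padicValNat.pow_sub_pow (p := p) hpodd (x := b ^ t) (y := 1)
        hbt1 (by simpa using ht_dvd) (fun h => hpb (pp.dvd_of_dvd_pow h)) hm'0
      simp only [one_pow] at hlte
      rw [← pow_mul, ← hm'] at hlte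
      have hv_n : n ≤ padicValNat p (b ^ Q - 1) := by
        rw [← Nat.factorization_def _ pp]
        exact (Nat.Prime.pow_dvd_iff_le_factorization pp (by omega)).mp hpn_dvd
      have hA : p ^ padicValNat p (b ^ t - 1) ≤ b ^ t - 1 :=
        Nat.le_of_dvd (by omega) pow_padicValNat_dvd
      have hB : p ^ padicValNat p m' ≤ Q := by
        refine Nat.le_of_dvd (by omega) (dvd_trans pow_padicValNat_dvd ?_)
        exact ⟨t, by rw [hm']; ring⟩
      have hfinal_nat : p ^ n < n ^ (p - 1) * Q := by
        have h1 : p ^ n ≤ p ^ (padicValNat p (b ^ t - 1) + padicValNat p m') := by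
          apply Nat.pow_le_pow_right (by omega)
          omega
        have h2 : b ^ t ≤ n ^ (p - 1) := by
          calc b ^ t ≤ n ^ t := Nat.pow_le_pow_left hble t
          _ ≤ n ^ (p - 1) := Nat.pow_le_pow_right (by omega) htle
        calc p ^ n ≤ p ^ (padicValNat p (b ^ t - 1)) * p ^ (padicValNat p m') := by
              rw [← pow_add]; exact h1
        _ ≤ (b ^ t - 1) * Q := Nat.mul_le_mul hA hB
        _ < b ^ t * Q := by
              have : 0 < Q := by omega
              have h3 : b ^ t - 1 < b ^ t := by omega
              exact Nat.mul_lt_mul_of_lt_of_le h3 (le_refl Q) this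
        _ ≤ n ^ (p - 1) * Q := Nat.mul_le_mul_right Q h2
      -- real contradiction via concavity of log
      have hfinR : ((p:ℝ)) ^ n < ((n:ℝ)) ^ (p - 1) * Q := by exact_mod_cast hfinal_nat
      have hlogs : (n:ℝ) * Real.log p < ((p:ℝ) - 1) * Real.log n + Real.log Q := by
        have h1 := Real.log_lt_log (by positivity) hfinR
        rw [Real.log_pow, Real.log_mul (by positivity) (by positivity), Real.log_pow] at h1
        have hcast2 : ((p - 1 : ℕ) : ℝ) = (p:ℝ) - 1 := by
          push_cast [Nat.cast_sub (by omega : 1 ≤ p)]; ring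
        rw [hcast2] at h1
        exact h1
      set N := (n:ℝ) with hNdef
      set c := N - 1 with hcdef
      have hpc : (p:ℝ) ≤ c := by
        have h1 : p ≤ n - 1 := by omega
        have h2 : ((p:ℕ):ℝ) ≤ ((n - 1:ℕ):ℝ) := Nat.cast_le.mpr h1
        push_cast [Nat.cast_sub (by omega : 1 ≤ n)] at h2
        linarith
      have h3p : (3:ℝ) ≤ (p:ℝ) := by exact_mod_cast hp3
      have hc3 : (3:ℝ) < c := by simp only [hcdef]; linarith
      have hlog3 : 1 ≤ Real.log 3 := by
        rw [Real.le_log_iff_exp_le (by norm_num)]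
        nlinarith [Real.exp_one_lt_d9]
      have hE1 : 2 * Real.log N + Real.log Q ≤ N * Real.log 3 := by
        have h1 : N / 5 ≤ N * Real.log 3 := by nlinarith
        linarith [hlogQ, hlogn]
      have hE2 : (c - 1) * Real.log N + Real.log Q ≤ N * Real.log c := by
        have hc0 : (0:ℝ) < c := by linarith
        have hld : Real.log N - Real.log c = Real.log (N / c) := (Real.log_div (by linarith) (by linarith)).symm
        have h1 : Real.log (N / c) ≤ N / c - 1 := Real.log_le_sub_one_of_pos (by positivity)
        have h2 : N / c - 1 = 1 / c := by field_simp; rw [hcdef]; ring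
        have h3 : N * (Real.log N - Real.log c) ≤ N / c := by
          rw [hld]
          calc N * Real.log (N/c) ≤ N * (1/c) := by nlinarith [h1, h2]
          _ = N / c := by ring
        have h4 : N / c ≤ 1.5 := by
          rw [div_le_iff₀ (by linarith)]
          simp only [hcdef]; linarith
        have he : (c - 1) * Real.log N = N * Real.log N - 2 * Real.log N := by
          rw [hcdef]; ring
        linarith [hlogQ]
      -- convex combination
      set lam : ℝ := (c - (p:ℝ)) / (c - 3) with hlam
      set mu : ℝ := ((p:ℝ) - 3) / (c - 3) with hmu
      have hden : (0:ℝ) < c - 3 := by linarith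
      have hlam0 : 0 ≤ lam := div_nonneg (by linarith) (by linarith)
      have hmu0 : 0 ≤ mu := div_nonneg (by linarith) (by linarith)
      have hsum : lam + mu = 1 := by
        rw [hlam, hmu]; field_simp; ring
      have hcomb : lam * 3 + mu * c = (p:ℝ) := by
        rw [hlam, hmu]; field_simp; ring
      have hconc := (strictConcaveOn_log_Ioi.concaveOn).2 (Set.mem_Ioi.mpr (by norm_num : (0:ℝ) < 3))
        (Set.mem_Ioi.mpr (by linarith : (0:ℝ) < c)) hlam0 hmu0 hsum
      simp only [smul_eq_mul] at hconc
      rw [hcomb] at hconc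
      have f1 : lam * (2 * Real.log N + Real.log Q) ≤ lam * (N * Real.log 3) :=
        mul_le_mul_of_nonneg_left hE1 hlam0
      have f2 : mu * ((c - 1) * Real.log N + Real.log Q) ≤ mu * (N * Real.log c) :=
        mul_le_mul_of_nonneg_left hE2 hmu0
      have fcomb : lam * (N * Real.log 3) + mu * (N * Real.log c) ≤ N * Real.log p := by
        have h1 : N * (lam * Real.log 3 + mu * Real.log c) ≤ N * Real.log p :=
          mul_le_mul_of_nonneg_left hconc (by linarith)
        nlinarith [h1]
      have hid : lam * (2 * Real.log N + Real.log Q) + mu * ((c - 1) * Real.log N + Real.log Q)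
          = ((p:ℝ) - 1) * Real.log N + Real.log Q := by
        linear_combination (Real.log N) * hcomb + (Real.log Q - Real.log N) * hsum
      linarith [f1, f2, fcomb, hid, hlogs]
  · -- Case A : common prime factor
    have hg2 : 2 ≤ Nat.gcd b s := by
      have h1 : Nat.gcd b s ≠ 1 := hco
      have h2 : 0 < Nat.gcd b s := Nat.gcd_pos_of_pos_left s (by omega)
      omega
    set p := (Nat.gcd b s).minFac with hpdef
    have pp : p.Prime := Nat.minFac_prime (by omega)
    have hpb : p ∣ b := (Nat.minFac_dvd _).trans (Nat.gcd_dvd_left _ _)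
    have hps : p ∣ s := (Nat.minFac_dvd _).trans (Nat.gcd_dvd_right _ _)
    have hpR : ¬ p ∣ R := by
      obtain ⟨c, hc⟩ := hRc
      intro hdvd
      have h1 : p ∣ b * c := hpb.mul_right c
      have h2 : p ∣ 1 := by
        have := Nat.dvd_sub hdvd h1
        rwa [hc, Nat.add_sub_cancel_left] at this
      exact pp.one_lt.ne' (Nat.dvd_one.mp h2)
    have hpn_b : p ^ n ∣ b := by
      have h1 : p ^ n ∣ b * R := by
        rw [← heq']
        exact Dvd.dvd.mul_left (pow_dvd_pow_of_dvd hps n) n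
      exact (Nat.Coprime.pow_left n ((Nat.Prime.coprime_iff_not_dvd pp).mpr hpR)).dvd_of_dvd_mul_right h1
    have h2nb : 2 ^ n ≤ b := le_trans (Nat.pow_le_pow_left pp.two_le n) (Nat.le_of_dvd (by omega) hpn_b)
    have hkey : 2 ^ (n * Q) < n * s ^ n := by
      calc 2 ^ (n * Q) = (2 ^ n) ^ Q := by rw [pow_mul]
      _ ≤ b ^ Q := Nat.pow_le_pow_left h2nb Q
      _ < n * s ^ n := hbQ_lt
    -- real part
    have hkeyR : ((2:ℝ) ^ (n * Q)) < (n:ℝ) * (s:ℝ) ^ n := by exact_mod_cast hkey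
    have hlog : ((n * Q : ℕ) : ℝ) * Real.log 2 < Real.log n + n * Real.log s := by
      have h1 := Real.log_lt_log (by positivity) hkeyR
      rw [Real.log_pow, Real.log_mul (by positivity) (by positivity), Real.log_pow] at h1
      exact_mod_cast h1
    have hlogn : Real.log n ≤ (n:ℝ) / 20 := aux_log_le_div20 (by exact_mod_cast hn128)
    have hl2 : (0.6931471803 : ℝ) < Real.log 2 := Real.log_two_gt_d9
    have hl2' : Real.log 2 < 0.6931471808 := Real.log_two_lt_d9
    have hQl : (Q:ℝ) * Real.log 2 < Real.log s + 1 / 20 := by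
      have hn0 : (0:ℝ) < n := by positivity
      have h2 : (n:ℝ) * ((Q:ℝ) * Real.log 2) < (n:ℝ) * (Real.log s + 1/20) := by
        push_cast at hlog ⊢
        nlinarith [hlog, hlogn]
      exact lt_of_mul_lt_mul_left h2 (le_of_lt hn0)
    have hqQ : (q:ℝ) = (Q:ℝ) + 1 := by
      rw [hQdef]; push_cast [Nat.cast_sub (by omega : 1 ≤ q)]; ring
    rw [Real.logb, show Real.log s / Real.log 2 + 1.53 = (Real.log s + 1.53 * Real.log 2) / Real.log 2 by field_simp]
    rw [lt_div_iff₀ (by linarith : (0:ℝ) < Real.log 2)]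
    rw [hqQ]
    nlinarith [hQl]
end

section
/- Let s, b, q and n be integers with s ≥ 2, b ≥ 2, n ≥ 1, and q > max{7, s}, satisfying n·s^n = b·(b^{q−2} + b^{q−3} + ⋯ + b + 1). Then Φ_{q−1}(b)/gcd(Φ_{q−1}(b), q − 1) is an integer all of whose prime factors exceed s, and it divides n; in particular n ≥ Φ_{q−1}(b)/(q − 1). -/
open Polynomial Finset

lemma one_add_sq_zero_pow {R : Type*} [CommRing R] (t : R) (ht : t * t = 0) (i : ℕ) :
    (1 + t) ^ i = 1 + (i : R) * t := by
  induction i with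
  | zero => simp
  | succ i ih =>
    rw [pow_succ, ih]
    have : (i : R) * t ^ 2 = 0 := by rw [sq, ← mul_assoc, mul_assoc, ht, mul_zero]
    push_cast
    ring_nf
    rw [this]
    ring

lemma cyclotomic_eval_dvd_geom (m d : ℕ) (hd : d ∈ m.properDivisors) (b : ℤ) (hb : 2 ≤ b) :
    (cyclotomic m ℤ).eval b ∣ ∑ i ∈ range (m / d), (b ^ d) ^ i := by
  obtain ⟨hdvd, hlt⟩ := Nat.mem_properDivisors.mp hd
  have hd0 : 0 < d := Nat.pos_of_dvd_of_pos hdvd (by omega)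
  have h1 : (X ^ d - 1 : ℤ[X]) * cyclotomic m ℤ ∣ X ^ m - 1 :=
    Polynomial.X_pow_sub_one_mul_cyclotomic_dvd_X_pow_sub_one_of_dvd ℤ hd
  have h2 := Polynomial.eval_dvd (x := b) h1
  simp only [eval_mul, eval_sub, eval_pow, eval_X, eval_one] at h2
  have hbm : b ^ m - 1 = (b ^ d - 1) * ∑ i ∈ range (m / d), (b ^ d) ^ i := by
    rw [mul_geom_sum, ← pow_mul, Nat.mul_div_cancel' hdvd]
  rw [hbm] at h2
  have hne : (b ^ d - 1 : ℤ) ≠ 0 := by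
    have h2b : (2:ℤ) ≤ b ^ d := hb.trans (le_self_pow₀ (by omega) hd0.ne')
    omega
  exact (mul_dvd_mul_iff_left hne).mp h2

lemma sq_prime_not_dvd_cyclotomic_eval (b : ℤ) (hb : 2 ≤ b) (m p : ℕ) (hp : p.Prime)
    (hpm : p ∣ m) (hm : 3 ≤ m) :
    ¬ ((p : ℤ) * p ∣ (cyclotomic m ℤ).eval b) := by
  intro hsq
  have hp2 := hp.two_le
  set Φ : ℤ := (cyclotomic m ℤ).eval b with hΦ
  have hpΦ : (p : ℤ) ∣ Φ := (dvd_mul_right _ _).trans hsq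
  have hΦbm : Φ ∣ b ^ m - 1 := by
    have := Polynomial.eval_dvd (x := b) (cyclotomic.dvd_X_pow_sub_one m ℤ)
    simpa using this
  set m' := m / p with hm'def
  have hmm' : p * m' = m := Nat.mul_div_cancel' hpm
  have hm'0 : 0 < m' := Nat.div_pos (Nat.le_of_dvd (by omega) hpm) (by omega)
  have hm'div : m' ∈ m.properDivisors := by
    rw [Nat.mem_properDivisors]
    exact ⟨Nat.div_dvd_of_dvd hpm, Nat.div_lt_self (by omega) (by omega)⟩
  have hΦG : Φ ∣ ∑ i ∈ range p, (b ^ m') ^ i := by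
    have := cyclotomic_eval_dvd_geom m m' hm'div b hb
    rwa [Nat.div_div_self hpm (by omega)] at this
  rcases eq_or_ne p 2 with rfl | hpodd
  · -- p = 2
    have hG2 : Φ ∣ 1 + b ^ m' := by
      have h2 : ∑ i ∈ range 2, (b ^ m') ^ i = 1 + b ^ m' := by
        simp [Finset.sum_range_succ]
      rwa [h2] at hΦG
    have h4 : (4 : ℤ) ∣ 1 + b ^ m' := by
      have h4' : ((2:ℤ) * 2) ∣ 1 + b ^ m' := hsq.trans hG2
      simpa using h4'
    have hxodd : ¬ Even (b ^ m') := by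
      intro h
      have h2 : (2:ℤ) ∣ 1 + b ^ m' := dvd_trans (by norm_num) h4
      obtain ⟨u, hu⟩ := h
      omega
    have hbodd : Odd b := by
      rw [Int.even_pow] at hxodd
      push_neg at hxodd
      exact Int.not_even_iff_odd.mp (fun h => absurd (hxodd h) (by omega))
    rcases Nat.even_or_odd m' with hm'e | hm'o
    · obtain ⟨j, hj⟩ := hm'e
      obtain ⟨k, hk⟩ := hbodd.pow (n := j)
      have hx : b ^ m' = (2 * k + 1) ^ 2 := by
        rw [show m' = j * 2 by omega, pow_mul, hk]
      rw [hx] at h4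
      obtain ⟨c, hc⟩ := h4
      have hc' : 1 + (4 * (k * k) + 4 * k + 1) = 4 * c := by linear_combination hc
      set K := k * k
      omega
    · have hm'1 : m' ≠ 1 := by intro h; omega
      set r := m'.minFac with hrdef
      have hrp : r.Prime := Nat.minFac_prime hm'1
      have hrm' : r ∣ m' := Nat.minFac_dvd m'
      have hrodd : Odd r := by
        rcases Nat.even_or_odd r with h | h
        · exfalso
          obtain ⟨u, hu⟩ := hrm'
          have : r = 2 := ((Nat.Prime.even_iff hrp).mp h)
          rw [this] at hu
          rw [hu] at hm'o
          rw [Nat.odd_iff] at hm'o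
          omega
        · exact h
      have hrm : r ∣ m := hrm'.trans ⟨2, by omega⟩
      have hdr : m / r ∈ m.properDivisors := by
        rw [Nat.mem_properDivisors]
        exact ⟨Nat.div_dvd_of_dvd hrm, Nat.div_lt_self (by omega) hrp.one_lt⟩
      have hΦGr : Φ ∣ ∑ i ∈ range (m / (m / r)), (b ^ (m / r)) ^ i :=
        cyclotomic_eval_dvd_geom m (m / r) hdr b hb
      rw [Nat.div_div_self hrm (by omega)] at hΦGr
      have h2Gr : (2:ℤ) ∣ ∑ i ∈ range r, (b ^ (m / r)) ^ i := by
        have : ((2:ℕ):ℤ) ∣ Φ := by exact_mod_cast hpΦ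
        exact_mod_cast (by exact_mod_cast this : (2:ℤ) ∣ Φ).trans hΦGr
      -- but this sum is odd
      obtain ⟨k, hk⟩ := hbodd
      have hb1 : ((b : ℤ) : ZMod 2) = 1 := by
        rw [hk]
        push_cast
        rw [show ((2 : ZMod 2)) = 0 by decide]
        ring
      have hcast : ((∑ i ∈ range r, (b ^ (m / r)) ^ i : ℤ) : ZMod 2) = ((r : ℕ) : ZMod 2) := by
        push_cast
        rw [hb1]
        simp
      have h0 : ((∑ i ∈ range r, (b ^ (m / r)) ^ i : ℤ) : ZMod 2) = 0 := by
        rw [ZMod.intCast_zmod_eq_zero_iff_dvd]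
        exact_mod_cast h2Gr
      rw [h0] at hcast
      obtain ⟨u, hu⟩ := hrodd
      rw [hu] at hcast
      push_cast at hcast
      rw [show ((2 : ZMod 2)) = 0 by decide] at hcast
      simp at hcast
  · -- p odd
    have hpodd2 : 2 < p := by omega
    haveI : Fact p.Prime := ⟨hp⟩
    have hbm1 : ((b : ZMod p)) ^ m = 1 := by
      have h1 : ((b ^ m - 1 : ℤ) : ZMod p) = 0 := by
        rw [ZMod.intCast_zmod_eq_zero_iff_dvd]
        exact hpΦ.trans hΦbm
      push_cast at h1
      linear_combination h1
    have hβ0 : (b : ZMod p) ≠ 0 := by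
      intro h
      rw [h, zero_pow (by omega : m ≠ 0)] at hbm1
      exact one_ne_zero hbm1.symm
    set d := orderOf (b : ZMod p) with hddef
    have hdm : d ∣ m := orderOf_dvd_of_pow_eq_one hbm1
    have hdp : d ∣ p - 1 := ZMod.orderOf_dvd_card_sub_one hβ0
    have hpd : ¬ p ∣ d := by
      intro h
      have := Nat.le_of_dvd (by omega) (h.trans hdp)
      omega
    have hdm' : d ∣ m' := by
      have hco : Nat.Coprime d p := (Nat.coprime_comm.mp ((Nat.Prime.coprime_iff_not_dvd hp).mpr hpd))
      refine hco.dvd_of_dvd_mul_left ?_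
      rw [← hmm'] at hdm
      exact hdm
    have hbm'1 : ((b : ZMod p)) ^ m' = 1 := orderOf_dvd_iff_pow_eq_one.mp hdm'
    have hpx : (p : ℤ) ∣ b ^ m' - 1 := by
      rw [← ZMod.intCast_zmod_eq_zero_iff_dvd]
      push_cast
      linear_combination hbm'1
    obtain ⟨c, hc⟩ := hpx
    -- now work in ZMod (p^2)
    have hp2G : ((p:ℤ) * p) ∣ ∑ i ∈ range p, (b ^ m') ^ i := hsq.trans hΦG
    set R := ZMod (p ^ 2) with hRdef
    have hpp0 : ((p : ℕ) : R) * ((p : ℕ) : R) = 0 := by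
      rw [← Nat.cast_mul, ← pow_two]
      exact ZMod.natCast_self (p ^ 2)
    set t : R := ((p : ℕ) : R) * ((c : ℤ) : R) with htdef
    have ht : t * t = 0 := by
      rw [htdef]
      calc ((p:ℕ):R) * ((c:ℤ):R) * (((p:ℕ):R) * ((c:ℤ):R))
          = ((p:ℕ):R) * ((p:ℕ):R) * (((c:ℤ):R) * ((c:ℤ):R)) := by ring
        _ = 0 := by rw [hpp0, zero_mul]
    have hxcast : ((b ^ m' : ℤ) : R) = 1 + t := by
      have : (b ^ m' : ℤ) = 1 + (p : ℤ) * c := by omega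
      rw [this]
      push_cast
      rw [htdef]
      erw [Int.cast_mul, Int.cast_natCast]
    obtain ⟨h, hh⟩ : ∃ h, p = 2 * h + 1 := by
      rcases Nat.even_or_odd p with he | ho
      · exact absurd ((Nat.Prime.even_iff hp).mp he) hpodd
      · obtain ⟨u, hu⟩ := ho; exact ⟨u, by omega⟩
    have hsum : ∑ i ∈ range p, i = p * h := by
      have key : (∑ i ∈ range p, i) * 2 = (p * h) * 2 := by
        rw [Finset.sum_range_id_mul_two, hh, Nat.add_sub_cancel]
        ring
      exact Nat.eq_of_mul_eq_mul_right (by norm_num) key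
    have hGcast : ((∑ i ∈ range p, (b ^ m') ^ i : ℤ) : R) = ((p : ℕ) : R) := by
      rw [Int.cast_sum]; simp only [Int.cast_pow]
      calc ∑ i ∈ range p, (((b:ℤ) : R) ^ m') ^ i 
          = ∑ i ∈ range p, (1 + t) ^ i := by
            refine Finset.sum_congr rfl fun i _ => ?_
            congr 1
            have := hxcast
            push_cast at this
            exact this
        _ = ∑ i ∈ range p, (1 + (i : R) * t) := by
            exact Finset.sum_congr rfl fun i _ => one_add_sq_zero_pow t ht i
        _ = (p : R) + (((∑ i ∈ range p, i : ℕ) : R)) * t := by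
            rw [Finset.sum_add_distrib]
            push_cast
            simp [Finset.sum_mul]
            rw [← Finset.sum_mul]
            exact congrArg (· * t) (Nat.cast_sum (R := R) (range p) (fun i => i)).symm
        _ = (p : R) := by
            rw [hsum]
            push_cast
            rw [show ((p:R) * (h:R) * t = (h:R) * (((p:ℕ):R) * ((p:ℕ):R)) * ((c:ℤ):R)) by rw [htdef]; push_cast; ring]
            rw [hpp0]
            ring
    have h0 : ((∑ i ∈ range p, (b ^ m') ^ i : ℤ) : R) = 0 := by
      rw [ZMod.intCast_zmod_eq_zero_iff_dvd]
      push_cast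
      rw [sq]
      exact hp2G
    rw [h0] at hGcast
    haveI : NeZero (p ^ 2) := ⟨by positivity⟩
    have : (p : ℕ) ^ 2 ∣ p :=
      (ZMod.natCast_eq_zero_iff p (p ^ 2)).mp hGcast.symm
    have := Nat.le_of_dvd (by omega) this
    nlinarith


/-- Let `s ≥ 2`, `b ≥ 2`, `n ≥ 1` and `q > max{7, s}` satisfy
`n·s^n = b·(b^{q−2} + ⋯ + b + 1)`.  Then `Φ_{q−1}(b)/gcd(Φ_{q−1}(b), q−1)` has
all prime factors `> s`, it divides `n`, and in particular
`n ≥ Φ_{q−1}(b)/(q − 1)`. -/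
theorem cyclotomic_quotient_divides_n (s b q n : ℕ) (hs : 2 ≤ s) (hb : 2 ≤ b)
    (hn : 1 ≤ n) (hq : max 7 s < q)
    (heq : n * s ^ n = b * ∑ j ∈ Finset.range (q - 1), b ^ j) :
    (∀ p : ℕ, p.Prime →
        (p : ℤ) ∣ (Polynomial.cyclotomic (q - 1) ℤ).eval (b : ℤ) /
          (Int.gcd ((Polynomial.cyclotomic (q - 1) ℤ).eval (b : ℤ)) ((q : ℤ) - 1) : ℤ) →
        s < p) ∧
    ((Polynomial.cyclotomic (q - 1) ℤ).eval (b : ℤ) /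
        (Int.gcd ((Polynomial.cyclotomic (q - 1) ℤ).eval (b : ℤ)) ((q : ℤ) - 1) : ℤ)) ∣ (n : ℤ) ∧
    (n : ℝ) ≥ (((Polynomial.cyclotomic (q - 1) ℤ).eval (b : ℤ) : ℤ) : ℝ) / ((q : ℝ) - 1) := by
  have hq7 : 7 < q := lt_of_le_of_lt (le_max_left 7 s) hq
  have hsq' : s < q := lt_of_le_of_lt (le_max_right 7 s) hq
  have hcast : ((q : ℤ) - 1) = ((q - 1 : ℕ) : ℤ) := by omega
  rw [hcast]
  set m := q - 1 with hmdef
  have hm7 : 7 ≤ m := by omega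
  have hsm : s ≤ m := by omega
  set Φ : ℤ := (Polynomial.cyclotomic m ℤ).eval (b : ℤ) with hΦdef
  set g : ℕ := Int.gcd Φ ((m : ℕ) : ℤ) with hgdef
  set D : ℤ := Φ / (g : ℤ) with hDdef
  have hΦpos : 0 < Φ := cyclotomic_pos (by omega : 2 < m) _
  have hgdvd : (g : ℤ) ∣ Φ := Int.gcd_dvd_left _ _
  have hgm : (g : ℤ) ∣ ((m : ℕ) : ℤ) := Int.gcd_dvd_right _ _
  have hg0 : 0 < g := by
    rcases Nat.eq_zero_or_pos g with h | h
    · exfalso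
      rw [hgdef, Int.gcd_eq_zero_iff] at h
      omega
    · exact h
  have hDg : D * (g : ℤ) = Φ := Int.ediv_mul_cancel hgdvd
  have hDΦ : D ∣ Φ := ⟨(g : ℤ), hDg.symm⟩
  have hD0 : 0 < D := by nlinarith [hDg, hΦpos, hg0]
  -- Claim A
  have hA : ∀ p : ℕ, p.Prime → (p : ℤ) ∣ D → s < p := by
    intro p hp hpD
    have hpΦ : (p : ℤ) ∣ Φ := hpD.trans hDΦ
    by_cases hpm : p ∣ m
    · exfalso
      have hpg : (p : ℤ) ∣ (g : ℤ) := by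
        rw [hgdef]
        exact Int.dvd_coe_gcd hpΦ (Int.natCast_dvd_natCast.mpr hpm)
      have hsq2 : (p : ℤ) * (p : ℤ) ∣ Φ := by
        rw [← hDg]
        exact mul_dvd_mul hpD hpg
      exact sq_prime_not_dvd_cyclotomic_eval (b : ℤ) (by exact_mod_cast hb) m p hp hpm
        (by omega) hsq2
    · haveI : Fact p.Prime := ⟨hp⟩
      haveI : NeZero ((m : ℕ) : ZMod p) := NeZero.of_not_dvd (ZMod p) hpm
      have hroot : Polynomial.IsRoot (Polynomial.cyclotomic m (ZMod p)) (((b : ℤ) : ZMod p)) := by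
        rw [Polynomial.IsRoot.def, ← Polynomial.map_cyclotomic_int m (ZMod p),
          Polynomial.eval_map,
          show ((b : ℤ) : ZMod p) = (Int.castRingHom (ZMod p)) (b : ℤ) from rfl,
          Polynomial.eval₂_hom]
        exact (ZMod.intCast_zmod_eq_zero_iff_dvd _ _).mpr hpΦ
      have hprim : IsPrimitiveRoot (((b : ℤ) : ZMod p)) m :=
        Polynomial.isRoot_cyclotomic_iff.mp hroot
      have hβ0 : (((b : ℤ) : ZMod p)) ≠ 0 := by
        intro h
        have := hprim.pow_eq_one
        rw [h, zero_pow (by omega : m ≠ 0)] at this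
        exact one_ne_zero this.symm
      have hdvd : orderOf (((b : ℤ) : ZMod p)) ∣ p - 1 := ZMod.orderOf_dvd_card_sub_one hβ0
      rw [← hprim.eq_orderOf] at hdvd
      have := Nat.le_of_dvd (by have := hp.two_le; omega) hdvd
      omega
  -- Φ divides the geometric sum
  have hΦS : Φ ∣ ∑ j ∈ range m, (b : ℤ) ^ j := by
    have h := prod_cyclotomic_eq_geom_sum (by omega : 0 < m) ℤ
    have hmem : m ∈ m.divisors.erase 1 := by
      rw [Finset.mem_erase, Nat.mem_divisors]
      exact ⟨by omega, dvd_rfl, by omega⟩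
    have h2 := Finset.dvd_prod_of_mem (fun i => Polynomial.cyclotomic i ℤ) hmem
    rw [h] at h2
    have h3 := Polynomial.eval_dvd (x := (b : ℤ)) h2
    simpa using h3
  -- D divides n
  have hDn : D ∣ (n : ℤ) := by
    have hcast_eq : (n : ℤ) * (s : ℤ) ^ n = (b : ℤ) * ∑ j ∈ range m, (b : ℤ) ^ j := by
      exact_mod_cast heq
    have hDS : D ∣ (n : ℤ) * (s : ℤ) ^ n := by
      rw [hcast_eq]
      exact (hDΦ.trans hΦS).trans (Dvd.dvd.mul_left dvd_rfl _)
    have hcop : IsCoprime D ((s : ℤ) ^ n) := by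
      apply IsCoprime.pow_right
      rw [Int.isCoprime_iff_gcd_eq_one]
      by_contra hne
      have hgcd0 : Int.gcd D (s : ℤ) ≠ 0 := by
        intro h
        rw [Int.gcd_eq_zero_iff] at h
        omega
      set p := (Int.gcd D (s : ℤ)).minFac with hpdef
      have hpp : p.Prime := Nat.minFac_prime hne
      have hpgcd : p ∣ Int.gcd D (s : ℤ) := Nat.minFac_dvd _
      have hpD : (p : ℤ) ∣ D := by
        have h1 : p ∣ D.natAbs := hpgcd.trans (by rw [Int.gcd]; exact Nat.gcd_dvd_left _ _)
        have h2 : ((p : ℕ) : ℤ) ∣ (D.natAbs : ℤ) := Int.natCast_dvd_natCast.mpr h1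
        rwa [Int.natAbs_of_nonneg hD0.le] at h2
      have hps : p ∣ s := by
        have h1 : p ∣ (s : ℤ).natAbs := hpgcd.trans (by rw [Int.gcd]; exact Nat.gcd_dvd_right _ _)
        rwa [Int.natAbs_natCast] at h1
      have := hA p hpp hpD
      have := Nat.le_of_dvd (by omega) hps
      omega
    exact hcop.dvd_of_dvd_mul_right hDS
  refine ⟨hA, hDn, ?_⟩
  -- the inequality
  have hDn' : D ≤ (n : ℤ) := Int.le_of_dvd (by exact_mod_cast hn) hDn
  have hgm' : (g : ℤ) ≤ ((m : ℕ) : ℤ) := Int.le_of_dvd (by exact_mod_cast (by omega : 0 < m)) hgm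
  have hq1 : ((q : ℝ) - 1) = ((m : ℕ) : ℝ) := by
    rw [hmdef]
    push_cast [Nat.cast_sub (by omega : 1 ≤ q)]
    ring
  rw [ge_iff_le, hq1]
  have hstep1 : ((Φ : ℤ) : ℝ) / ((m : ℕ) : ℝ) ≤ ((Φ : ℤ) : ℝ) / ((g : ℕ) : ℝ) := by
    apply div_le_div_of_nonneg_left (by positivity) (by exact_mod_cast hg0)
    exact_mod_cast hgm'
  have hstep2 : ((Φ : ℤ) : ℝ) / ((g : ℕ) : ℝ) = ((D : ℤ) : ℝ) := by
    rw [eq_comm, eq_div_iff (by positivity : ((g : ℕ) : ℝ) ≠ 0)]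
    exact_mod_cast congrArg (fun z : ℤ => (z : ℝ)) hDg
  have hstep3 : ((D : ℤ) : ℝ) ≤ (n : ℝ) := by exact_mod_cast hDn'
  linarith
end
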